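/- arXiv:math/0512481 — 6 statements merged into one kernel-verified Lean document; each statement's English description precedes it below -/
import Mathlib

section
/- Let ι be a finite type (or take ι = Fin k for k ≥ 1), let n ≥ 0, and let f : FreeGroup ι → ℂ be finitely supported with support contained in the set of elements whose reduced word has length exactly n. Then for every square-summable g : FreeGroup ι → ℂ, the convolution f ⋆ g defined by (f ⋆ g)(x) = ∑_{y ∈ supp f} f(y) · g(y⁻¹ x) is square-summable and satisfies ‖f ⋆ g‖₂ ≤ (n + 1) · ‖f‖₂ · ‖g‖₂. -/
open List

namespace HaagerupAux

variable {ι : Type*}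

/-- No adjacent cancelling pair. -/
def Red' (a b : ι × Bool) : Prop := ¬(b.1 = a.1 ∧ b.2 = !a.2)

/-- A word is reduced. -/
def Reduced (L : List (ι × Bool)) : Prop := List.Chain' Red' L

theorem reduced_of_not_decomp {L : List (ι × Bool)}
    (h : ∀ (L₁ L₂ : List (ι × Bool)) (x : ι) (b : Bool),
      L ≠ L₁ ++ (x, b) :: (x, !b) :: L₂) : Reduced L := by
  induction L with
  | nil => exact List.isChain_nil
  | cons a t ih =>
    cases t with
    | nil => exact List.isChain_singleton a
    | cons b t' =>
      rw [Reduced, List.Chain', List.isChain_cons_cons]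
      constructor
      · rintro ⟨h1, h2⟩
        exact h [] t' a.1 a.2 (by
          obtain ⟨xa, ba⟩ := a; obtain ⟨xb, bb⟩ := b
          simp at h1 h2; simp [h1, h2])
      · apply ih
        intro L₁ L₂ x bb hL
        exact h (a :: L₁) L₂ x bb (by simp [hL])

theorem reduced_reduce [DecidableEq ι] (L : List (ι × Bool)) : Reduced (FreeGroup.reduce L) := by
  apply reduced_of_not_decomp
  intro L₁ L₂ x b hL
  exact FreeGroup.reduce.not hL

theorem reduced_toWord [DecidableEq ι] (x : FreeGroup ι) : Reduced x.toWord := by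
  rw [← FreeGroup.reduce_toWord]; exact reduced_reduce _

theorem Reduced.no_step {L L' : List (ι × Bool)} (h : Reduced L)
    (hs : FreeGroup.Red.Step L L') : False := by
  cases hs with
  | @not L₁ L₂ x b =>
    have : Reduced ([(x, b), (x, !b)] : List (ι × Bool)) :=
      h.infix ⟨L₁, L₂, by simp⟩
    have := (List.isChain_cons_cons.1 this).1
    exact this ⟨rfl, rfl⟩

theorem Reduced.reduce_eq [DecidableEq ι] {L : List (ι × Bool)} (h : Reduced L) :
    FreeGroup.reduce L = L := by
  have hred : FreeGroup.Red L (FreeGroup.reduce L) := FreeGroup.reduce.red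
  rcases Relation.ReflTransGen.cases_head hred with h1 | ⟨c, hc, -⟩
  · exact h1.symm
  · exact absurd hc (fun hs => h.no_step hs)

theorem Reduced.take {L : List (ι × Bool)} (h : Reduced L) (k : ℕ) : Reduced (L.take k) :=
  h.prefix (L.take_prefix k)

theorem Reduced.drop {L : List (ι × Bool)} (h : Reduced L) (k : ℕ) : Reduced (L.drop k) :=
  h.suffix (L.drop_suffix k)

theorem invRev_append (L₁ L₂ : List (ι × Bool)) :
    FreeGroup.invRev (L₁ ++ L₂) = FreeGroup.invRev L₂ ++ FreeGroup.invRev L₁ := by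
  simp [FreeGroup.invRev]

theorem invRev_cons (a : ι × Bool) (L : List (ι × Bool)) :
    FreeGroup.invRev (a :: L) = FreeGroup.invRev L ++ [(a.1, !a.2)] := by
  simp [FreeGroup.invRev]

theorem Reduced.invRev {L : List (ι × Bool)} (h : Reduced L) :
    Reduced (FreeGroup.invRev L) := by
  rw [Reduced, List.Chain', FreeGroup.invRev, List.isChain_reverse, List.isChain_map]
  refine h.imp (fun a b hab => ?_)
  rintro ⟨h1, h2⟩
  apply hab
  refine ⟨h1.symm, ?_⟩
  simp only [Bool.not_not] at h2 ⊢
  exact h2.symm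

/-- Key cancellation lemma. -/
theorem reduce_append [DecidableEq ι] :
    ∀ (U : List (ι × Bool)), ∀ V, Reduced U → Reduced V →
    ∃ (U₁ W V₂ : List (ι × Bool)), U = U₁ ++ FreeGroup.invRev W ∧ V = W ++ V₂ ∧
      Reduced (U₁ ++ V₂) ∧ FreeGroup.reduce (U ++ V) = U₁ ++ V₂ := by
  intro U
  induction U using List.reverseRecOn with
  | nil =>
    intro V _ hV
    exact ⟨[], [], V, by simp [FreeGroup.invRev], by simp, hV, by simpa using hV.reduce_eq⟩
  | append_singleton U' a ih =>
    intro V hU hV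
    have hU' : Reduced U' := hU.prefix ⟨[a], by simp⟩
    cases V with
    | nil =>
      exact ⟨U' ++ [a], [], [], by simp [FreeGroup.invRev], by simp, by simpa using hU,
        by simpa using hU.reduce_eq⟩
    | cons b V' =>
      have hV' : Reduced V' := hV.suffix ⟨[b], rfl⟩
      by_cases hb : b.1 = a.1 ∧ b.2 = !a.2
      · -- cancellation
        have hstep : FreeGroup.Red.Step ((U' ++ [a]) ++ b :: V') (U' ++ V') := by
          have : (U' ++ [a]) ++ b :: V' = U' ++ (a.1, a.2) :: (a.1, !a.2) :: V' := by
            obtain ⟨xa, ba⟩ := a; obtain ⟨xb, bb⟩ := b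
            simp at hb
            simp [hb.1, hb.2]
          rw [this]
          exact FreeGroup.Red.Step.not
        obtain ⟨U₁, W, V₂, h1, h2, h3, h4⟩ := ih V' hU' hV'
        refine ⟨U₁, b :: W, V₂, ?_, by simp [h2], h3, ?_⟩
        · rw [invRev_cons, ← List.append_assoc, ← h1]
          have : (b.1, !b.2) = a := by
            obtain ⟨xa, ba⟩ := a; obtain ⟨xb, bb⟩ := b
            simp at hb; simp [hb.1, hb.2]
          rw [this]
        · rw [FreeGroup.reduce.Step.eq hstep, h4]
      · -- no cancellation: U ++ V is reduced
        have hred : Reduced ((U' ++ [a]) ++ b :: V') := by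
          rw [Reduced, List.Chain', List.isChain_append]
          refine ⟨hU, hV, ?_⟩
          intro x hx y hy
          simp at hx hy
          subst hy
          subst hx
          exact fun hc => hb hc
        exact ⟨U' ++ [a], [], b :: V', by simp [FreeGroup.invRev], by simp, hred,
          hred.reduce_eq⟩



variable [DecidableEq ι]

/-- The cancellation amount in the product `y⁻¹ * x`. -/
noncomputable def cancel (y x : FreeGroup ι) : ℕ :=
  (y.toWord.length + x.toWord.length - (y⁻¹ * x).toWord.length) / 2

theorem split (y x : FreeGroup ι) :
    ∃ k, k ≤ y.toWord.length ∧ k ≤ x.toWord.length ∧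
      y.toWord.take k = x.toWord.take k ∧
      (y⁻¹ * x).toWord = FreeGroup.invRev (y.toWord.drop k) ++ x.toWord.drop k := by
  obtain ⟨U₁, W, V₂, h1, h2, _h3, h4⟩ :=
    reduce_append (FreeGroup.invRev y.toWord) x.toWord
      (reduced_toWord y).invRev (reduced_toWord x)
  refine ⟨W.length, ?_, ?_, ?_, ?_⟩
  · have := congrArg List.length h1
    simp [FreeGroup.invRev_length] at this
    have hy : y.toWord.length = (FreeGroup.invRev y.toWord).length :=
      (FreeGroup.invRev_length).symm
    omega
  · have := congrArg List.length h2; simp at this; omega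
  · -- y.toWord = W ++ invRev U₁
    have hy : y.toWord = W ++ FreeGroup.invRev U₁ := by
      have := congrArg FreeGroup.invRev h1
      rwa [FreeGroup.invRev_invRev, invRev_append, FreeGroup.invRev_invRev] at this
    rw [hy, h2]
    simp
  · have hmul : (y⁻¹ * x).toWord
        = FreeGroup.reduce (FreeGroup.invRev y.toWord ++ x.toWord) := by
      conv_lhs => rw [← FreeGroup.mk_toWord (x := y), ← FreeGroup.mk_toWord (x := x)]
      rw [FreeGroup.inv_mk, FreeGroup.mul_mk, FreeGroup.toWord_mk]
    have hy : y.toWord = W ++ FreeGroup.invRev U₁ := by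
      have := congrArg FreeGroup.invRev h1
      rwa [FreeGroup.invRev_invRev, invRev_append, FreeGroup.invRev_invRev] at this
    rw [hmul, h4, hy, h2]
    congr 1
    · rw [List.drop_left' (by simp), FreeGroup.invRev_invRev]
    · rw [List.drop_left' rfl]

theorem cancel_spec (y x : FreeGroup ι) :
    cancel y x ≤ y.toWord.length ∧ cancel y x ≤ x.toWord.length ∧
      y.toWord.take (cancel y x) = x.toWord.take (cancel y x) ∧
      (y⁻¹ * x).toWord =
        FreeGroup.invRev (y.toWord.drop (cancel y x)) ++ x.toWord.drop (cancel y x) := by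
  obtain ⟨k, hk1, hk2, hk3, hk4⟩ := split y x
  have hlen : (y⁻¹ * x).toWord.length
      = (y.toWord.length - k) + (x.toWord.length - k) := by
    rw [hk4]; simp [FreeGroup.invRev_length]
  have hck : cancel y x = k := by
    rw [cancel, hlen]; omega
  rw [hck]
  exact ⟨hk1, hk2, hk3, hk4⟩



open scoped ENNReal
open ENNReal

noncomputable def sq2 (z : ℂ) : ℝ≥0∞ := ENNReal.ofReal (‖z‖^2)

theorem key (n j : ℕ) (f g : FreeGroup ι → ℂ) (S : Finset (FreeGroup ι))
    (hS : ∀ y ∈ S, y.toWord.length = n) :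
    ∑' x : FreeGroup ι,
        sq2 (∑ y ∈ S.filter (fun y => cancel y x = j), f y * g (y⁻¹ * x))
      ≤ (∑' y : FreeGroup ι, sq2 (f y)) * (∑' z : FreeGroup ι, sq2 (g z)) := by
  classical
  set Fb : FreeGroup ι → ℝ≥0∞ := fun a =>
    ∑ y ∈ S.filter (fun y => FreeGroup.mk (y.toWord.take j) = a), sq2 (f y) with hFb
  set Gb : FreeGroup ι → ℝ≥0∞ := fun c =>
    ∑' z : FreeGroup ι,
      (if n - j ≤ z.toWord.length ∧ FreeGroup.mk (z.toWord.drop (n - j)) = c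
        then sq2 (g z) else 0) with hGb
  -- pointwise bound
  have hpt : ∀ x : FreeGroup ι,
      sq2 (∑ y ∈ S.filter (fun y => cancel y x = j), f y * g (y⁻¹ * x))
        ≤ Fb (FreeGroup.mk (x.toWord.take j)) * Gb (FreeGroup.mk (x.toWord.drop j)) := by
    intro x
    set s := S.filter (fun y => cancel y x = j) with hs
    have h1 : ‖∑ y ∈ s, f y * g (y⁻¹ * x)‖ ≤ ∑ y ∈ s, ‖f y‖ * ‖g (y⁻¹ * x)‖ := by
      refine (norm_sum_le _ _).trans (le_of_eq ?_)
      exact Finset.sum_congr rfl fun y _ => norm_mul _ _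
    have h2 : (∑ y ∈ s, ‖f y‖ * ‖g (y⁻¹ * x)‖)^2
        ≤ (∑ y ∈ s, ‖f y‖^2) * (∑ y ∈ s, ‖g (y⁻¹ * x)‖^2) :=
      Finset.sum_mul_sq_le_sq_mul_sq _ _ _
    have h3 : ‖∑ y ∈ s, f y * g (y⁻¹ * x)‖^2
        ≤ (∑ y ∈ s, ‖f y‖^2) * (∑ y ∈ s, ‖g (y⁻¹ * x)‖^2) :=
      le_trans (pow_le_pow_left₀ (norm_nonneg _) h1 2) h2
    have h4 : sq2 (∑ y ∈ s, f y * g (y⁻¹ * x))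
        ≤ (∑ y ∈ s, sq2 (f y)) * (∑ y ∈ s, sq2 (g (y⁻¹ * x))) := by
      refine (ENNReal.ofReal_le_ofReal h3).trans (le_of_eq ?_)
      rw [ENNReal.ofReal_mul (by positivity),
        ENNReal.ofReal_sum_of_nonneg (fun y _ => by positivity),
        ENNReal.ofReal_sum_of_nonneg (fun y _ => by positivity)]
      rfl
    refine h4.trans (mul_le_mul' ?_ ?_)
    · -- f part
      refine Finset.sum_le_sum_of_subset ?_
      intro y hy
      simp only [hs, Finset.mem_filter] at hy ⊢
      obtain ⟨hyS, hyc⟩ := hy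
      refine ⟨hyS, ?_⟩
      have := (cancel_spec y x).2.2.1
      rw [hyc] at this
      rw [this]
    · -- g part
      have hinj : Set.InjOn (fun y => y⁻¹ * x) ↑s := by
        intro y₁ _ y₂ _ h
        simpa using mul_left_injective x⁻¹ (by
          simpa [mul_assoc] using congrArg (fun w => w * x⁻¹) h)
      calc ∑ y ∈ s, sq2 (g (y⁻¹ * x))
          = ∑ z ∈ s.image (fun y => y⁻¹ * x), sq2 (g z) := by
            rw [Finset.sum_image (fun y₁ h₁ y₂ h₂ h => hinj h₁ h₂ h)]
        _ = ∑ z ∈ s.image (fun y => y⁻¹ * x),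
              (if n - j ≤ z.toWord.length ∧
                  FreeGroup.mk (z.toWord.drop (n - j)) = FreeGroup.mk (x.toWord.drop j)
                then sq2 (g z) else 0) := by
            refine Finset.sum_congr rfl fun z hz => ?_
            simp only [Finset.mem_image] at hz
            obtain ⟨y, hy, rfl⟩ := hz
            simp only [hs, Finset.mem_filter] at hy
            obtain ⟨hyS, hyc⟩ := hy
            have hspec := cancel_spec y x
            rw [hyc] at hspec
            obtain ⟨hj1, hj2, hj3, hj4⟩ := hspec
            have hylen : y.toWord.length = n := hS y hyS
            have hlen : (FreeGroup.invRev (y.toWord.drop j)).length = n - j := by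
              rw [FreeGroup.invRev_length, List.length_drop, hylen]
            rw [if_pos]
            refine ⟨?_, ?_⟩
            · rw [hj4, List.length_append, hlen]; omega
            · rw [hj4, List.drop_left' hlen]
        _ ≤ Gb (FreeGroup.mk (x.toWord.drop j)) := ENNReal.sum_le_tsum _
  -- sum the pointwise bound
  calc ∑' x : FreeGroup ι,
        sq2 (∑ y ∈ S.filter (fun y => cancel y x = j), f y * g (y⁻¹ * x))
      ≤ ∑' x : FreeGroup ι,
          Fb (FreeGroup.mk (x.toWord.take j)) * Gb (FreeGroup.mk (x.toWord.drop j)) :=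
        ENNReal.tsum_le_tsum hpt
    _ ≤ ∑' p : FreeGroup ι × FreeGroup ι, Fb p.1 * Gb p.2 := by
        have hinj : Function.Injective (fun x : FreeGroup ι =>
            ((FreeGroup.mk (x.toWord.take j), FreeGroup.mk (x.toWord.drop j)) :
              FreeGroup ι × FreeGroup ι)) := by
          intro x₁ x₂ h
          simp only [Prod.mk.injEq] at h
          have ht : ∀ x : FreeGroup ι, (FreeGroup.mk (x.toWord.take j)).toWord
              = x.toWord.take j := fun x => by
            rw [FreeGroup.toWord_mk, ((reduced_toWord x).take j).reduce_eq]
          have hd : ∀ x : FreeGroup ι, (FreeGroup.mk (x.toWord.drop j)).toWord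
              = x.toWord.drop j := fun x => by
            rw [FreeGroup.toWord_mk, ((reduced_toWord x).drop j).reduce_eq]
          apply FreeGroup.toWord_injective
          rw [← List.take_append_drop j x₁.toWord, ← List.take_append_drop j x₂.toWord]
          have h1 := congrArg FreeGroup.toWord h.1
          have h2 := congrArg FreeGroup.toWord h.2
          rw [ht, ht] at h1
          rw [hd, hd] at h2
          rw [h1, h2]
        exact ENNReal.tsum_comp_le_tsum_of_injective hinj
          (fun p => Fb p.1 * Gb p.2)
    _ = (∑' a : FreeGroup ι, Fb a) * (∑' c : FreeGroup ι, Gb c) := by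
        rw [ENNReal.tsum_prod (f := fun a c => Fb a * Gb c)]
        simp_rw [ENNReal.tsum_mul_left, ENNReal.tsum_mul_right]
    _ ≤ (∑' y : FreeGroup ι, sq2 (f y)) * (∑' z : FreeGroup ι, sq2 (g z)) := by
        refine mul_le_mul' ?_ ?_
        · -- sum of Fb
          have : ∑' a : FreeGroup ι, Fb a
              = ∑ a ∈ S.image (fun y => FreeGroup.mk (y.toWord.take j)), Fb a := by
            refine tsum_eq_sum fun a ha => ?_
            have hemp : S.filter (fun y => FreeGroup.mk (y.toWord.take j) = a) = ∅ := by
              rw [Finset.filter_eq_empty_iff]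
              intro y hy hya
              exact ha (Finset.mem_image.2 ⟨y, hy, hya⟩)
            rw [hFb]
            simp [hemp]
          rw [this, hFb]
          rw [Finset.sum_fiberwise_of_maps_to (fun y hy => Finset.mem_image_of_mem _ hy)]
          exact ENNReal.sum_le_tsum _
        · -- sum of Gb
          rw [hGb]
          rw [ENNReal.tsum_comm]
          refine ENNReal.tsum_le_tsum fun z => ?_
          by_cases hz : n - j ≤ z.toWord.length
          · refine le_of_eq ?_
            calc ∑' c : FreeGroup ι,
                (if n - j ≤ z.toWord.length ∧ FreeGroup.mk (z.toWord.drop (n - j)) = c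
                  then sq2 (g z) else 0)
                = ∑' c : FreeGroup ι,
                  (if c = FreeGroup.mk (z.toWord.drop (n - j)) then sq2 (g z) else 0) := by
                  refine tsum_congr fun c => ?_
                  simp only [hz, true_and]
                  by_cases hc : FreeGroup.mk (z.toWord.drop (n - j)) = c
                  · rw [if_pos hc, if_pos hc.symm]
                  · rw [if_neg hc, if_neg (fun h => hc h.symm)]
              _ = sq2 (g z) := tsum_ite_eq _ _
          · simp only [hz, false_and, if_false, tsum_zero]
            exact zero_le

end HaagerupAux

open HaagerupAux
open scoped ENNReal NNReal

/-- The Haagerup inequality on the free group: a finitely supported function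
supported on words of reduced length exactly `n` acts as a convolutor on `ℓ²`
with convolution norm at most `(n+1)` times its `ℓ²`-norm. -/
theorem haagerup_inequality_free_group
    (ι : Type*) [Fintype ι] [DecidableEq ι] (n : ℕ)
    (f : FreeGroup ι → ℂ) (hf : (Function.support f).Finite)
    (hsupp : ∀ x : FreeGroup ι, f x ≠ 0 → (FreeGroup.toWord x).length = n)
    (g : FreeGroup ι → ℂ) (hg : Summable (fun x => ‖g x‖ ^ 2))
    (conv : FreeGroup ι → ℂ)
    (hconv : ∀ x, conv x = ∑ᶠ y ∈ Function.support f, f y * g (y⁻¹ * x)) :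
    Summable (fun x => ‖conv x‖ ^ 2) ∧
      Real.sqrt (∑' x, ‖conv x‖ ^ 2) ≤
        ((n : ℝ) + 1) * Real.sqrt (∑' x, ‖f x‖ ^ 2) * Real.sqrt (∑' x, ‖g x‖ ^ 2) := by
  classical
  set S : Finset (FreeGroup ι) := hf.toFinset with hSdef
  have hS : ∀ y ∈ S, y.toWord.length = n := fun y hy =>
    hsupp y (hf.mem_toFinset.1 hy)
  have hconv' : ∀ x, conv x = ∑ y ∈ S, f y * g (y⁻¹ * x) := by
    intro x
    rw [hconv x, ← hf.coe_toFinset, finsum_mem_coe_finset]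
  have hdecomp : ∀ x, conv x = ∑ j ∈ Finset.range (n + 1),
      ∑ y ∈ S.filter (fun y => cancel y x = j), f y * g (y⁻¹ * x) := by
    intro x
    rw [hconv' x]
    refine (Finset.sum_fiberwise_of_maps_to (fun y hy => Finset.mem_range.2 ?_) _).symm
    have h1 := (cancel_spec y x).1
    rw [hS y hy] at h1
    omega
  -- pointwise Cauchy-Schwarz over j
  have hpt : ∀ x, sq2 (conv x) ≤ ENNReal.ofReal ((n : ℝ) + 1) *
      ∑ j ∈ Finset.range (n + 1),
        sq2 (∑ y ∈ S.filter (fun y => cancel y x = j), f y * g (y⁻¹ * x)) := by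
    intro x
    have h1 : ‖conv x‖ ≤ ∑ j ∈ Finset.range (n + 1),
        ‖∑ y ∈ S.filter (fun y => cancel y x = j), f y * g (y⁻¹ * x)‖ := by
      rw [hdecomp x]; exact norm_sum_le _ _
    have h2 : ‖conv x‖ ^ 2 ≤ ((n : ℝ) + 1) *
        ∑ j ∈ Finset.range (n + 1),
          ‖∑ y ∈ S.filter (fun y => cancel y x = j), f y * g (y⁻¹ * x)‖ ^ 2 := by
      refine (pow_le_pow_left₀ (norm_nonneg _) h1 2).trans ?_
      have := sq_sum_le_card_mul_sum_sq (s := Finset.range (n + 1))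
        (f := fun j => ‖∑ y ∈ S.filter (fun y => cancel y x = j), f y * g (y⁻¹ * x)‖)
      simpa [Finset.card_range] using this
    refine (ENNReal.ofReal_le_ofReal h2).trans (le_of_eq ?_)
    rw [ENNReal.ofReal_mul (by positivity),
      ENNReal.ofReal_sum_of_nonneg (fun j _ => by positivity)]
    rfl
  set F := ∑' y : FreeGroup ι, sq2 (f y) with hFdef
  set G := ∑' z : FreeGroup ι, sq2 (g z) with hGdef
  have hmain : ∑' x : FreeGroup ι, sq2 (conv x)
      ≤ ENNReal.ofReal ((n : ℝ) + 1) * (((n : ℝ≥0∞) + 1) * (F * G)) := by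
    calc ∑' x : FreeGroup ι, sq2 (conv x)
        ≤ ∑' x : FreeGroup ι, (ENNReal.ofReal ((n : ℝ) + 1) *
            ∑ j ∈ Finset.range (n + 1),
              sq2 (∑ y ∈ S.filter (fun y => cancel y x = j), f y * g (y⁻¹ * x))) :=
          ENNReal.tsum_le_tsum hpt
      _ = ENNReal.ofReal ((n : ℝ) + 1) * ∑ j ∈ Finset.range (n + 1),
            ∑' x : FreeGroup ι,
              sq2 (∑ y ∈ S.filter (fun y => cancel y x = j), f y * g (y⁻¹ * x)) := by
          rw [ENNReal.tsum_mul_left]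
          congr 1
          exact Summable.tsum_finsetSum (fun j _ => ENNReal.summable)
      _ ≤ ENNReal.ofReal ((n : ℝ) + 1) * ∑ j ∈ Finset.range (n + 1), F * G := by
          refine mul_le_mul' le_rfl (Finset.sum_le_sum fun j _ => ?_)
          exact key n j f g S hS
      _ = ENNReal.ofReal ((n : ℝ) + 1) * (((n : ℝ≥0∞) + 1) * (F * G)) := by
          rw [Finset.sum_const, Finset.card_range, nsmul_eq_mul]
          congr 2
          push_cast
          ring
  have hofn : ENNReal.ofReal ((n : ℝ) + 1) = (n : ℝ≥0∞) + 1 := by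
    rw [ENNReal.ofReal_add (by positivity) zero_le_one, ENNReal.ofReal_natCast,
      ENNReal.ofReal_one]
  have hfsum : Summable (fun x => ‖f x‖ ^ 2) := by
    refine summable_of_ne_finset_zero (s := S) fun x hx => ?_
    have : f x = 0 := by
      by_contra hfx
      exact hx (hf.mem_toFinset.2 hfx)
    simp [this]
  have hFeq : F = ENNReal.ofReal (∑' x, ‖f x‖ ^ 2) :=
    (ENNReal.ofReal_tsum_of_nonneg (fun x => by positivity) hfsum).symm
  have hGeq : G = ENNReal.ofReal (∑' x, ‖g x‖ ^ 2) :=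
    (ENNReal.ofReal_tsum_of_nonneg (fun x => by positivity) hg).symm
  have hRHSne : ENNReal.ofReal ((n : ℝ) + 1) * (((n : ℝ≥0∞) + 1) * (F * G)) ≠ ⊤ := by
    rw [hFeq, hGeq, hofn]
    refine ENNReal.mul_ne_top (by simp) (ENNReal.mul_ne_top (by simp)
      (ENNReal.mul_ne_top ENNReal.ofReal_ne_top ENNReal.ofReal_ne_top))
  have hCne : ∑' x : FreeGroup ι, sq2 (conv x) ≠ ⊤ := ne_top_of_le_ne_top hRHSne hmain
  have hsq2 : ∀ z : ℂ, sq2 z = ((‖z‖₊ ^ 2 : ℝ≥0) : ℝ≥0∞) := by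
    intro z
    rw [sq2, ENNReal.ofReal_pow (norm_nonneg _), ofReal_norm, enorm_eq_nnnorm,
      ENNReal.coe_pow]
  have hsummable : Summable (fun x => ‖conv x‖ ^ 2) := by
    have h1 : ∑' x : FreeGroup ι, ((‖conv x‖₊ ^ 2 : ℝ≥0) : ℝ≥0∞) ≠ ⊤ := by
      simpa only [hsq2] using hCne
    have h2 : Summable (fun x => (‖conv x‖₊ ^ 2 : ℝ≥0)) :=
      ENNReal.tsum_coe_ne_top_iff_summable.1 h1
    have h3 := NNReal.summable_coe.2 h2
    refine h3.congr fun x => ?_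
    simp
  refine ⟨hsummable, ?_⟩
  have hreal : ∑' x, ‖conv x‖ ^ 2 ≤
      (((n : ℝ) + 1) ^ 2) * (∑' x, ‖f x‖ ^ 2) * (∑' x, ‖g x‖ ^ 2) := by
    have hL : ENNReal.ofReal (∑' x, ‖conv x‖ ^ 2) = ∑' x : FreeGroup ι, sq2 (conv x) :=
      ENNReal.ofReal_tsum_of_nonneg (fun x => by positivity) hsummable
    have hf0 : (0:ℝ) ≤ ∑' x, ‖f x‖ ^ 2 := tsum_nonneg fun x => by positivity
    have hR : ENNReal.ofReal ((((n : ℝ) + 1) ^ 2) * (∑' x, ‖f x‖ ^ 2) * (∑' x, ‖g x‖ ^ 2))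
        = ENNReal.ofReal ((n : ℝ) + 1) * (((n : ℝ≥0∞) + 1) * (F * G)) := by
      rw [ENNReal.ofReal_mul (by positivity), ENNReal.ofReal_mul (by positivity),
        hFeq, hGeq, hofn]
      rw [show (((n : ℝ) + 1) ^ 2) = ((n : ℝ) + 1) * ((n : ℝ) + 1) by ring,
        ENNReal.ofReal_mul (by positivity), hofn]
      ring
    have := hmain
    rw [← hL, ← hR] at this
    have hnonneg : (0:ℝ) ≤ (((n : ℝ) + 1) ^ 2) * (∑' x, ‖f x‖ ^ 2) * (∑' x, ‖g x‖ ^ 2) := by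
      have h1 : (0:ℝ) ≤ ∑' x, ‖f x‖ ^ 2 := tsum_nonneg fun x => by positivity
      have h2 : (0:ℝ) ≤ ∑' x, ‖g x‖ ^ 2 := tsum_nonneg fun x => by positivity
      positivity
    exact (ENNReal.ofReal_le_ofReal_iff hnonneg).1 this
  have h1 : (0:ℝ) ≤ ∑' x, ‖f x‖ ^ 2 := tsum_nonneg fun x => by positivity
  calc Real.sqrt (∑' x, ‖conv x‖ ^ 2)
      ≤ Real.sqrt ((((n : ℝ) + 1) ^ 2) * (∑' x, ‖f x‖ ^ 2) * (∑' x, ‖g x‖ ^ 2)) :=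
        Real.sqrt_le_sqrt hreal
    _ = ((n : ℝ) + 1) * Real.sqrt (∑' x, ‖f x‖ ^ 2) * Real.sqrt (∑' x, ‖g x‖ ^ 2) := by
        rw [Real.sqrt_mul (by positivity), Real.sqrt_mul (by positivity),
          Real.sqrt_sq (by positivity)]
end

section
/- For n, m ≥ 1, every π ∈ NC₂*(n,m) pairs positions of equal label: if {p, q} is a block of π then label(p) = label(q). -/
/-- A partition (equivalence relation) of `Fin N` is noncrossing if there are no
`p < q < p' < q'` with `p ∼ p'`, `q ∼ q'` but `p ≁ q`. -/
def IsNoncrossing {N : ℕ} (π : Setoid (Fin N)) : Prop :=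
  ¬ ∃ p q p' q' : Fin N, p < q ∧ q < p' ∧ p' < q' ∧ π.r p p' ∧ π.r q q' ∧ ¬ π.r p q

/-- A pair partition: every element lies in a block of exactly two elements. -/
def IsPairPartition {N : ℕ} (π : Setoid (Fin N)) : Prop :=
  ∀ p : Fin N, ∃! q : Fin N, q ≠ p ∧ π.r p q

/-- Position `p` (in `{0,…,2nm−1}`) is a `c`-position if `⌊p/n⌋` is even. -/
def IsCPos (n p : ℕ) : Prop := (p / n) % 2 = 0

/-- The label of position `p`: `n − (p mod n)` on `c`-positions and
`(p mod n) + 1` on `c∗`-positions. -/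
def posLabel (n p : ℕ) : ℕ := if (p / n) % 2 = 0 then n - p % n else p % n + 1

/-- `π ∈ NC₂*(n,m)`: a noncrossing pair partition of `{0,…,2nm−1}` each of whose
blocks contains exactly one `c`-position and one `c∗`-position. -/
def IsStarPairing (n m : ℕ) (π : Setoid (Fin (2 * n * m))) : Prop :=
  IsNoncrossing π ∧ IsPairPartition π ∧
    ∀ p q : Fin (2 * n * m), p ≠ q → π.r p q → (IsCPos n p.val ↔ ¬ IsCPos n q.val)


instance (n : ℕ) : DecidablePred (IsCPos n) := fun p =>
  inferInstanceAs (Decidable ((p / n) % 2 = 0))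

/-- number of c-positions below k -/
def cCount (n k : ℕ) : ℕ := ((Finset.range k).filter (IsCPos n)).card

lemma cCount_succ (n k : ℕ) :
    cCount n (k + 1) = cCount n k + if IsCPos n k then 1 else 0 := by
  unfold cCount
  rw [Finset.range_add_one, Finset.filter_insert]
  split
  · rw [Finset.card_insert_of_notMem (by simp)]
  · simp

lemma isCPos_iff {n : ℕ} (hn : 0 < n) (k : ℕ) : IsCPos n k ↔ k % (2 * n) < n := by
  unfold IsCPos
  rw [← Nat.mod_mul_right_div_self, mul_comm n 2, Nat.div_eq_zero_iff_lt hn]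

lemma cCount_formula {n : ℕ} (hn : 0 < n) (k : ℕ) :
    cCount n k = n * (k / (2 * n)) + min (k % (2 * n)) n := by
  induction k with
  | zero => simp [cCount]
  | succ k ih =>
    rw [cCount_succ, ih]
    have h2n : 0 < 2 * n := by omega
    have hd := Nat.div_add_mod k (2 * n)
    have hr : k % (2 * n) < 2 * n := Nat.mod_lt _ h2n
    set t := k / (2 * n) with ht
    set r := k % (2 * n) with hr'
    have hk1 : k + 1 = 2 * n * t + (r + 1) := by omega
    by_cases hc : r + 1 < 2 * n
    · have hdiv : (k + 1) / (2 * n) = t := by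
        rw [hk1, Nat.mul_add_div h2n, Nat.div_eq_of_lt hc]; omega
      have hmod : (k + 1) % (2 * n) = r + 1 := by
        rw [hk1, Nat.mul_add_mod, Nat.mod_eq_of_lt hc]
      rw [hdiv, hmod]
      by_cases hcp : IsCPos n k
      · have : r < n := (isCPos_iff hn k).mp hcp
        rw [if_pos hcp, min_eq_left (by omega), min_eq_left (by omega)]; omega
      · have : ¬ r < n := fun h => hcp ((isCPos_iff hn k).mpr h)
        rw [if_neg hcp, min_eq_right (by omega), min_eq_right (by omega)]; omega
    · -- r = 2*n - 1
      have hre : r + 1 = 2 * n := by omega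
      have hcp : ¬ IsCPos n k := by
        rw [isCPos_iff hn]; omega
      have hk2 : k + 1 = 2 * n * (t + 1) := by
        have : 2 * n * (t + 1) = 2 * n * t + 2 * n := by ring
        omega
      have hdiv : (k + 1) / (2 * n) = t + 1 := by
        rw [hk2, Nat.mul_div_cancel_left _ h2n]
      have hmod : (k + 1) % (2 * n) = 0 := by
        rw [hk2, Nat.mul_mod_right]
      rw [hdiv, hmod, if_neg hcp, min_eq_right (by omega : n ≤ r)]
      simp [Nat.mul_add]

lemma cCount_mul_add {n : ℕ} (hn : 0 < n) (a s : ℕ) (hs : s ≤ 2 * n) :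
    cCount n (2 * n * a + s) = n * a + min s n := by
  have h2n : 0 < 2 * n := by omega
  rw [cCount_formula hn]
  rcases lt_or_eq_of_le hs with h | h
  · rw [Nat.mul_add_div h2n, Nat.mul_add_mod, Nat.div_eq_of_lt h, Nat.mod_eq_of_lt h,
      Nat.add_zero]
  · subst h
    have : 2 * n * a + 2 * n = 2 * n * (a + 1) := by ring
    rw [this, Nat.mul_div_cancel_left _ h2n, Nat.mul_mod_right,
      min_eq_right (by omega : n ≤ 2 * n)]
    simp [Nat.mul_add]

lemma posLabel_eq {n : ℕ} (hn : 0 < n) (k : ℕ) :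
    posLabel n k = if k % (2 * n) < n then n - k % (2 * n) else k % (2 * n) - n + 1 := by
  unfold posLabel
  have h1 : k / n % 2 = k % (2 * n) / n := by
    rw [← Nat.mod_mul_right_div_self, mul_comm n 2]
  have h2 : k % n = k % (2 * n) % n := (Nat.mod_mod_of_dvd k ⟨2, by ring⟩).symm
  rw [h1, h2]
  have hr : k % (2 * n) < 2 * n := Nat.mod_lt _ (by omega)
  set r := k % (2 * n)
  by_cases h : r < n
  · rw [if_pos ((Nat.div_eq_zero_iff_lt hn).mpr h), if_pos h, Nat.mod_eq_of_lt h]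
  · have hge : n ≤ r := by omega
    have hdiv : r / n = 1 := by
      rw [Nat.div_eq_sub_div hn hge, Nat.div_eq_of_lt (by omega)]
    have hmod : r % n = r - n := by
      rw [Nat.mod_eq_sub_mod hge, Nat.mod_eq_of_lt (by omega)]
    rw [hdiv, hmod, if_neg (by omega), if_neg h]


section Partner

variable {N : ℕ} {π : Setoid (Fin N)}

noncomputable def partner (hpp : IsPairPartition π) (p : Fin N) : Fin N :=
  (hpp p).choose

lemma partner_ne (hpp : IsPairPartition π) (p : Fin N) : partner hpp p ≠ p :=
  (hpp p).choose_spec.1.1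

lemma partner_rel (hpp : IsPairPartition π) (p : Fin N) : π.r p (partner hpp p) :=
  (hpp p).choose_spec.1.2

lemma partner_eq (hpp : IsPairPartition π) {p q : Fin N} (h1 : q ≠ p) (h2 : π.r p q) :
    q = partner hpp p :=
  (hpp p).choose_spec.2 q ⟨h1, h2⟩

lemma partner_partner (hpp : IsPairPartition π) (p : Fin N) :
    partner hpp (partner hpp p) = p :=
  (partner_eq hpp (Ne.symm (partner_ne hpp p)) (π.iseqv.symm (partner_rel hpp p))).symm

lemma interior_mem (hnc : IsNoncrossing π) (hpp : IsPairPartition π)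
    {p q x : Fin N} (hpq : p < q) (hr : π.r p q) (hx1 : p < x) (hx2 : x < q) :
    p < partner hpp x ∧ partner hpp x < q := by
  set y := partner hpp x with hy
  have hxy : π.r x y := partner_rel hpp x
  have hyx : y ≠ x := partner_ne hpp x
  have hq : q = partner hpp p := partner_eq hpp (ne_of_gt hpq) hr
  have hp : p = partner hpp q := partner_eq hpp (ne_of_gt hpq).symm (π.iseqv.symm hr)
  have hyp : y ≠ p := by
    intro h
    have : x = partner hpp p := partner_eq hpp (ne_of_gt hx1) (π.iseqv.symm (h ▸ hxy))
    rw [← hq] at this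
    exact absurd this (ne_of_lt hx2)
  have hyq : y ≠ q := by
    intro h
    have : x = partner hpp q := partner_eq hpp (ne_of_lt hx2) (π.iseqv.symm (h ▸ hxy))
    rw [← hp] at this
    exact absurd this (ne_of_gt hx1)
  rcases lt_trichotomy y p with h | h | h
  · exfalso
    apply hnc
    refine ⟨y, p, x, q, h, hx1, hx2, π.iseqv.symm hxy, hr, ?_⟩
    intro hrel
    have : y = partner hpp p := partner_eq hpp hyp (π.iseqv.symm hrel)
    rw [← hq] at this
    exact absurd this hyq
  · exact absurd h hyp
  · rcases lt_trichotomy y q with h' | h' | h'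
    · exact ⟨h, h'⟩
    · exact absurd h' hyq
    · exfalso
      apply hnc
      refine ⟨p, x, q, y, hx1, hx2, h', hr, hxy, ?_⟩
      intro hrel
      have : x = partner hpp p := partner_eq hpp (ne_of_gt hx1) hrel
      rw [← hq] at this
      exact absurd this (ne_of_lt hx2)

end Partner

lemma card_Ioo_val {N : ℕ} (p q : Fin N) (pr : ℕ → Prop) [DecidablePred pr] :
    ((Finset.Ioo p q).filter (fun x => pr x.val)).card
      = ((Finset.Ioo p.val q.val).filter pr).card := by
  apply Finset.card_bij (fun a _ => a.val)
  · intro a ha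
    simp only [Finset.mem_filter, Finset.mem_Ioo, Fin.lt_def] at *
    exact ha
  · intro a ha b hb h
    exact Fin.val_injective h
  · intro b hb
    simp only [Finset.mem_filter, Finset.mem_Ioo] at hb
    refine ⟨⟨b, lt_trans hb.1.2 q.isLt⟩, ?_, rfl⟩
    simp only [Finset.mem_filter, Finset.mem_Ioo, Fin.lt_def]
    exact hb

lemma starPairing_label_eq_aux (n m : ℕ) (hn : 1 ≤ n)
    (π : Setoid (Fin (2 * n * m))) (hπ : IsStarPairing n m π)
    (p q : Fin (2 * n * m)) (hlt : p < q) (hr : π.r p q) :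
    posLabel n p.val = posLabel n q.val := by
  obtain ⟨hnc, hpp, halt⟩ := hπ
  have hn' : 0 < n := hn
  -- inside the pair, c-positions and c∗-positions are equinumerous
  have hcard : ((Finset.Ioo p q).filter (fun x => IsCPos n x.val)).card
      = ((Finset.Ioo p q).filter (fun x => ¬ IsCPos n x.val)).card := by
    apply Finset.card_bij' (fun a _ => partner hpp a) (fun a _ => partner hpp a)
    · intro a ha
      rw [Finset.mem_filter, Finset.mem_Ioo] at ha ⊢
      obtain ⟨⟨h1, h2⟩, hc⟩ := ha
      refine ⟨interior_mem hnc hpp hlt hr h1 h2, ?_⟩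
      exact (halt a (partner hpp a) (Ne.symm (partner_ne hpp a)) (partner_rel hpp a)).mp hc
    · intro a ha
      rw [Finset.mem_filter, Finset.mem_Ioo] at ha ⊢
      obtain ⟨⟨h1, h2⟩, hc⟩ := ha
      refine ⟨interior_mem hnc hpp hlt hr h1 h2, ?_⟩
      by_contra h
      exact hc ((halt a (partner hpp a) (Ne.symm (partner_ne hpp a))
        (partner_rel hpp a)).mpr h)
    · intro a _; exact partner_partner hpp a
    · intro a _; exact partner_partner hpp a
  -- transfer to ℕ
  rw [card_Ioo_val p q (IsCPos n), card_Ioo_val p q (fun x => ¬ IsCPos n x)] at hcard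
  set P := p.val with hPdef
  set Q := q.val with hQdef
  have hPQ : P < Q := hlt
  set Cc := ((Finset.Ioo P Q).filter (IsCPos n)).card with hCc
  have hsum : Cc + ((Finset.Ioo P Q).filter (fun x => ¬ IsCPos n x)).card
      = (Finset.Ioo P Q).card :=
    Finset.card_filter_add_card_filter_not _
  have hIoo : (Finset.Ioo P Q).card = Q - P - 1 := Nat.card_Ioo P Q
  have h2Cc : 2 * Cc = Q - P - 1 := by omega
  -- cCount decomposition
  have hdisj : Disjoint (Finset.range (P + 1)) (Finset.Ioo P Q) := by
    rw [Finset.range_eq_Ico, ← Finset.Ico_add_one_left_eq_Ioo]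
    exact Finset.Ico_disjoint_Ico_consecutive _ _ _
  have hsplit : cCount n Q = cCount n (P + 1) + Cc := by
    unfold cCount
    have hu : Finset.range Q = Finset.range (P + 1) ∪ Finset.Ioo P Q := by
      rw [Finset.range_eq_Ico, Finset.range_eq_Ico, ← Finset.Ico_add_one_left_eq_Ioo,
        Finset.Ico_union_Ico_eq_Ico (Nat.zero_le _) (show P + 1 ≤ Q from hPQ)]
    rw [hu, Finset.filter_union,
      Finset.card_union_of_disjoint (Finset.disjoint_filter_filter hdisj)]
  -- arithmetic
  have hPd := Nat.div_add_mod P (2 * n)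
  have hQd := Nat.div_add_mod Q (2 * n)
  set a := P / (2 * n) with ha
  set rP := P % (2 * n) with hrP
  set b := Q / (2 * n) with hb
  set rQ := Q % (2 * n) with hrQ
  have hrPlt : rP < 2 * n := Nat.mod_lt _ (by omega)
  have hrQlt : rQ < 2 * n := Nat.mod_lt _ (by omega)
  have e1 : cCount n Q = n * b + min rQ n := by
    have : Q = 2 * n * b + rQ := by omega
    rw [this]; exact cCount_mul_add hn' b rQ (le_of_lt hrQlt)
  have e2 : cCount n (P + 1) = n * a + min (rP + 1) n := by
    have : P + 1 = 2 * n * a + (rP + 1) := by omega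
    rw [this]; exact cCount_mul_add hn' a (rP + 1) (by omega)
  have halt' : rP < n ↔ ¬ rQ < n := by
    have := halt p q (ne_of_lt hlt) hr
    rwa [isCPos_iff hn', isCPos_iff hn'] at this
  rw [posLabel_eq hn', posLabel_eq hn']
  obtain ⟨A, hA⟩ : ∃ A, n * a = A := ⟨_, rfl⟩
  obtain ⟨B, hB⟩ : ∃ B, n * b = B := ⟨_, rfl⟩
  rw [mul_assoc] at hPd hQd
  rw [hA] at hPd e2
  rw [hB] at hQd e1
  by_cases hcp : rP < n
  · have hq' : ¬ rQ < n := halt'.mp hcp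
    rw [min_eq_right (by omega : n ≤ rQ)] at e1
    rw [min_eq_left (by omega : rP + 1 ≤ n)] at e2
    rw [if_pos hcp, if_neg hq']
    omega
  · have hq' : rQ < n := by by_contra h; exact hcp (halt'.mpr h)
    rw [min_eq_left (by omega : rQ ≤ n)] at e1
    rw [min_eq_right (by omega : n ≤ rP + 1)] at e2
    rw [if_neg hcp, if_pos hq']
    omega

/-- Every block of a noncrossing ∗-pairing `π ∈ NC₂*(n,m)` pairs positions
carrying equal labels. -/
theorem starPairing_label_eq (n m : ℕ) (hn : 1 ≤ n) (hm : 1 ≤ m)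
    (π : Setoid (Fin (2 * n * m))) (hπ : IsStarPairing n m π)
    (p q : Fin (2 * n * m)) (hpq : π.r p q) :
    posLabel n p.val = posLabel n q.val := by
  rcases lt_trichotomy p q with h | h | h
  · exact starPairing_label_eq_aux n m hn π hπ p q h hpq
  · rw [h]
  · exact (starPairing_label_eq_aux n m hn π hπ q p h (π.iseqv.symm hpq)).symm
end

section
/- Let n, m ≥ 1 and let π ∈ NC₂*(n,m). For 1 ≤ j ≤ n, let Φ^π_j be the partition of {1,…,m} whose blocks are the equivalence classes of the smallest equivalence relation containing every pair (k, k') with c(k,j) ∼_π c∗(k',j). Then each Φ^π_j is a noncrossing partition of {1,…,m}, and Φ^π_1 ≤ Φ^π_2 ≤ ⋯ ≤ Φ^π_n in the reverse-refinement order (i.e. every block of Φ^π_j is contained in a block of Φ^π_{j+1} for 1 ≤ j < n). -/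
/-- `c(k,j)`: for `1 ≤ k ≤ m`, `1 ≤ j ≤ n`, the unique `c`-position with
`⌊·/n⌋ = 2(k−1)` and label `j`, namely `2(k−1)n + (n−j)`. -/
def cIdx (n m : ℕ) (h : 0 < 2 * n * m) (k j : ℕ) : Fin (2 * n * m) :=
  ⟨(2 * (k - 1) * n + (n - j)) % (2 * n * m), Nat.mod_lt _ h⟩

/-- `c∗(k,j)`: for `1 ≤ k ≤ m`, `1 ≤ j ≤ n`, the unique `c∗`-position with
`⌊·/n⌋ = 2k−1` and label `j`, namely `(2k−1)n + (j−1)`. -/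
def cstarIdx (n m : ℕ) (h : 0 < 2 * n * m) (k j : ℕ) : Fin (2 * n * m) :=
  ⟨((2 * k - 1) * n + (j - 1)) % (2 * n * m), Nat.mod_lt _ h⟩

/-- `Φ^π_j`: the partition of `{1,…,m}` (modelled on `Fin m`, with `i : Fin m`
standing for `k = i+1`) generated by all pairs `(k,k')` with `c(k,j) ∼_π c∗(k',j)`. -/
def PhiRel (n m : ℕ) (h : 0 < 2 * n * m) (π : Setoid (Fin (2 * n * m))) (j : ℕ) :
    Setoid (Fin m) :=
  Relation.EqvGen.setoid
    (fun k k' : Fin m => π.r (cIdx n m h (k.val + 1) j) (cstarIdx n m h (k'.val + 1) j))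

namespace NCAux

instance (n : ℕ) : DecidablePred (IsCPos n) := fun _ => by unfold IsCPos; infer_instance

/-- height function -/
def ht (n x : ℕ) : ℤ :=
  if (x / n) % 2 = 0 then ((x % n : ℕ) : ℤ) else (n : ℤ) - ((x % n : ℕ) : ℤ)

lemma ht_step (n : ℕ) (hn : 1 ≤ n) (x : ℕ) :
    ht n (x + 1) = ht n x + (if IsCPos n x then 1 else -1) := by
  have hn' : 0 < n := hn
  have hm : x % n < n := Nat.mod_lt _ hn'
  have hx : n * (x / n) + x % n = x := Nat.div_add_mod x n
  rcases Nat.lt_or_ge (x % n + 1) n with h | h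
  · have e1 : x + 1 = n * (x / n) + (x % n + 1) := by omega
    have hdiv : (x + 1) / n = x / n := by
      rw [e1, Nat.mul_add_div hn', Nat.div_eq_of_lt h, Nat.add_zero]
    have hmod : (x + 1) % n = x % n + 1 := by
      rw [e1, Nat.mul_add_mod, Nat.mod_eq_of_lt h]
    by_cases hp : (x / n) % 2 = 0
    · simp only [ht, IsCPos, hdiv, hmod, hp, if_pos, if_true]
      push_cast; ring
    · rw [if_neg (show ¬ IsCPos n x from hp)]; simp only [ht, IsCPos, hdiv, hmod, if_neg hp]
      push_cast; ring
  · have hxm : x % n = n - 1 := by omega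
    have e2 : n * (x / n + 1) = n * (x / n) + n := by ring
    have e1 : x + 1 = n * (x / n + 1) := by omega
    have hdiv : (x + 1) / n = x / n + 1 := by
      rw [e1, Nat.mul_div_cancel_left _ hn']
    have hmod : (x + 1) % n = 0 := by
      rw [e1]; exact Nat.mul_mod_right n _
    by_cases hp : (x / n) % 2 = 0
    · have hp2 : (x / n + 1) % 2 ≠ 0 := by omega
      simp only [ht, IsCPos, hdiv, hmod, if_pos hp, if_neg hp2]
      have : (x % n : ℤ) = (n : ℤ) - 1 := by omega
      push_cast; omega
    · have hp2 : (x / n + 1) % 2 = 0 := by omega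
      simp only [ht, IsCPos, hdiv, hmod, if_neg hp, if_pos hp2]
      have : (x % n : ℤ) = (n : ℤ) - 1 := by omega
      push_cast; omega

lemma ht_teles (n : ℕ) (hn : 1 ≤ n) :
    ∀ b a, a ≤ b →
      ht n b = ht n a + ∑ x ∈ Finset.Ico a b, (if IsCPos n x then (1 : ℤ) else -1) := by
  intro b
  induction b with
  | zero => intro a ha; have : a = 0 := by omega
            subst this; simp
  | succ b ih =>
    intro a ha
    rcases Nat.lt_or_ge a (b + 1) with h | h
    · have hab : a ≤ b := by omega
      rw [Finset.sum_Ico_succ_top hab, ht_step n hn b, ih a hab]; ring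
    · have : a = b + 1 := by omega
      subst this; simp

/-- master comparison lemma for positions of the form 2*k*n + o with o < 2*n -/
lemma master {n : ℕ} (hn : 1 ≤ n) {k k' o o' : ℕ} (ho : o < 2 * n) (ho' : o' < 2 * n) :
    2 * k * n + o < 2 * k' * n + o' ↔ (k < k' ∨ (k = k' ∧ o < o')) := by
  constructor
  · intro h
    rcases Nat.lt_trichotomy k k' with h1 | h1 | h1
    · exact Or.inl h1
    · subst h1; exact Or.inr ⟨rfl, lt_of_add_lt_add_left h⟩
    · exfalso
      have hmul : 2 * (k' + 1) * n ≤ 2 * k * n :=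
        Nat.mul_le_mul_right n (by omega)
      have e : 2 * (k' + 1) * n = 2 * k' * n + 2 * n := by ring
      have : 2 * k' * n + 2 * n ≤ 2 * k * n := e ▸ hmul
      have : 2 * k' * n + o' < 2 * k * n + o := by
        calc 2 * k' * n + o' < 2 * k' * n + 2 * n := Nat.add_lt_add_left ho' _
        _ ≤ 2 * k * n := this
        _ ≤ 2 * k * n + o := Nat.le_add_right _ _
      omega
  · rintro (h1 | ⟨rfl, h1⟩)
    · have hmul : 2 * (k + 1) * n ≤ 2 * k' * n :=
        Nat.mul_le_mul_right n (by omega)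
      have e : 2 * (k + 1) * n = 2 * k * n + 2 * n := by ring
      calc 2 * k * n + o < 2 * k * n + 2 * n := Nat.add_lt_add_left ho _
      _ ≤ 2 * k' * n := e ▸ hmul
      _ ≤ 2 * k' * n + o' := Nat.le_add_right _ _
    · exact Nat.add_lt_add_left h1 _

lemma master_ne {n : ℕ} (hn : 1 ≤ n) {k k' o o' : ℕ} (ho : o < 2 * n) (ho' : o' < 2 * n)
    (hne : o ≠ o') : 2 * k * n + o ≠ 2 * k' * n + o' := by
  intro h
  rcases Nat.lt_trichotomy k k' with h1 | h1 | h1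
  · exact absurd h (Nat.ne_of_lt ((master hn ho ho').mpr (Or.inl h1)))
  · subst h1; exact hne (Nat.add_left_cancel h)
  · exact absurd h.symm (Nat.ne_of_lt ((master hn ho' ho).mpr (Or.inl h1)))

end NCAux

section Pairing

variable {n m : ℕ} (π : Setoid (Fin (2 * n * m))) (hπ : IsStarPairing n m π)

noncomputable def prt (p : Fin (2 * n * m)) : Fin (2 * n * m) :=
  (hπ.2.1 p).choose

lemma prt_ne (p : Fin (2 * n * m)) : prt π hπ p ≠ p :=
  (hπ.2.1 p).choose_spec.1.1

lemma prt_rel (p : Fin (2 * n * m)) : π.r p (prt π hπ p) :=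
  (hπ.2.1 p).choose_spec.1.2

lemma prt_eq_of (p q : Fin (2 * n * m)) (hq : q ≠ p) (h : π.r p q) : q = prt π hπ p :=
  (hπ.2.1 p).choose_spec.2 q ⟨hq, h⟩

lemma prt_prt (p : Fin (2 * n * m)) : prt π hπ (prt π hπ p) = p :=
  (prt_eq_of π hπ (prt π hπ p) p (Ne.symm (prt_ne π hπ p))
    (π.iseqv.symm (prt_rel π hπ p))).symm

lemma prt_inj : Function.Injective (prt π hπ) := by
  intro a b h
  have := congrArg (prt π hπ) h
  rwa [prt_prt, prt_prt] at this

lemma rel_iff_prt (p q : Fin (2 * n * m)) : π.r p q ↔ q = p ∨ q = prt π hπ p := by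
  constructor
  · intro h
    by_cases hq : q = p
    · exact Or.inl hq
    · exact Or.inr (prt_eq_of π hπ p q hq h)
  · rintro (rfl | rfl)
    · exact π.iseqv.refl _
    · exact prt_rel π hπ _

lemma prt_between {p x : Fin (2 * n * m)} (h1 : p < x) (hx : x < prt π hπ p) :
    p < prt π hπ x ∧ prt π hπ x < prt π hπ p := by
  have hyx : prt π hπ x ≠ x := prt_ne π hπ x
  have hyp : prt π hπ x ≠ p := by
    intro h
    have : prt π hπ (prt π hπ x) = prt π hπ p := congrArg _ h
    rw [prt_prt] at this
    subst this
    exact absurd rfl (ne_of_lt hx)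
  have hyq : prt π hπ x ≠ prt π hπ p := fun h => absurd (prt_inj π hπ h) (ne_of_gt h1)
  have hnr1 : ¬ π.r (prt π hπ x) p := by
    rw [rel_iff_prt π hπ]
    rw [prt_prt]
    push_neg
    exact ⟨Ne.symm hyp, ne_of_lt h1⟩
  have hnr2 : ¬ π.r p x := by
    rw [rel_iff_prt π hπ]
    push_neg
    exact ⟨ne_of_gt h1, ne_of_lt hx⟩
  rcases lt_trichotomy (prt π hπ x) p with hc | hc | hc
  · exfalso
    exact hπ.1 ⟨prt π hπ x, p, x, prt π hπ p, hc, h1, hx,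
      π.iseqv.symm (prt_rel π hπ x), prt_rel π hπ p, hnr1⟩
  · exact absurd hc hyp
  · rcases lt_trichotomy (prt π hπ x) (prt π hπ p) with hd | hd | hd
    · exact ⟨hc, hd⟩
    · exact absurd hd hyq
    · exfalso
      exact hπ.1 ⟨p, x, prt π hπ p, prt π hπ x, h1, hx, hd,
        prt_rel π hπ p, prt_rel π hπ x, hnr2⟩

lemma cpos_prt (p : Fin (2 * n * m)) :
    IsCPos n p.val ↔ ¬ IsCPos n (prt π hπ p).val :=
  hπ.2.2 p (prt π hπ p) (Ne.symm (prt_ne π hπ p)) (prt_rel π hπ p)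

lemma counts_eq (p : Fin (2 * n * m)) (hlt : p < prt π hπ p) :
    ((Finset.Ioo p.val (prt π hπ p).val).filter (fun x => IsCPos n x)).card =
    ((Finset.Ioo p.val (prt π hπ p).val).filter (fun x => ¬ IsCPos n x)).card := by
  have hmem : ∀ x (hx : x ∈ (Finset.Ioo p.val (prt π hπ p).val)), x < 2 * n * m := by
    intro x hx
    rw [Finset.mem_Ioo] at hx
    exact lt_trans hx.2 (prt π hπ p).isLt
  refine Finset.card_bij'
    (fun x hx => (prt π hπ ⟨x, hmem x (Finset.mem_filter.mp hx).1⟩).val)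
    (fun x hx => (prt π hπ ⟨x, hmem x (Finset.mem_filter.mp hx).1⟩).val)
    ?_ ?_ ?_ ?_
  · intro x hx
    rw [Finset.mem_filter] at hx ⊢
    obtain ⟨hx1, hx2⟩ := hx
    rw [Finset.mem_Ioo] at hx1 ⊢
    set xf : Fin (2 * n * m) := ⟨x, hmem x ((Finset.mem_filter.mpr ⟨Finset.mem_Ioo.mpr hx1, hx2⟩ : x ∈ _) |> fun h => (Finset.mem_filter.mp h).1)⟩ with hxf
    have hb := prt_between π hπ (show p < xf from hx1.1) (show xf < prt π hπ p from hx1.2)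
    refine ⟨⟨hb.1, hb.2⟩, ?_⟩
    intro hcp
    exact ((cpos_prt π hπ xf).mp hx2) hcp
  · intro x hx
    rw [Finset.mem_filter] at hx ⊢
    obtain ⟨hx1, hx2⟩ := hx
    rw [Finset.mem_Ioo] at hx1 ⊢
    set xf : Fin (2 * n * m) := ⟨x, hmem x (Finset.mem_Ioo.mpr hx1)⟩ with hxf
    have hb := prt_between π hπ (show p < xf from hx1.1) (show xf < prt π hπ p from hx1.2)
    refine ⟨⟨hb.1, hb.2⟩, ?_⟩
    by_contra hcp
    exact hx2 ((cpos_prt π hπ xf).mpr (by simpa using hcp))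
  · intro x hx
    congr 1
    rw [Fin.eta]
    exact congrArg Fin.val (prt_prt π hπ _)
  · intro x hx
    congr 1
    rw [Fin.eta]
    exact congrArg Fin.val (prt_prt π hπ _)

lemma ht_pair (hn : 1 ≤ n) (p : Fin (2 * n * m)) (hlt : p < prt π hπ p) :
    NCAux.ht n (prt π hπ p).val = NCAux.ht n (p.val + 1) := by
  have hle : p.val + 1 ≤ (prt π hπ p).val := hlt
  have tele := NCAux.ht_teles n hn (prt π hπ p).val (p.val + 1) hle
  rw [tele, Finset.Ico_add_one_left_eq_Ioo]
  have hsum : ∑ x ∈ Finset.Ioo p.val (prt π hπ p).val,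
      (if IsCPos n x then (1 : ℤ) else -1) = 0 := by
    rw [Finset.sum_ite, Finset.sum_const, Finset.sum_const, counts_eq π hπ p hlt]
    simp
  rw [hsum, add_zero]

lemma label_lt (hn : 1 ≤ n) (p : Fin (2 * n * m)) (hlt : p < prt π hπ p) :
    posLabel n (prt π hπ p).val = posLabel n p.val := by
  have hq := ht_pair π hπ hn p hlt
  have hstep := NCAux.ht_step n hn p.val
  rw [hstep] at hq
  set q := (prt π hπ p).val with hqdef
  have hqn : q % n < n := Nat.mod_lt _ hn
  have hpn : p.val % n < n := Nat.mod_lt _ hn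
  have hpar := cpos_prt π hπ p
  by_cases hc : IsCPos n p.val
  · have hqc : ¬ IsCPos n q := hpar.mp hc
    rw [if_pos hc] at hq
    unfold NCAux.ht at hq
    unfold IsCPos at hc hqc
    rw [if_neg hqc, if_pos hc] at hq
    unfold posLabel
    rw [if_neg hqc, if_pos hc]
    omega
  · have hqc : IsCPos n q := by
      by_contra h
      exact hc (hpar.mpr h)
    rw [if_neg hc] at hq
    unfold NCAux.ht at hq
    unfold IsCPos at hc hqc
    rw [if_pos hqc, if_neg hc] at hq
    unfold posLabel
    rw [if_pos hqc, if_neg hc]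
    omega

lemma label_prt (hn : 1 ≤ n) (p : Fin (2 * n * m)) :
    posLabel n (prt π hπ p).val = posLabel n p.val := by
  rcases lt_or_gt_of_ne (prt_ne π hπ p) with h | h
  · have := label_lt π hπ hn (prt π hπ p) (by rw [prt_prt]; exact h)
    rw [prt_prt] at this
    exact this.symm
  · exact label_lt π hπ hn p h

end Pairing

section Index

variable {n m : ℕ} (h2 : 0 < 2 * n * m) (π : Setoid (Fin (2 * n * m)))
  (hπ : IsStarPairing n m π)

lemma cIdx_val (hn : 1 ≤ n) (k : Fin m) (j : ℕ) :
    (cIdx n m h2 (k.val + 1) j).val = 2 * k.val * n + (n - j) := by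
  show (2 * (k.val + 1 - 1) * n + (n - j)) % (2 * n * m) = _
  have hk : k.val + 1 ≤ m := k.isLt
  have h3 : n - j < 2 * n := by omega
  have h1 : 2 * (k.val + 1) * n ≤ 2 * m * n := Nat.mul_le_mul_right n (by omega)
  have hb : 2 * k.val * n + (n - j) < 2 * n * m := by
    calc 2 * k.val * n + (n - j) < 2 * k.val * n + 2 * n := Nat.add_lt_add_left h3 _
    _ = 2 * (k.val + 1) * n := by ring
    _ ≤ 2 * m * n := h1
    _ = 2 * n * m := by ring
  simp only [Nat.add_sub_cancel]
  exact Nat.mod_eq_of_lt hb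

lemma cstarIdx_val (hn : 1 ≤ n) (k : Fin m) {j : ℕ} (hj1 : 1 ≤ j) (hjn : j ≤ n) :
    (cstarIdx n m h2 (k.val + 1) j).val = 2 * k.val * n + (n + j - 1) := by
  obtain ⟨j', rfl⟩ : ∃ j', j = j' + 1 := ⟨j - 1, by omega⟩
  show ((2 * (k.val + 1) - 1) * n + (j' + 1 - 1)) % (2 * n * m) = _
  have hk : k.val + 1 ≤ m := k.isLt
  have e0 : 2 * (k.val + 1) - 1 = 2 * k.val + 1 := by omega
  have e1 : (2 * k.val + 1) * n + j' = 2 * k.val * n + (n + j') := by ring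
  have e2 : n + (j' + 1) - 1 = n + j' := by omega
  have h3 : n + j' < 2 * n := by omega
  have h1 : 2 * (k.val + 1) * n ≤ 2 * m * n := Nat.mul_le_mul_right n (by omega)
  have hb : 2 * k.val * n + (n + j') < 2 * n * m := by
    calc 2 * k.val * n + (n + j') < 2 * k.val * n + 2 * n := Nat.add_lt_add_left h3 _
    _ = 2 * (k.val + 1) * n := by ring
    _ ≤ 2 * m * n := h1
    _ = 2 * n * m := by ring
  rw [e0, Nat.add_sub_cancel, e1, e2]
  exact Nat.mod_eq_of_lt hb

lemma cIdx_cpos (hn : 1 ≤ n) (k : Fin m) {j : ℕ} (hj1 : 1 ≤ j) (hjn : j ≤ n) :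
    IsCPos n (cIdx n m h2 (k.val + 1) j).val := by
  unfold IsCPos
  rw [cIdx_val h2 hn k j]
  have e : 2 * k.val * n + (n - j) = n * (2 * k.val) + (n - j) := by ring
  rw [e, Nat.mul_add_div hn, Nat.div_eq_of_lt (by omega), Nat.add_zero, Nat.mul_mod_right]

lemma cIdx_label (hn : 1 ≤ n) (k : Fin m) {j : ℕ} (hj1 : 1 ≤ j) (hjn : j ≤ n) :
    posLabel n (cIdx n m h2 (k.val + 1) j).val = j := by
  unfold posLabel
  rw [cIdx_val h2 hn k j]
  have e : 2 * k.val * n + (n - j) = n * (2 * k.val) + (n - j) := by ring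
  have hd : (n * (2 * k.val) + (n - j)) / n = 2 * k.val := by
    rw [Nat.mul_add_div hn, Nat.div_eq_of_lt (by omega), Nat.add_zero]
  have hm2 : (n * (2 * k.val) + (n - j)) % n = n - j := by
    rw [Nat.mul_add_mod, Nat.mod_eq_of_lt (by omega)]
  rw [e, hd, hm2, if_pos (by omega : (2 * k.val) % 2 = 0)]
  omega

lemma cstarIdx_not_cpos (hn : 1 ≤ n) (k : Fin m) {j : ℕ} (hj1 : 1 ≤ j) (hjn : j ≤ n) :
    ¬ IsCPos n (cstarIdx n m h2 (k.val + 1) j).val := by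
  unfold IsCPos
  rw [cstarIdx_val h2 hn k hj1 hjn]
  have e : 2 * k.val * n + (n + j - 1) = n * (2 * k.val + 1) + (j - 1) := by
    obtain ⟨j', rfl⟩ : ∃ j', j = j' + 1 := ⟨j - 1, by omega⟩
    have e2 : n + (j' + 1) - 1 = n + j' := by omega
    have e3 : j' + 1 - 1 = j' := by omega
    rw [e2, e3]; ring
  have hd : (n * (2 * k.val + 1) + (j - 1)) / n = 2 * k.val + 1 := by
    rw [Nat.mul_add_div hn, Nat.div_eq_of_lt (by omega), Nat.add_zero]
  rw [e, hd]
  omega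

lemma cstarIdx_label (hn : 1 ≤ n) (k : Fin m) {j : ℕ} (hj1 : 1 ≤ j) (hjn : j ≤ n) :
    posLabel n (cstarIdx n m h2 (k.val + 1) j).val = j := by
  unfold posLabel
  rw [cstarIdx_val h2 hn k hj1 hjn]
  have e : 2 * k.val * n + (n + j - 1) = n * (2 * k.val + 1) + (j - 1) := by
    obtain ⟨j', rfl⟩ : ∃ j', j = j' + 1 := ⟨j - 1, by omega⟩
    have e2 : n + (j' + 1) - 1 = n + j' := by omega
    have e3 : j' + 1 - 1 = j' := by omega
    rw [e2, e3]; ring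
  have hd : (n * (2 * k.val + 1) + (j - 1)) / n = 2 * k.val + 1 := by
    rw [Nat.mul_add_div hn, Nat.div_eq_of_lt (by omega), Nat.add_zero]
  have hm2 : (n * (2 * k.val + 1) + (j - 1)) % n = j - 1 := by
    rw [Nat.mul_add_mod, Nat.mod_eq_of_lt (by omega)]
  rw [e, hd, hm2, if_neg (by omega : ¬ (2 * k.val + 1) % 2 = 0)]
  omega

lemma cIdx_inj (hn : 1 ≤ n) {k k' : Fin m} {j : ℕ}
    (h : cIdx n m h2 (k.val + 1) j = cIdx n m h2 (k'.val + 1) j) : k = k' := by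
  have hv := congrArg Fin.val h
  rw [cIdx_val h2 hn k j, cIdx_val h2 hn k' j] at hv
  have h3 := Nat.add_right_cancel hv
  have h4 : 2 * k.val = 2 * k'.val := Nat.eq_of_mul_eq_mul_right hn h3
  exact Fin.ext (by omega)

lemma cstarIdx_inj (hn : 1 ≤ n) {k k' : Fin m} {j : ℕ} (hj1 : 1 ≤ j) (hjn : j ≤ n)
    (h : cstarIdx n m h2 (k.val + 1) j = cstarIdx n m h2 (k'.val + 1) j) : k = k' := by
  have hv := congrArg Fin.val h
  rw [cstarIdx_val h2 hn k hj1 hjn, cstarIdx_val h2 hn k' hj1 hjn] at hv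
  have h3 := Nat.add_right_cancel hv
  have h4 : 2 * k.val = 2 * k'.val := Nat.eq_of_mul_eq_mul_right hn h3
  exact Fin.ext (by omega)

lemma cstarIdx_ne_cIdx (hn : 1 ≤ n) (k k' : Fin m) {j : ℕ} (hj1 : 1 ≤ j) (hjn : j ≤ n) :
    cstarIdx n m h2 (k'.val + 1) j ≠ cIdx n m h2 (k.val + 1) j := by
  intro h
  have hv := congrArg Fin.val h
  rw [cstarIdx_val h2 hn k' hj1 hjn, cIdx_val h2 hn k j] at hv
  exact NCAux.master_ne hn (show n + j - 1 < 2 * n by omega) (show n - j < 2 * n by omega)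
    (by omega) hv

lemma exists_partner (hn : 1 ≤ n) {j : ℕ} (hj1 : 1 ≤ j) (hjn : j ≤ n) (k : Fin m) :
    ∃ b : Fin m, prt π hπ (cIdx n m h2 (k.val + 1) j) = cstarIdx n m h2 (b.val + 1) j := by
  obtain ⟨j', rfl⟩ : ∃ j', j = j' + 1 := ⟨j - 1, by omega⟩
  set q := prt π hπ (cIdx n m h2 (k.val + 1) (j' + 1)) with hq
  have hqc : ¬ IsCPos n q.val := (cpos_prt π hπ _).mp (cIdx_cpos h2 hn k hj1 hjn)
  have hql : posLabel n q.val = j' + 1 :=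
    (label_prt π hπ hn _).trans (cIdx_label h2 hn k hj1 hjn)
  have hmod : q.val % n = j' := by
    unfold posLabel at hql
    unfold IsCPos at hqc
    rw [if_neg hqc] at hql
    omega
  have hodd : q.val / n % 2 = 1 := by unfold IsCPos at hqc; omega
  have hq2 : q.val < 2 * m * n := by
    rw [show 2 * m * n = 2 * n * m by ring]; exact q.isLt
  have hglt : q.val / n < 2 * m := (Nat.div_lt_iff_lt_mul hn).mpr hq2
  set g := q.val / n with hg
  have hb : g / 2 < m := by omega
  refine ⟨⟨g / 2, hb⟩, ?_⟩
  apply Fin.ext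
  rw [cstarIdx_val h2 hn _ hj1 hjn]
  have hqeq : n * g + q.val % n = q.val := Nat.div_add_mod q.val n
  have hgodd : g = 2 * (g / 2) + 1 := by omega
  have e2 : n * (2 * (g / 2) + 1) = 2 * (g / 2) * n + n := by ring
  have e3 : n * g = n * (2 * (g / 2) + 1) := by rw [← hgodd]
  have e4 : n + (j' + 1) - 1 = n + j' := by omega
  rw [e4]
  show q.val = 2 * (g / 2) * n + (n + j')
  linarith [hqeq, e2, e3, hmod]

noncomputable def Fmap (hn : 1 ≤ n) {j : ℕ} (hj1 : 1 ≤ j) (hjn : j ≤ n) (k : Fin m) :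
    Fin m :=
  (exists_partner h2 π hπ hn hj1 hjn k).choose

lemma Fmap_spec (hn : 1 ≤ n) {j : ℕ} (hj1 : 1 ≤ j) (hjn : j ≤ n) (k : Fin m) :
    prt π hπ (cIdx n m h2 (k.val + 1) j) =
      cstarIdx n m h2 ((Fmap h2 π hπ hn hj1 hjn k).val + 1) j :=
  (exists_partner h2 π hπ hn hj1 hjn k).choose_spec

lemma Fmap_inj (hn : 1 ≤ n) {j : ℕ} (hj1 : 1 ≤ j) (hjn : j ≤ n) :
    Function.Injective (Fmap h2 π hπ hn hj1 hjn) := by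
  intro a b h
  have ha := Fmap_spec h2 π hπ hn hj1 hjn a
  have hb := Fmap_spec h2 π hπ hn hj1 hjn b
  rw [h] at ha
  have := prt_inj π hπ (ha.trans hb.symm)
  exact cIdx_inj h2 hn this

noncomputable def Fperm (hn : 1 ≤ n) {j : ℕ} (hj1 : 1 ≤ j) (hjn : j ≤ n) :
    Equiv.Perm (Fin m) :=
  Equiv.ofBijective _ (Finite.injective_iff_bijective.mp (Fmap_inj h2 π hπ hn hj1 hjn))

lemma Fperm_apply (hn : 1 ≤ n) {j : ℕ} (hj1 : 1 ≤ j) (hjn : j ≤ n) (k : Fin m) :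
    Fperm h2 π hπ hn hj1 hjn k = Fmap h2 π hπ hn hj1 hjn k := rfl

lemma gen_iff (hn : 1 ≤ n) {j : ℕ} (hj1 : 1 ≤ j) (hjn : j ≤ n) (k k' : Fin m) :
    π.r (cIdx n m h2 (k.val + 1) j) (cstarIdx n m h2 (k'.val + 1) j) ↔
      k' = Fmap h2 π hπ hn hj1 hjn k := by
  constructor
  · intro h
    have hne := cstarIdx_ne_cIdx h2 hn k k' hj1 hjn
    have he := prt_eq_of π hπ _ _ hne h
    rw [Fmap_spec h2 π hπ hn hj1 hjn k] at he
    exact cstarIdx_inj h2 hn hj1 hjn he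
  · rintro rfl
    rw [← Fmap_spec h2 π hπ hn hj1 hjn k]
    exact prt_rel π hπ _

end Index

section Orbit

variable {m : ℕ} (σ : Equiv.Perm (Fin m)) (r : Fin m → Fin m → Prop)

lemma eqvGen_iff_pow (hr : ∀ a b, r a b ↔ b = σ a) (a b : Fin m) :
    Relation.EqvGen r a b ↔ ∃ i : ℕ, (σ ^ i) a = b := by
  constructor
  · intro h
    induction h with
    | rel x y hxy => exact ⟨1, by rw [pow_one]; exact ((hr x y).mp hxy).symm⟩
    | refl x => exact ⟨0, rfl⟩
    | symm x y _ ih =>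
      obtain ⟨i, hi⟩ := ih
      refine ⟨(orderOf σ - 1) * i, ?_⟩
      have hT : σ ^ orderOf σ = 1 := pow_orderOf_eq_one σ
      have hT1 : 1 ≤ orderOf σ := orderOf_pos σ
      have he : (orderOf σ - 1) * i + i = orderOf σ * i := by
        have h5 : 1 * i ≤ orderOf σ * i := Nat.mul_le_mul_right i hT1
        have h6 := Nat.sub_mul (orderOf σ) 1 i
        omega
      calc (σ ^ ((orderOf σ - 1) * i)) y
          = (σ ^ ((orderOf σ - 1) * i)) ((σ ^ i) x) := by rw [hi]
      _ = (σ ^ ((orderOf σ - 1) * i + i)) x := by rw [pow_add, Equiv.Perm.mul_apply]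
      _ = (σ ^ (orderOf σ * i)) x := by rw [he]
      _ = x := by rw [pow_mul, hT, one_pow, Equiv.Perm.one_apply]
    | trans x y z _ _ ih1 ih2 =>
      obtain ⟨i, hi⟩ := ih1
      obtain ⟨i2, hi2⟩ := ih2
      exact ⟨i2 + i, by rw [pow_add, Equiv.Perm.mul_apply, hi, hi2]⟩
  · rintro ⟨i, rfl⟩
    induction i with
    | zero => simpa using Relation.EqvGen.refl a
    | succ i ih =>
      have hst : r ((σ ^ i) a) ((σ ^ (i + 1)) a) := by
        rw [hr, pow_succ', Equiv.Perm.mul_apply]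
      exact Relation.EqvGen.trans _ _ _ ih (Relation.EqvGen.rel _ _ hst)

lemma escape (hr : ∀ a b, r a b ↔ b = σ a) (x y : Fin m) (hxy : x < y)
    (hmap : ∀ s, x < s → s ≤ y → x ≤ σ s ∧ σ s < y) :
    Relation.EqvGen r x y := by
  by_contra hno
  have hkey : ∀ i, x < (σ ^ i) y ∧ (σ ^ i) y ≤ y := by
    intro i
    induction i with
    | zero => simp only [pow_zero, Equiv.Perm.one_apply]; exact ⟨hxy, le_refl y⟩
    | succ i ih =>
      have he : (σ ^ (i + 1)) y = σ ((σ ^ i) y) := by rw [pow_succ', Equiv.Perm.mul_apply]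
      have h1 := hmap _ ih.1 ih.2
      refine ⟨?_, ?_⟩
      · rcases eq_or_lt_of_le h1.1 with h | h
        · exfalso
          apply hno
          have hE : Relation.EqvGen r y ((σ ^ (i + 1)) y) :=
            (eqvGen_iff_pow σ r hr y _).mpr ⟨i + 1, rfl⟩
          rw [he, ← h] at hE
          exact Relation.EqvGen.symm _ _ hE
        · rw [he]; exact h
      · rw [he]; exact le_of_lt h1.2
  have hT1 : 1 ≤ orderOf σ := orderOf_pos σ
  have hl := hkey (orderOf σ - 1)
  have h1 := hmap _ hl.1 hl.2
  have he : σ ((σ ^ (orderOf σ - 1)) y) = (σ ^ orderOf σ) y := by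
    rw [← Equiv.Perm.mul_apply, ← pow_succ']
    congr 2
    omega
  rw [he, pow_orderOf_eq_one, Equiv.Perm.one_apply] at h1
  exact absurd h1.2 (lt_irrefl y)

lemma span (hr : ∀ a b, r a b ↔ b = σ a) (a b c : Fin m) (hE : Relation.EqvGen r a b) (hac : a < c) (hcb : c < b)
    (hnc : ¬ Relation.EqvGen r a c) :
    ∃ t, Relation.EqvGen r a t ∧ t < c ∧ c < σ t := by
  obtain ⟨i, hi⟩ := (eqvGen_iff_pow σ r hr a b).mp hE
  have hcross : ∃ l, (σ ^ l) a < c ∧ ¬ ((σ ^ (l + 1)) a < c) := by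
    by_contra hno
    push_neg at hno
    have hall : ∀ l, (σ ^ l) a < c := by
      intro l
      induction l with
      | zero => simpa using hac
      | succ l ih => exact hno l ih
    have := hall i
    rw [hi] at this
    exact absurd hcb (not_lt.mpr (le_of_lt this))
  obtain ⟨l, hl1, hl2⟩ := hcross
  refine ⟨(σ ^ l) a, (eqvGen_iff_pow σ r hr a _).mpr ⟨l, rfl⟩, hl1, ?_⟩
  have hge : c ≤ (σ ^ (l + 1)) a := not_lt.mp hl2
  rcases eq_or_lt_of_le hge with h | h
  · exact absurd ((eqvGen_iff_pow σ r hr a c).mpr ⟨l + 1, h.symm⟩) hnc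
  · have he : (σ ^ (l + 1)) a = σ ((σ ^ l) a) := by rw [pow_succ', Equiv.Perm.mul_apply]
    rw [he] at h
    exact h

lemma trap (hr : ∀ a b, r a b ↔ b = σ a) (t c : Fin m)
    (hmap : ∀ s, t < s → s < σ t → ¬ Relation.EqvGen r t s → t < σ s ∧ σ s < σ t)
    (h1 : t < c) (hc2 : c < σ t) (hnc : ¬ Relation.EqvGen r t c) :
    ∀ k, Relation.EqvGen r c k → t < k ∧ k < σ t := by
  intro k hk
  obtain ⟨i, hi⟩ := (eqvGen_iff_pow σ r hr c k).mp hk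
  subst hi
  clear hk
  induction i with
  | zero => simp only [pow_zero, Equiv.Perm.one_apply]; exact ⟨h1, hc2⟩
  | succ i ih =>
    have hnE : ¬ Relation.EqvGen r t ((σ ^ i) c) := by
      intro h
      exact hnc (Relation.EqvGen.trans _ _ _ h
        (Relation.EqvGen.symm _ _ ((eqvGen_iff_pow σ r hr c _).mpr ⟨i, rfl⟩)))
    have hm2 := hmap _ ih.1 ih.2 hnE
    have he : (σ ^ (i + 1)) c = σ ((σ ^ i) c) := by rw [pow_succ', Equiv.Perm.mul_apply]
    rw [he]
    exact hm2

end Orbit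

section MapLemmas

variable {n m : ℕ} (h2 : 0 < 2 * n * m) (π : Setoid (Fin (2 * n * m)))
  (hπ : IsStarPairing n m π)

lemma map_up (hn : 1 ≤ n) {j j' : ℕ} (hj1 : 1 ≤ j) (hjj' : j ≤ j') (hj'1 : 1 ≤ j')
    (hj'n : j' ≤ n) {a b : Fin m}
    (hpair : prt π hπ (cIdx n m h2 (a.val + 1) j) = cstarIdx n m h2 (b.val + 1) j)
    (hab : a ≤ b) (s : Fin m) (hs1 : a < s) (hs2 : s ≤ b) :
    a ≤ Fmap h2 π hπ hn hj'1 hj'n s ∧ Fmap h2 π hπ hn hj'1 hj'n s < b := by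
  have hjn : j ≤ n := le_trans hjj' hj'n
  have ho1 : n - j < 2 * n := by omega
  have ho2 : n + j - 1 < 2 * n := by omega
  have ho3 : n - j' < 2 * n := by omega
  have ho4 : n + j' - 1 < 2 * n := by omega
  have hx1 : cIdx n m h2 (a.val + 1) j < cIdx n m h2 (s.val + 1) j' := by
    rw [Fin.lt_def, cIdx_val h2 hn a j, cIdx_val h2 hn s j']
    exact (NCAux.master hn ho1 ho3).mpr (Or.inl hs1)
  have hx2 : cIdx n m h2 (s.val + 1) j' < cstarIdx n m h2 (b.val + 1) j := by
    rw [Fin.lt_def, cIdx_val h2 hn s j', cstarIdx_val h2 hn b hj1 hjn]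
    refine (NCAux.master hn ho3 ho2).mpr ?_
    rcases eq_or_lt_of_le hs2 with h | h
    · exact Or.inr ⟨congrArg Fin.val h, by omega⟩
    · exact Or.inl h
  have hbet := prt_between π hπ hx1 (by rw [hpair]; exact hx2)
  rw [Fmap_spec h2 π hπ hn hj'1 hj'n s, hpair] at hbet
  constructor
  · have hb1 := hbet.1
    rw [Fin.lt_def, cIdx_val h2 hn a j, cstarIdx_val h2 hn _ hj'1 hj'n] at hb1
    have hidx := (NCAux.master hn ho1 ho4).mp hb1
    rw [Fin.le_def]
    rcases hidx with h | h
    · exact le_of_lt h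
    · exact le_of_eq h.1
  · have hb2 := hbet.2
    rw [Fin.lt_def, cstarIdx_val h2 hn _ hj'1 hj'n, cstarIdx_val h2 hn b hj1 hjn] at hb2
    have hidx := (NCAux.master hn ho4 ho2).mp hb2
    rcases hidx with h | h
    · exact h
    · exfalso; omega

lemma map_down (hn : 1 ≤ n) {j j' : ℕ} (hj1 : 1 ≤ j) (hjj' : j ≤ j') (hj'1 : 1 ≤ j')
    (hj'n : j' ≤ n) {a b : Fin m}
    (hpair : prt π hπ (cIdx n m h2 (a.val + 1) j) = cstarIdx n m h2 (b.val + 1) j)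
    (hba : b < a) (s : Fin m) (hs1 : b < s)
    (hs2 : s.val < a.val ∨ (s.val = a.val ∧ j < j')) :
    b ≤ Fmap h2 π hπ hn hj'1 hj'n s ∧ Fmap h2 π hπ hn hj'1 hj'n s < a := by
  have hjn : j ≤ n := le_trans hjj' hj'n
  have ho1 : n - j < 2 * n := by omega
  have ho2 : n + j - 1 < 2 * n := by omega
  have ho3 : n - j' < 2 * n := by omega
  have ho4 : n + j' - 1 < 2 * n := by omega
  have hp2 : prt π hπ (cstarIdx n m h2 (b.val + 1) j) = cIdx n m h2 (a.val + 1) j := by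
    rw [← hpair, prt_prt]
  have hx1 : cstarIdx n m h2 (b.val + 1) j < cIdx n m h2 (s.val + 1) j' := by
    rw [Fin.lt_def, cstarIdx_val h2 hn b hj1 hjn, cIdx_val h2 hn s j']
    exact (NCAux.master hn ho2 ho3).mpr (Or.inl hs1)
  have hx2 : cIdx n m h2 (s.val + 1) j' < cIdx n m h2 (a.val + 1) j := by
    rw [Fin.lt_def, cIdx_val h2 hn s j', cIdx_val h2 hn a j]
    refine (NCAux.master hn ho3 ho1).mpr ?_
    rcases hs2 with h | h
    · exact Or.inl h
    · exact Or.inr ⟨h.1, by omega⟩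
  have hbet := prt_between π hπ hx1 (by rw [hp2]; exact hx2)
  rw [Fmap_spec h2 π hπ hn hj'1 hj'n s, hp2] at hbet
  constructor
  · have hb1 := hbet.1
    rw [Fin.lt_def, cstarIdx_val h2 hn b hj1 hjn, cstarIdx_val h2 hn _ hj'1 hj'n] at hb1
    have hidx := (NCAux.master hn ho2 ho4).mp hb1
    rw [Fin.le_def]
    rcases hidx with h | h
    · exact le_of_lt h
    · exact le_of_eq h.1
  · have hb2 := hbet.2
    rw [Fin.lt_def, cstarIdx_val h2 hn _ hj'1 hj'n, cIdx_val h2 hn a j] at hb2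
    have hidx := (NCAux.master hn ho4 ho1).mp hb2
    rcases hidx with h | h
    · exact h
    · exfalso; omega

end MapLemmas


/-- For `π ∈ NC₂*(n,m)`, each `Φ^π_j` (for `1 ≤ j ≤ n`) is a noncrossing partition of
`{1,…,m}`, and `Φ^π_1 ≤ Φ^π_2 ≤ ⋯ ≤ Φ^π_n` in the reverse-refinement order. -/
theorem phiRel_noncrossing_multichain (n m : ℕ) (hn : 1 ≤ n) (hm : 1 ≤ m)
    (h2 : 0 < 2 * n * m)
    (π : Setoid (Fin (2 * n * m))) (hπ : IsStarPairing n m π) :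
    (∀ j, 1 ≤ j → j ≤ n → IsNoncrossing (PhiRel n m h2 π j)) ∧
    (∀ j, 1 ≤ j → j < n → PhiRel n m h2 π j ≤ PhiRel n m h2 π (j + 1)) := by
  constructor
  · -- noncrossing
    intro j hj1 hjn
    set r : Fin m → Fin m → Prop := fun k k' =>
      π.r (cIdx n m h2 (k.val + 1) j) (cstarIdx n m h2 (k'.val + 1) j) with hrdef
    obtain ⟨σ, hσ⟩ : ∃ σ : Equiv.Perm (Fin m),
        ∀ k, σ k = Fmap h2 π hπ hn hj1 hjn k :=
      ⟨Fperm h2 π hπ hn hj1 hjn, fun k => rfl⟩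
    have hr : ∀ a b : Fin m, r a b ↔ b = σ a := by
      intro a b
      rw [hσ a]
      exact gen_iff h2 π hπ hn hj1 hjn a b
    have hmaps : ∀ t : Fin m, t < σ t → ∀ s, t < s → s < σ t →
        ¬ Relation.EqvGen r t s → t < σ s ∧ σ s < σ t := by
      intro t htσ s hs1 hs2 hnE
      rw [hσ t] at htσ hs2 ⊢
      rw [hσ s]
      have hpair : prt π hπ (cIdx n m h2 (t.val + 1) j) =
          cstarIdx n m h2 ((Fmap h2 π hπ hn hj1 hjn t).val + 1) j :=
        Fmap_spec h2 π hπ hn hj1 hjn t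
      have h := map_up h2 π hπ hn hj1 (le_refl j) hj1 hjn hpair (le_of_lt htσ) s hs1
        (le_of_lt hs2)
      rcases eq_or_lt_of_le h.1 with he | hlt
      · exfalso
        apply hnE
        have hrel : r s t := by
          rw [hr s t, hσ s]
          exact he
        exact Relation.EqvGen.symm _ _ (Relation.EqvGen.rel _ _ hrel)
      · exact ⟨hlt, h.2⟩
    rintro ⟨k1, k2, k3, k4, h12, h23, h34, E13, E24, nE12⟩
    have E13' : Relation.EqvGen r k1 k3 := E13
    have E24' : Relation.EqvGen r k2 k4 := E24
    have nE12' : ¬ Relation.EqvGen r k1 k2 := nE12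
    obtain ⟨t, Et, ht1, ht2⟩ := span σ r hr k1 k3 k2 E13' h12 h23 nE12'
    have htσ : t < σ t := lt_trans ht1 ht2
    have hnE_tk2 : ¬ Relation.EqvGen r t k2 := fun h =>
      nE12' (Relation.EqvGen.trans _ _ _ Et h)
    have trap1 := trap σ r hr t k2 (hmaps t htσ) ht1 ht2 hnE_tk2
    have hk4 := trap1 k4 E24'
    have nE23 : ¬ Relation.EqvGen r k2 k3 := fun h =>
      nE12' (Relation.EqvGen.trans _ _ _ E13' (Relation.EqvGen.symm _ _ h))
    obtain ⟨t', Et', ht1', ht2'⟩ := span σ r hr k2 k4 k3 E24' h23 h34 nE23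
    have ht'b := trap1 t' Et'
    have ht'σ : t' < σ t' := lt_trans ht1' ht2'
    have hnE_t'k3 : ¬ Relation.EqvGen r t' k3 := fun h =>
      nE23 (Relation.EqvGen.trans _ _ _ Et' h)
    have trap2 := trap σ r hr t' k3 (hmaps t' ht'σ) ht1' ht2' hnE_t'k3
    have hEk3t : Relation.EqvGen r k3 t :=
      Relation.EqvGen.trans _ _ _ (Relation.EqvGen.symm _ _ E13') Et
    have hlt := (trap2 t hEk3t).1
    exact absurd hlt (not_lt.mpr (le_of_lt ht'b.1))
  · -- chain
    intro j hj1 hjn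
    have hjn' : j ≤ n := le_of_lt hjn
    have hj'1 : 1 ≤ j + 1 := by omega
    have hj'n : j + 1 ≤ n := hjn
    set r' : Fin m → Fin m → Prop := fun k k' =>
      π.r (cIdx n m h2 (k.val + 1) (j + 1)) (cstarIdx n m h2 (k'.val + 1) (j + 1))
      with hr'def
    obtain ⟨σ', hσ'⟩ : ∃ σ : Equiv.Perm (Fin m),
        ∀ k, σ k = Fmap h2 π hπ hn hj'1 hj'n k :=
      ⟨Fperm h2 π hπ hn hj'1 hj'n, fun k => rfl⟩
    have hr' : ∀ a b : Fin m, r' a b ↔ b = σ' a := by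
      intro a b
      rw [hσ' a]
      exact gen_iff h2 π hπ hn hj'1 hj'n a b
    refine Setoid.le_def.mpr ?_
    intro x y hxy
    have hxy' : Relation.EqvGen (fun k k' : Fin m =>
      π.r (cIdx n m h2 (k.val + 1) j) (cstarIdx n m h2 (k'.val + 1) j)) x y := hxy
    show Relation.EqvGen r' x y
    clear hxy
    induction hxy' with
    | rel a b hab =>
      have hb : b = Fmap h2 π hπ hn hj1 hjn' a := (gen_iff h2 π hπ hn hj1 hjn' a b).mp hab
      have hpair : prt π hπ (cIdx n m h2 (a.val + 1) j) =
          cstarIdx n m h2 (b.val + 1) j := by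
        rw [hb]; exact Fmap_spec h2 π hπ hn hj1 hjn' a
      rcases lt_trichotomy a b with hab2 | heq | hba
      · refine escape σ' r' hr' a b hab2 ?_
        intro s hs1 hs2
        have h := map_up h2 π hπ hn hj1 (by omega) hj'1 hj'n hpair (le_of_lt hab2) s hs1 hs2
        rw [hσ' s]
        exact h
      · rw [heq]; exact Relation.EqvGen.refl b
      · refine Relation.EqvGen.symm _ _ (escape σ' r' hr' b a hba ?_)
        intro s hs1 hs2
        rw [hσ' s]
        refine map_down h2 π hπ hn hj1 (by omega) hj'1 hj'n hpair hba s hs1 ?_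
        rcases eq_or_lt_of_le hs2 with h | h
        · exact Or.inr ⟨congrArg Fin.val h, by omega⟩
        · exact Or.inl h
    | refl a => exact Relation.EqvGen.refl a
    | symm a b _ ih => exact Relation.EqvGen.symm _ _ ih
    | trans a b c _ _ ih1 ih2 => exact Relation.EqvGen.trans _ _ _ ih1 ih2
end

section
/- Let n, m ≥ 1 and let Φ₁ ≤ Φ₂ ≤ ⋯ ≤ Φₙ be a multichain of noncrossing partitions of {1,…,m} (each Φⱼ noncrossing and every block of Φⱼ contained in a block of Φ_{j+1}). Define a pair partition π of {0,…,2nm−1} as follows: for each 1 ≤ j ≤ n and each block V = {k₁ < k₂ < ⋯ < k_r} of Φⱼ, π contains the pairs {c(k₁,j), c∗(k_r,j)} and {c(k_{i+1},j), c∗(k_i,j)} for 1 ≤ i ≤ r−1. Then π ∈ NC₂*(n,m), i.e. π is a noncrossing pair partition each of whose blocks contains exactly one c-position and one c∗-position. -/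
/-- `k'` is the cyclic predecessor of `k` in its block of `Φ`: either `k'` is the
largest element of the block strictly below `k`, or `k` is the minimum of its block
and `k'` is its maximum. For a block `{k₁ < ⋯ < k_r}` this sends `k₁ ↦ k_r` and
`k_{i+1} ↦ k_i`. -/
def CycPred {m : ℕ} (Φ : Setoid (Fin m)) (k k' : Fin m) : Prop :=
  Φ.r k k' ∧
    ((k' < k ∧ ∀ l, Φ.r k l → l < k → l ≤ k') ∨
      ((∀ l, Φ.r k l → k ≤ l) ∧ (∀ l, Φ.r k l → l ≤ k')))

/-- The pairs of the pairing `Q(Φ₁,…,Φₙ)`: for each `j` and each block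
`V = {k₁ < ⋯ < k_r}` of `Φⱼ`, the pairs `{c(k₁,j), c∗(k_r,j)}` and
`{c(k_{i+1},j), c∗(k_i,j)}`. Here `j : Fin n` stands for label `j+1` and
`k : Fin m` for the element `k+1` of `{1,…,m}`. -/
def QRel (n m : ℕ) (h : 0 < 2 * n * m) (Φ : Fin n → Setoid (Fin m)) :
    Fin (2 * n * m) → Fin (2 * n * m) → Prop :=
  fun p q => ∃ (j : Fin n) (k k' : Fin m), CycPred (Φ j) k k' ∧
    p = cIdx n m h (k.val + 1) (j.val + 1) ∧ q = cstarIdx n m h (k'.val + 1) (j.val + 1)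

/-- The pair partition `Q(Φ₁,…,Φₙ)` generated by the pairs of `QRel`. -/
def QMap (n m : ℕ) (h : 0 < 2 * n * m) (Φ : Fin n → Setoid (Fin m)) :
    Setoid (Fin (2 * n * m)) :=
  Relation.EqvGen.setoid (QRel n m h Φ)

/-!
Order the positions lexicographically by the point `k` of `{1,…,m}` they sit at and a signed
label: `c(k,j)` comes just before `k` at depth `j`, `c∗(k,j)` just after it. A pair
`{c(b,j), c∗(a,j)}`, with `a` the cyclic predecessor of `b` in `Φⱼ`, is an arc, and a position of
label at most `j` lies strictly under it exactly when its point lies in `Ioo a b` (if `a < b`) or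
in `Icc b a` (if `b` and `a` are the minimum and maximum of their block). Since `Φⱼ` is
noncrossing, that region is a union of blocks of `Φⱼ`. If two arcs crossed, the one with the
smaller label `i ≤ j` would join two points related in `Φᵢ ≤ Φⱼ` lying on either side of the
region of the other. Every position is a `c`- or a `c∗`-position and the cyclic predecessor is a
bijection on each block, so the arcs form a pairing.
-/

theorem Nat.mul_add_lt_mul_add_iff {n a b r s : ℕ} (hr : r < n) (hs : s < n) :
    a * n + r < b * n + s ↔ a < b ∨ a = b ∧ r < s := by
  constructor
  · intro h
    rcases lt_trichotomy a b with hab | rfl | hab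
    · exact Or.inl hab
    · exact Or.inr ⟨rfl, by omega⟩
    · nlinarith [Nat.mul_le_mul_right n (Nat.succ_le_of_lt hab)]
  · rintro (hab | ⟨rfl, hrs⟩)
    · nlinarith [Nat.mul_le_mul_right n (Nat.succ_le_of_lt hab)]
    · omega

section Matching

variable {α : Type*} {R : α → α → Prop}

theorem eqvGen_iff_of_unique (hr : Relator.RightUnique R) (hl : Relator.LeftUnique R)
    (hchain : ∀ a b c, R a b → ¬ R b c) {a b : α} :
    Relation.EqvGen R a b ↔ a = b ∨ R a b ∨ R b a := by
  refine ⟨fun h => ?_, ?_⟩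
  · induction h with
    | rel x y hxy => exact Or.inr (Or.inl hxy)
    | refl x => exact Or.inl rfl
    | symm x y _ ih =>
      rcases ih with rfl | hxy | hyx
      exacts [Or.inl rfl, Or.inr (Or.inr hxy), Or.inr (Or.inl hyx)]
    | trans x y z _ _ ih₁ ih₂ =>
      rcases ih₁ with rfl | hxy | hyx
      · exact ih₂
      · rcases ih₂ with rfl | hyz | hzy
        exacts [Or.inr (Or.inl hxy), (hchain _ _ _ hxy hyz).elim, Or.inl (hl hxy hzy)]
      · rcases ih₂ with rfl | hyz | hzy
        exacts [Or.inr (Or.inr hyx), Or.inl (hr hyx hyz), (hchain _ _ _ hzy hyx).elim]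
  · rintro (rfl | h | h)
    exacts [Relation.EqvGen.refl a, Relation.EqvGen.rel _ _ h,
      Relation.EqvGen.symm _ _ (Relation.EqvGen.rel _ _ h)]

theorem existsUnique_ne_eqvGen (hr : Relator.RightUnique R) (hl : Relator.LeftUnique R)
    (hchain : ∀ a b c, R a b → ¬ R b c) (htotal : ∀ a, ∃ b, R a b ∨ R b a) (a : α) :
    ∃! b, b ≠ a ∧ Relation.EqvGen R a b := by
  have hirrefl : ∀ c, ¬ R c c := fun c hc => hchain c c c hc hc
  obtain ⟨b, hab⟩ := htotal a
  refine ⟨b, ⟨?_, (eqvGen_iff_of_unique hr hl hchain).mpr (Or.inr hab)⟩, ?_⟩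
  · rintro rfl
    exact hab.elim (hirrefl b) (hirrefl b)
  · rintro c ⟨hca, hac⟩
    rcases (eqvGen_iff_of_unique hr hl hchain).mp hac with rfl | hac | hca'
    · exact absurd rfl hca
    · rcases hab with hab | hba
      exacts [hr hac hab, (hchain _ _ _ hba hac).elim]
    · rcases hab with hab | hba
      exacts [(hchain _ _ _ hca' hab).elim, hl hca' hba]

end Matching

section Noncrossing

variable {N : ℕ} {τ : Setoid (Fin N)}

theorem IsNoncrossing.rel_of_lt {p q p' q' : Fin N} (hτ : IsNoncrossing τ) (hpq : p < q)
    (hqp' : q < p') (hp'q' : p' < q') (hpp' : τ.r p p') (hqq' : τ.r q q') : τ.r p q := by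
  by_contra h
  exact hτ ⟨p, q, p', q', hpq, hqp', hp'q', hpp', hqq', h⟩

theorem IsNoncrossing.rel_left_of_mem_Ioo {a b x y : Fin N} (hτ : IsNoncrossing τ)
    (hab : τ.r a b) (hx : x ∈ Set.Ioo a b) (hxy : τ.r x y) (hy : y ∉ Set.Icc a b) :
    τ.r x a := by
  have hy' : y < a ∨ b < y := by simpa only [Set.mem_Icc, not_and_or, not_le] using hy
  rcases hy' with hya | hby
  · exact τ.trans hxy (hτ.rel_of_lt hya hx.1 hx.2 (τ.symm hxy) hab)
  · exact τ.symm (hτ.rel_of_lt hx.1 hx.2 hby hab hxy)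

end Noncrossing

section CycPred

variable {m : ℕ} {σ : Setoid (Fin m)}

theorem cycPred_leftTotal (σ : Setoid (Fin m)) : Relator.LeftTotal (CycPred σ) := by
  classical
  intro k
  by_cases hbelow : ∃ l, σ.r k l ∧ l < k
  · set S := Finset.univ.filter fun l => σ.r k l ∧ l < k
    have hne : S.Nonempty := hbelow.imp fun l hl => Finset.mem_filter.mpr ⟨Finset.mem_univ l, hl⟩
    obtain ⟨-, hrel, hlt⟩ := Finset.mem_filter.mp (S.max'_mem hne)
    exact ⟨_, hrel, Or.inl ⟨hlt, fun l hl hlk =>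
      S.le_max' l (Finset.mem_filter.mpr ⟨Finset.mem_univ l, hl, hlk⟩)⟩⟩
  · push Not at hbelow
    set S := Finset.univ.filter fun l => σ.r k l
    have hne : S.Nonempty := ⟨k, Finset.mem_filter.mpr ⟨Finset.mem_univ k, σ.refl k⟩⟩
    obtain ⟨-, hrel⟩ := Finset.mem_filter.mp (S.max'_mem hne)
    exact ⟨_, hrel, Or.inr ⟨hbelow, fun l hl =>
      S.le_max' l (Finset.mem_filter.mpr ⟨Finset.mem_univ l, hl⟩)⟩⟩

theorem cycPred_rightUnique : Relator.RightUnique (CycPred σ) := by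
  rintro k k' k'' ⟨hr', ⟨hlt', hmax'⟩ | ⟨hmin', hmax'⟩⟩ ⟨hr'', ⟨hlt'', hmax''⟩ | ⟨hmin'', hmax''⟩⟩
  · exact le_antisymm (hmax'' k' hr' hlt') (hmax' k'' hr'' hlt'')
  · exact absurd (hmin'' k' hr') (not_le.mpr hlt')
  · exact absurd (hmin' k'' hr'') (not_le.mpr hlt'')
  · exact le_antisymm (hmax'' k' hr') (hmax' k'' hr'')

theorem cycPred_leftUnique : Relator.LeftUnique (CycPred σ) := by
  rintro k₁ k₂ k' ⟨hr₁, ⟨hlt₁, hmax₁⟩ | ⟨hmin₁, hmax₁⟩⟩ ⟨hr₂, ⟨hlt₂, hmax₂⟩ | ⟨hmin₂, hmax₂⟩⟩ <;>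
    have h₁₂ : σ.r k₁ k₂ := σ.trans hr₁ (σ.symm hr₂)
  · by_contra hne
    rcases lt_or_gt_of_ne hne with h | h
    · exact absurd (hmax₂ k₁ (σ.symm h₁₂) h) (not_le.mpr hlt₁)
    · exact absurd (hmax₁ k₂ h₁₂ h) (not_le.mpr hlt₂)
  · exact absurd (hmax₂ k₁ (σ.symm h₁₂)) (not_le.mpr hlt₁)
  · exact absurd (hmax₁ k₂ h₁₂) (not_le.mpr hlt₂)
  · exact le_antisymm (hmin₁ k₂ h₁₂) (hmin₂ k₁ (σ.symm h₁₂))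

theorem cycPred_rightTotal (σ : Setoid (Fin m)) : Relator.RightTotal (CycPred σ) := by
  choose f hf using cycPred_leftTotal σ
  have hinj : Function.Injective f := fun k₁ k₂ h => cycPred_leftUnique (hf k₁) (h ▸ hf k₂)
  intro k'
  obtain ⟨k, rfl⟩ := Finite.injective_iff_surjective.mp hinj k'
  exact ⟨k, hf k⟩

/-- The points whose positions lie under the arc `{c(b,j), c∗(a,j)}` when `a` is the cyclic
predecessor of `b` (see `mem_uIoo_iff_mem_arcRegion`). -/
def arcRegion {α : Type*} [LinearOrder α] (b a : α) : Set α :=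
  if a < b then Set.Ioo a b else Set.Icc b a

theorem CycPred.mem_arcRegion_of_rel {τ : Setoid (Fin m)} (hτ : IsNoncrossing τ)
    {b a x y : Fin m} (hba : CycPred τ b a) (hx : x ∈ arcRegion b a) (hxy : τ.r x y) :
    y ∈ arcRegion b a := by
  obtain ⟨hrel, ⟨hab, hmax⟩ | ⟨hmin, hmax⟩⟩ := hba
  · rw [arcRegion, if_pos hab] at hx ⊢
    by_contra hy
    suffices hxb : τ.r x b from absurd (hmax x (τ.symm hxb) hx.2) (not_le.mpr hx.1)
    by_cases hyI : y ∈ Set.Icc a b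
    · rcases eq_or_lt_of_le hyI.1 with rfl | hay
      · exact τ.trans hxy (τ.symm hrel)
      rcases eq_or_lt_of_le hyI.2 with rfl | hyb
      · exact hxy
      exact absurd ⟨hay, hyb⟩ hy
    · exact τ.trans (hτ.rel_left_of_mem_Ioo (τ.symm hrel) hx hxy hyI) (τ.symm hrel)
  · rw [arcRegion, if_neg (not_lt.mpr (hmin a hrel))] at hx ⊢
    by_contra hy
    suffices hby : τ.r b y from hy ⟨hmin y hby, hmax y hby⟩
    rcases eq_or_lt_of_le hx.1 with rfl | hbx
    · exact hxy
    rcases eq_or_lt_of_le hx.2 with rfl | hxa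
    · exact τ.trans hrel hxy
    exact τ.trans (τ.symm (hτ.rel_left_of_mem_Ioo hrel ⟨hbx, hxa⟩ hxy hy)) hxy

end CycPred

/-- `cPos n k j` and `cstarPos n k j` are the positions `c(k+1, j+1)` and `c∗(k+1, j+1)`:
points and labels are indexed from `0` here. -/
def cPos (n k j : ℕ) : ℕ := 2 * k * n + (n - 1 - j)

def cstarPos (n k j : ℕ) : ℕ := (2 * k + 1) * n + j

section positions

variable {n k k' j j' : ℕ}

theorem cPos_lt_cPos_iff (hj : j < n) (hj' : j' < n) :
    cPos n k j < cPos n k' j' ↔ k < k' ∨ k = k' ∧ j' < j := by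
  rw [cPos, cPos, Nat.mul_add_lt_mul_add_iff (by omega) (by omega)]
  omega

theorem cstarPos_lt_cstarPos_iff (hj : j < n) (hj' : j' < n) :
    cstarPos n k j < cstarPos n k' j' ↔ k < k' ∨ k = k' ∧ j < j' := by
  rw [cstarPos, cstarPos, Nat.mul_add_lt_mul_add_iff hj hj']
  omega

theorem cPos_lt_cstarPos_iff (hj : j < n) (hj' : j' < n) :
    cPos n k j < cstarPos n k' j' ↔ k ≤ k' := by
  rw [cPos, cstarPos, Nat.mul_add_lt_mul_add_iff (by omega) hj']
  omega

theorem cstarPos_lt_cPos_iff (hj : j < n) (hj' : j' < n) :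
    cstarPos n k j < cPos n k' j' ↔ k < k' := by
  rw [cPos, cstarPos, Nat.mul_add_lt_mul_add_iff hj (by omega)]
  omega

theorem cPos_inj (hj : j < n) (hj' : j' < n) :
    cPos n k j = cPos n k' j' ↔ k = k' ∧ j = j' := by
  refine ⟨fun h => ?_, fun ⟨hk, hj⟩ => hk ▸ hj ▸ rfl⟩
  have h₁ := (cPos_lt_cPos_iff hj hj').not.mp h.not_lt
  have h₂ := (cPos_lt_cPos_iff hj' hj).not.mp h.not_gt
  omega

theorem cstarPos_inj (hj : j < n) (hj' : j' < n) :
    cstarPos n k j = cstarPos n k' j' ↔ k = k' ∧ j = j' := by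
  refine ⟨fun h => ?_, fun ⟨hk, hj⟩ => hk ▸ hj ▸ rfl⟩
  have h₁ := (cstarPos_lt_cstarPos_iff hj hj').not.mp h.not_lt
  have h₂ := (cstarPos_lt_cstarPos_iff hj' hj).not.mp h.not_gt
  omega

theorem cPos_ne_cstarPos (hj : j < n) (hj' : j' < n) : cPos n k j ≠ cstarPos n k' j' := by
  intro h
  have h₁ := (cPos_lt_cstarPos_iff hj hj').not.mp h.not_lt
  have h₂ := (cstarPos_lt_cPos_iff hj' hj).not.mp h.not_gt
  omega

theorem isCPos_cPos (hj : j < n) : IsCPos n (cPos n k j) := by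
  have : cPos n k j / n = 2 * k := Nat.div_eq_of_lt_le (by unfold cPos; omega)
    (by unfold cPos; ring_nf; omega)
  simp [IsCPos, this]

theorem not_isCPos_cstarPos (hj : j < n) : ¬ IsCPos n (cstarPos n k j) := by
  have : cstarPos n k j / n = 2 * k + 1 := Nat.div_eq_of_lt_le (by unfold cstarPos; omega)
    (by unfold cstarPos; ring_nf; omega)
  simp [IsCPos, this]

end positions

def IsArc (n j b a x y : ℕ) : Prop :=
  x = cPos n b j ∧ y = cstarPos n a j ∨ x = cstarPos n a j ∧ y = cPos n b j

theorem IsArc.symm {n j b a x y : ℕ} (h : IsArc n j b a x y) : IsArc n j b a y x :=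
  (h.imp And.symm And.symm).symm

theorem mem_uIoo_iff_mem_arcRegion {n m j j' : ℕ} (hj : j ≤ j') (hj' : j' < n) {k b a : Fin m}
    {z : ℕ} (hz : z = cPos n k j ∨ z = cstarPos n k j) (hzb : z ≠ cPos n b j')
    (hza : z ≠ cstarPos n a j') :
    z ∈ Set.uIoo (cPos n b j') (cstarPos n a j') ↔ k ∈ arcRegion b a := by
  have hjn : j < n := by omega
  have hb := Nat.lt_or_gt_of_ne hzb
  have ha := Nat.lt_or_gt_of_ne hza
  unfold arcRegion
  split_ifs with hab
  · rw [Set.uIoo_of_gt ((cstarPos_lt_cPos_iff hj' hj').2 hab)]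
    rcases hz with rfl | rfl <;>
      simp only [Set.mem_Ioo, Fin.lt_def, cPos_lt_cPos_iff, cstarPos_lt_cstarPos_iff,
        cPos_lt_cstarPos_iff, cstarPos_lt_cPos_iff, hjn, hj'] at hb ha hab ⊢ <;> omega
  · rw [Set.uIoo_of_lt ((cPos_lt_cstarPos_iff hj' hj').2 (Fin.le_def.mp (not_lt.mp hab)))]
    rcases hz with rfl | rfl <;>
      simp only [Set.mem_Ioo, Set.mem_Icc, Fin.lt_def, Fin.le_def, cPos_lt_cPos_iff,
        cstarPos_lt_cstarPos_iff, cPos_lt_cstarPos_iff, cstarPos_lt_cPos_iff, hjn, hj']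
        at hb ha hab ⊢ <;> omega

theorem not_separated_by_arc {m n j j' : ℕ} {σ τ : Setoid (Fin m)} (hστ : σ ≤ τ)
    (hτ : IsNoncrossing τ) (hj : j ≤ j') (hj' : j' < n) {b a b' a' : Fin m}
    (hba : CycPred τ b a) (hb'a' : σ.r b' a') {x y z w : ℕ} (hxy : IsArc n j' b a x y)
    (hzw : IsArc n j b' a' z w) (hz : z ∈ Set.uIoo x y) (hw : w ∉ Set.uIcc x y) : False := by
  have hIoo : Set.uIoo x y = Set.uIoo (cPos n b j') (cstarPos n a j') := by
    rcases hxy with ⟨rfl, rfl⟩ | ⟨rfl, rfl⟩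
    exacts [rfl, Set.uIoo_comm _ _]
  have hIcc : Set.uIcc x y = Set.uIcc (cPos n b j') (cstarPos n a j') := by
    rcases hxy with ⟨rfl, rfl⟩ | ⟨rfl, rfl⟩
    exacts [rfl, Set.uIcc_comm _ _]
  obtain ⟨k, k', hkk', hzk, hwk'⟩ : ∃ k k', σ.r k k' ∧
      (z = cPos n k j ∨ z = cstarPos n k j) ∧ (w = cPos n k' j ∨ w = cstarPos n k' j) := by
    rcases hzw with ⟨rfl, rfl⟩ | ⟨rfl, rfl⟩
    exacts [⟨b', a', hb'a', Or.inl rfl, Or.inr rfl⟩, ⟨a', b', σ.symm hb'a', Or.inr rfl, Or.inl rfl⟩]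
  rw [hIoo] at hz
  rw [hIcc] at hw
  have hk : k ∈ arcRegion b a := (mem_uIoo_iff_mem_arcRegion hj hj' hzk
    (fun h => Set.left_notMem_uIoo (h ▸ hz)) (fun h => Set.right_notMem_uIoo (h ▸ hz))).mp hz
  have hk' : k' ∉ arcRegion b a := fun h => hw <| Set.uIoo_subset_uIcc_self <|
    (mem_uIoo_iff_mem_arcRegion hj hj' hwk' (fun h => hw (h ▸ Set.left_mem_uIcc))
      (fun h => hw (h ▸ Set.right_mem_uIcc))).mpr h
  exact hk' (hba.mem_arcRegion_of_rel hτ hk (hστ hkk'))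

section indices

variable {n m : ℕ} (h : 0 < 2 * n * m)

@[simp]
theorem val_cIdx (k : Fin m) (j : Fin n) : (cIdx n m h (k + 1) (j + 1)).val = cPos n k j := by
  have hbound : 2 * k.val * n + n ≤ 2 * n * m := by nlinarith [k.isLt]
  simp only [cIdx, cPos, Nat.add_sub_cancel]
  rw [Nat.mod_eq_of_lt (by omega)]
  omega

@[simp]
theorem val_cstarIdx (k : Fin m) (j : Fin n) :
    (cstarIdx n m h (k + 1) (j + 1)).val = cstarPos n k j := by
  have hbound : (2 * k.val + 1) * n + n ≤ 2 * n * m := by nlinarith [k.isLt]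
  simp only [cstarIdx, cstarPos, Nat.add_sub_cancel,
    show 2 * (k.val + 1) - 1 = 2 * k.val + 1 by omega]
  exact Nat.mod_eq_of_lt (by omega)

theorem exists_val_eq_cPos_or_cstarPos (p : Fin (2 * n * m)) :
    ∃ (j : Fin n) (k : Fin m), p.val = cPos n k j ∨ p.val = cstarPos n k j := by
  have hn : 0 < n := Nat.pos_of_ne_zero fun hn => by simpa [hn] using p.pos
  have hr := Nat.mod_lt p.val hn
  have hdiv := Nat.div_add_mod p.val n
  have hd : p.val / n < 2 * m :=
    Nat.div_lt_of_lt_mul (by rw [show n * (2 * m) = 2 * n * m by ring]; exact p.isLt)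
  obtain ⟨k, hk | hk⟩ := Nat.even_or_odd' (p.val / n)
  · refine ⟨⟨n - 1 - p % n, by omega⟩, ⟨k, by omega⟩, Or.inl ?_⟩
    rw [hk, show n * (2 * k) = 2 * k * n by ring] at hdiv
    simp only [cPos]
    omega
  · refine ⟨⟨p % n, hr⟩, ⟨k, by omega⟩, Or.inr ?_⟩
    rw [hk, show n * (2 * k + 1) = (2 * k + 1) * n by ring] at hdiv
    simp only [cstarPos]
    omega

end indices

section QMap

variable {n m : ℕ} {h : 0 < 2 * n * m} {Φ : Fin n → Setoid (Fin m)}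

theorem QRel.exists_val {p q : Fin (2 * n * m)} (hpq : QRel n m h Φ p q) :
    ∃ (j : Fin n) (k k' : Fin m), CycPred (Φ j) k k' ∧
      p.val = cPos n k j ∧ q.val = cstarPos n k' j := by
  obtain ⟨j, k, k', hc, rfl, rfl⟩ := hpq
  exact ⟨j, k, k', hc, val_cIdx h k j, val_cstarIdx h k' j⟩

theorem qRel_rightUnique : Relator.RightUnique (QRel n m h Φ) := by
  rintro p q q' ⟨j, k, k', hc, rfl, rfl⟩ ⟨j₂, k₂, k₂', hc₂, hp, rfl⟩
  have hv := congrArg Fin.val hp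
  simp only [val_cIdx] at hv
  obtain ⟨hk, hj⟩ := (cPos_inj j.isLt j₂.isLt).mp hv
  obtain rfl := Fin.ext hk
  obtain rfl := Fin.ext hj
  rw [cycPred_rightUnique hc hc₂]

theorem qRel_leftUnique : Relator.LeftUnique (QRel n m h Φ) := by
  rintro p p' q ⟨j, k, k', hc, rfl, rfl⟩ ⟨j₂, k₂, k₂', hc₂, rfl, hq⟩
  have hv := congrArg Fin.val hq
  simp only [val_cstarIdx] at hv
  obtain ⟨hk, hj⟩ := (cstarPos_inj j.isLt j₂.isLt).mp hv
  obtain rfl := Fin.ext hk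
  obtain rfl := Fin.ext hj
  rw [cycPred_leftUnique hc hc₂]

theorem qRel_not_chain (p q r : Fin (2 * n * m)) (hpq : QRel n m h Φ p q) :
    ¬ QRel n m h Φ q r := by
  intro hqr
  obtain ⟨j, _, k', -, -, hq⟩ := hpq.exists_val
  obtain ⟨j₂, k₂, _, -, hq₂, -⟩ := hqr.exists_val
  exact cPos_ne_cstarPos j₂.isLt j.isLt (hq₂.symm.trans hq)

theorem qRel_total (p : Fin (2 * n * m)) : ∃ q, QRel n m h Φ p q ∨ QRel n m h Φ q p := by
  obtain ⟨j, k, hp | hp⟩ := exists_val_eq_cPos_or_cstarPos p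
  · obtain ⟨k', hk'⟩ := cycPred_leftTotal (Φ j) k
    exact ⟨_, Or.inl ⟨j, k, k', hk', Fin.ext (by simp [hp]), rfl⟩⟩
  · obtain ⟨k₀, hk₀⟩ := cycPred_rightTotal (Φ j) k
    exact ⟨_, Or.inr ⟨j, k₀, k, hk₀, rfl, Fin.ext (by simp [hp])⟩⟩

theorem qMap_rel_iff {p q : Fin (2 * n * m)} :
    (QMap n m h Φ).r p q ↔ p = q ∨ QRel n m h Φ p q ∨ QRel n m h Φ q p :=
  eqvGen_iff_of_unique qRel_rightUnique qRel_leftUnique qRel_not_chain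

theorem isPairPartition_qMap : IsPairPartition (QMap n m h Φ) :=
  existsUnique_ne_eqvGen qRel_rightUnique qRel_leftUnique qRel_not_chain qRel_total

theorem isCPos_iff_not_of_qMap_rel {p q : Fin (2 * n * m)} (hne : p ≠ q)
    (hpq : (QMap n m h Φ).r p q) : IsCPos n p.val ↔ ¬ IsCPos n q.val := by
  rcases qMap_rel_iff.mp hpq with rfl | hpq | hqp
  · exact absurd rfl hne
  · obtain ⟨j, _, _, -, hp, hq⟩ := hpq.exists_val
    rw [hp, hq]
    exact iff_of_true (isCPos_cPos j.isLt) (not_isCPos_cstarPos j.isLt)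
  · obtain ⟨j, _, _, -, hq, hp⟩ := hqp.exists_val
    rw [hp, hq]
    exact iff_of_false (not_isCPos_cstarPos j.isLt) (not_not_intro (isCPos_cPos j.isLt))

theorem exists_isArc_of_qMap_rel {p q : Fin (2 * n * m)} (hpq : (QMap n m h Φ).r p q)
    (hne : p ≠ q) : ∃ (j : Fin n) (b a : Fin m), CycPred (Φ j) b a ∧ IsArc n j b a p q := by
  rcases qMap_rel_iff.mp hpq with rfl | hpq | hqp
  · exact absurd rfl hne
  · obtain ⟨j, b, a, hc, hp, hq⟩ := hpq.exists_val
    exact ⟨j, b, a, hc, Or.inl ⟨hp, hq⟩⟩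
  · obtain ⟨j, b, a, hc, hq, hp⟩ := hqp.exists_val
    exact ⟨j, b, a, hc, Or.inr ⟨hp, hq⟩⟩

theorem isNoncrossing_qMap (hNC : ∀ j, IsNoncrossing (Φ j)) (hchain : Monotone Φ) :
    IsNoncrossing (QMap n m h Φ) := by
  rintro ⟨p, q, p', q', hpq, hqp', hp'q', hpp', hqq', -⟩
  obtain ⟨j₁, b₁, a₁, hc₁, harc₁⟩ := exists_isArc_of_qMap_rel hpp' (hpq.trans hqp').ne
  obtain ⟨j₂, b₂, a₂, hc₂, harc₂⟩ := exists_isArc_of_qMap_rel hqq' (hqp'.trans hp'q').ne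
  rw [Fin.lt_def] at hpq hqp' hp'q'
  rcases le_total j₁ j₂ with hj | hj
  · refine not_separated_by_arc (hchain hj) (hNC j₂) hj j₂.isLt hc₂ hc₁.1 harc₂ harc₁.symm
      (Set.mem_uIoo_of_lt hqp' hp'q') fun hp => ?_
    rcases Set.mem_uIcc.mp hp with hp | hp <;> omega
  · refine not_separated_by_arc (hchain hj) (hNC j₁) hj j₁.isLt hc₁ hc₂.1 harc₁ harc₂
      (Set.mem_uIoo_of_lt hpq hqp') fun hq' => ?_
    rcases Set.mem_uIcc.mp hq' with hq' | hq' <;> omega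

end QMap

theorem qMap_mem_starPairing_general (n m : ℕ)
    (h2 : 0 < 2 * n * m)
    (Φ : Fin n → Setoid (Fin m))
    (hNC : ∀ j, IsNoncrossing (Φ j)) (hchain : Monotone Φ) :
    IsStarPairing n m (QMap n m h2 Φ) :=
  ⟨isNoncrossing_qMap hNC hchain, isPairPartition_qMap, fun _ _ => isCPos_iff_not_of_qMap_rel⟩

/-- Given a multichain `Φ₁ ≤ ⋯ ≤ Φₙ` of noncrossing partitions of `{1,…,m}`, the
pairing `Q(Φ₁,…,Φₙ)` is a noncrossing ∗-pairing, i.e. lies in `NC₂*(n,m)`. -/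
theorem qMap_mem_starPairing (n m : ℕ) (hn : 1 ≤ n) (hm : 1 ≤ m)
    (h2 : 0 < 2 * n * m)
    (Φ : Fin n → Setoid (Fin m))
    (hNC : ∀ j, IsNoncrossing (Φ j)) (hchain : Monotone Φ) :
    IsStarPairing n m (QMap n m h2 Φ) :=
  qMap_mem_starPairing_general n m h2 Φ hNC hchain
end

section
/- Let n, m ≥ 1. The map P sending π ∈ NC₂*(n,m) to the n-tuple (Φ^π_1, …, Φ^π_n) is a bijection from NC₂*(n,m) onto the set of multichains Φ₁ ≤ Φ₂ ≤ ⋯ ≤ Φₙ of noncrossing partitions of {1,…,m}, and its inverse is the map Q sending a multichain (Φ₁,…,Φₙ) to the pair partition whose pairs are, for each 1 ≤ j ≤ n and each block V = {k₁ < ⋯ < k_r} of Φⱼ, the pairs {c(k₁,j), c∗(k_r,j)} and {c(k_{i+1},j), c∗(k_i,j)} for 1 ≤ i ≤ r−1. -/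
namespace SPB

/-! ### Arithmetic on positions -/

/-- value of a c-position -/
def cv (n k j : ℕ) : ℕ := 2*(k-1)*n + (n-j)
/-- value of a c*-position -/
def sv (n k j : ℕ) : ℕ := (2*k-1)*n + (j-1)

lemma cv_split {k : ℕ} (hk : 1 ≤ k) (n : ℕ) : (2*k-1)*n = 2*(k-1)*n + n := by
  have h : 2*k-1 = 2*(k-1)+1 := by omega
  rw [h]; ring

lemma mul_succ_n (a n : ℕ) : (a+1)*n = a*n + n := by ring

lemma two_mul_pred (k n : ℕ) : 2*(k-1)*n = 2*((k-1)*n) := by ring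

lemma A_mono {n k l : ℕ} (hk : 1 ≤ k) (hkl : k < l) :
    (2*k-1)*n + 2*n ≤ (2*l-1)*n := by
  have h : (2*k-1) + 2 ≤ 2*l - 1 := by omega
  calc (2*k-1)*n + 2*n = ((2*k-1)+2)*n := by ring
    _ ≤ (2*l-1)*n := Nat.mul_le_mul_right n h

lemma cv_lt {n m k j : ℕ} (hk1 : 1 ≤ k) (hk2 : k ≤ m) (hj1 : 1 ≤ j) (hj2 : j ≤ n) :
    cv n k j < 2*n*m := by
  have e : 2*k*n = 2*(k-1)*n + 2*n := by
    have h : k = (k-1)+1 := by omega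
    calc 2*k*n = 2*((k-1)+1)*n := by rw [← h]
      _ = 2*(k-1)*n + 2*n := by ring
  have h2 : 2*k*n ≤ 2*m*n := Nat.mul_le_mul_right n (by omega)
  have h3 : 2*m*n = 2*n*m := by ring
  unfold cv; omega

lemma sv_lt {n m k j : ℕ} (hk1 : 1 ≤ k) (hk2 : k ≤ m) (hj1 : 1 ≤ j) (hj2 : j ≤ n) :
    sv n k j < 2*n*m := by
  have e : (2*k-1)*n + n = 2*k*n := by
    have h : 2*k-1+1 = 2*k := by omega
    calc (2*k-1)*n + n = ((2*k-1)+1)*n := by ring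
      _ = 2*k*n := by rw [h]
  have h2 : 2*k*n ≤ 2*m*n := Nat.mul_le_mul_right n (by omega)
  have h3 : 2*m*n = 2*n*m := by ring
  unfold sv; omega

variable {n m : ℕ}

lemma cIdx_val (h2 : 0 < 2*n*m) {k j : ℕ} (hk1 : 1 ≤ k) (hk2 : k ≤ m) (hj1 : 1 ≤ j) (hj2 : j ≤ n) :
    (cIdx n m h2 k j).val = cv n k j := Nat.mod_eq_of_lt (cv_lt hk1 hk2 hj1 hj2)

lemma cstarIdx_val (h2 : 0 < 2*n*m) {k j : ℕ} (hk1 : 1 ≤ k) (hk2 : k ≤ m) (hj1 : 1 ≤ j) (hj2 : j ≤ n) :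
    (cstarIdx n m h2 k j).val = sv n k j := Nat.mod_eq_of_lt (sv_lt hk1 hk2 hj1 hj2)

section cmp
variable {k l j i : ℕ} (hk1 : 1 ≤ k) (hk2 : k ≤ m) (hj1 : 1 ≤ j) (hj2 : j ≤ n)
  (hl1 : 1 ≤ l) (hl2 : l ≤ m) (hi1 : 1 ≤ i) (hi2 : i ≤ n)

include hk1 hj1 hj2 hl1 hi1 hi2 in
lemma cv_lt_cv_iff : cv n k j < cv n l i ↔ (k < l ∨ (k = l ∧ i < j)) := by
  unfold cv
  rcases lt_trichotomy k l with h | h | h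
  · have := A_mono (n := n) hk1 h
    have e1 := cv_split hk1 n; have e2 := cv_split hl1 n
    simp only [two_mul_pred] at *
    constructor
    · intro _; exact Or.inl h
    · intro _; omega
  · subst h; omega
  · have := A_mono (n := n) hl1 h
    have e1 := cv_split hk1 n; have e2 := cv_split hl1 n
    simp only [two_mul_pred] at *
    constructor
    · intro hc; omega
    · intro hc; omega

include hk1 hj1 hj2 hl1 hi1 hi2 in
lemma cv_lt_sv_iff : cv n k j < sv n l i ↔ k ≤ l := by
  unfold cv sv
  rcases lt_trichotomy k l with h | h | h
  · have := A_mono (n := n) hk1 h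
    have e1 := cv_split hk1 n; have e2 := cv_split hl1 n
    simp only [two_mul_pred] at *
    constructor <;> intro <;> omega
  · subst h
    have e1 := cv_split hk1 n
    simp only [two_mul_pred] at *
    constructor <;> intro <;> omega
  · have := A_mono (n := n) hl1 h
    have e1 := cv_split hk1 n; have e2 := cv_split hl1 n
    simp only [two_mul_pred] at *
    constructor <;> intro <;> omega

include hk1 hj1 hj2 hl1 hi1 hi2 in
lemma sv_lt_cv_iff : sv n k j < cv n l i ↔ k < l := by
  unfold cv sv
  rcases lt_trichotomy k l with h | h | h
  · have := A_mono (n := n) hk1 h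
    have e1 := cv_split hk1 n; have e2 := cv_split hl1 n
    simp only [two_mul_pred] at *
    constructor <;> intro <;> omega
  · subst h
    have e1 := cv_split hk1 n
    simp only [two_mul_pred] at *
    constructor <;> intro <;> omega
  · have := A_mono (n := n) hl1 h
    have e1 := cv_split hk1 n; have e2 := cv_split hl1 n
    simp only [two_mul_pred] at *
    constructor <;> intro <;> omega

include hk1 hj1 hj2 hl1 hi1 hi2 in
lemma sv_lt_sv_iff : sv n k j < sv n l i ↔ (k < l ∨ (k = l ∧ j < i)) := by
  unfold sv
  rcases lt_trichotomy k l with h | h | h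
  · have := A_mono (n := n) hk1 h
    constructor
    · intro _; exact Or.inl h
    · intro _; omega
  · subst h; omega
  · have := A_mono (n := n) hl1 h
    constructor <;> intro hc <;> omega

end cmp

end SPB
namespace SPB
variable {n m : ℕ}

/-! ### c/c* recognition and decoding -/

lemma isCPos_iff (hn : 1 ≤ n) (p : ℕ) : IsCPos n p ↔ p % (2*n) < n := by
  have h0 : 0 < 2*n := by omega
  have hd := Nat.div_add_mod p (2*n)
  have hm2 : p % (2*n) < 2*n := Nat.mod_lt _ h0
  set q := p / (2*n) with hq
  set r := p % (2*n) with hr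
  have hpn : p / n = 2*q + r / n := by
    have e : p = n*(2*q) + r := by have : n*(2*q) = 2*n*q := by ring
                                   omega
    rw [e, Nat.mul_add_div (by omega)]
  unfold IsCPos
  rw [hpn]
  rcases Nat.lt_or_ge r n with h | h
  · have h1 : r / n = 0 := Nat.div_eq_of_lt h
    rw [h1]; omega
  · have h1 : r / n = 1 := Nat.div_eq_of_lt_le (by omega) (by omega)
    rw [h1]; omega

lemma cv_div (hn : 1 ≤ n) {k j : ℕ} (hk1 : 1 ≤ k) (hj1 : 1 ≤ j) (hj2 : j ≤ n) :
    cv n k j / (2*n) = k - 1 ∧ cv n k j % (2*n) = n - j := by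
  rw [Nat.div_mod_unique (by omega : 0 < 2*n)]
  have e : 2*n*(k-1) = 2*(k-1)*n := by ring
  constructor
  · unfold cv; omega
  · omega

lemma sv_div (hn : 1 ≤ n) {k j : ℕ} (hk1 : 1 ≤ k) (hj1 : 1 ≤ j) (hj2 : j ≤ n) :
    sv n k j / (2*n) = k - 1 ∧ sv n k j % (2*n) = n + j - 1 := by
  rw [Nat.div_mod_unique (by omega : 0 < 2*n)]
  have e : 2*n*(k-1) = 2*(k-1)*n := by ring
  have e2 := cv_split hk1 n
  constructor
  · unfold sv; omega
  · omega

lemma isCPos_cv (hn : 1 ≤ n) {k j : ℕ} (hk1 : 1 ≤ k) (hj1 : 1 ≤ j) (hj2 : j ≤ n) :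
    IsCPos n (cv n k j) := by
  rw [isCPos_iff hn, (cv_div hn hk1 hj1 hj2).2]; omega

lemma not_isCPos_sv (hn : 1 ≤ n) {k j : ℕ} (hk1 : 1 ≤ k) (hj1 : 1 ≤ j) (hj2 : j ≤ n) :
    ¬ IsCPos n (sv n k j) := by
  rw [isCPos_iff hn, (sv_div hn hk1 hj1 hj2).2]; omega

lemma cv_ne_sv (hn : 1 ≤ n) {k j l i : ℕ} (hk1 : 1 ≤ k) (hj1 : 1 ≤ j) (hj2 : j ≤ n)
    (hl1 : 1 ≤ l) (hi1 : 1 ≤ i) (hi2 : i ≤ n) : cv n k j ≠ sv n l i := by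
  intro h
  exact not_isCPos_sv hn hl1 hi1 hi2 (h ▸ isCPos_cv hn hk1 hj1 hj2)

lemma cv_inj (hn : 1 ≤ n) {k j l i : ℕ} (hk1 : 1 ≤ k) (hj1 : 1 ≤ j) (hj2 : j ≤ n)
    (hl1 : 1 ≤ l) (hi1 : 1 ≤ i) (hi2 : i ≤ n) (h : cv n k j = cv n l i) : k = l ∧ j = i := by
  have h1 := (cv_div hn hk1 hj1 hj2).1
  have h2 := (cv_div hn hk1 hj1 hj2).2
  have h3 := (cv_div hn hl1 hi1 hi2).1
  have h4 := (cv_div hn hl1 hi1 hi2).2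
  rw [h] at h1 h2
  omega

lemma sv_inj (hn : 1 ≤ n) {k j l i : ℕ} (hk1 : 1 ≤ k) (hj1 : 1 ≤ j) (hj2 : j ≤ n)
    (hl1 : 1 ≤ l) (hi1 : 1 ≤ i) (hi2 : i ≤ n) (h : sv n k j = sv n l i) : k = l ∧ j = i := by
  have h1 := (sv_div hn hk1 hj1 hj2).1
  have h2 := (sv_div hn hk1 hj1 hj2).2
  have h3 := (sv_div hn hl1 hi1 hi2).1
  have h4 := (sv_div hn hl1 hi1 hi2).2
  rw [h] at h1 h2
  omega

/-- decode a c-position -/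
lemma c_decode (hn : 1 ≤ n) {p : ℕ} (hp : p < 2*n*m) (hc : IsCPos n p) :
    ∃ k j, 1 ≤ k ∧ k ≤ m ∧ 1 ≤ j ∧ j ≤ n ∧ p = cv n k j := by
  have h0 : 0 < 2*n := by omega
  rw [isCPos_iff hn] at hc
  obtain ⟨q, r, hr2, hp0⟩ : ∃ q r, r < 2*n ∧ p = 2*n*q + r :=
    ⟨p/(2*n), p%(2*n), Nat.mod_lt _ h0, (Nat.div_add_mod p (2*n)).symm⟩
  have hrr : p % (2*n) = r := by
    rw [hp0, Nat.mul_add_mod, Nat.mod_eq_of_lt hr2]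
  rw [hrr] at hc
  have hqm : q < m := by
    by_contra hcon
    have : 2*n*m ≤ 2*n*q := Nat.mul_le_mul_left (2*n) (by omega)
    omega
  refine ⟨q + 1, n - r, by omega, by omega, by omega, by omega, ?_⟩
  unfold cv
  have e : 2*(q+1-1)*n = 2*n*q := by
    have h : q+1-1 = q := by omega
    rw [h]; ring
  omega

/-- decode a c*-position -/
lemma s_decode (hn : 1 ≤ n) {p : ℕ} (hp : p < 2*n*m) (hc : ¬ IsCPos n p) :
    ∃ k j, 1 ≤ k ∧ k ≤ m ∧ 1 ≤ j ∧ j ≤ n ∧ p = sv n k j := by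
  have h0 : 0 < 2*n := by omega
  rw [isCPos_iff hn] at hc
  obtain ⟨q, r, hr2, hp0⟩ : ∃ q r, r < 2*n ∧ p = 2*n*q + r :=
    ⟨p/(2*n), p%(2*n), Nat.mod_lt _ h0, (Nat.div_add_mod p (2*n)).symm⟩
  have hrr : p % (2*n) = r := by
    rw [hp0, Nat.mul_add_mod, Nat.mod_eq_of_lt hr2]
  rw [hrr] at hc
  have hqm : q < m := by
    by_contra hcon
    have : 2*n*m ≤ 2*n*q := Nat.mul_le_mul_left (2*n) (by omega)
    omega
  refine ⟨q + 1, r + 1 - n, by omega, by omega, by omega, by omega, ?_⟩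
  unfold sv
  have e : (2*(q+1)-1)*n = 2*n*q + n := by
    have h : 2*(q+1)-1 = 2*q+1 := by omega
    rw [h]; ring
  omega

end SPB
namespace SPB
variable {n m : ℕ}

/-! ### Counting c-positions -/

/-- number of c-positions `< t` -/
def cCnt (n t : ℕ) : ℕ := ((Finset.range t).filter (fun x => x % (2*n) < n)).card

lemma cCnt_succ (n t : ℕ) :
    cCnt n (t+1) = cCnt n t + (if t % (2*n) < n then 1 else 0) := by
  unfold cCnt
  rw [Finset.range_add_one, Finset.filter_insert]
  split_ifs with h
  · rw [Finset.card_insert_of_notMem (by simp)]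
  · rfl

lemma cCnt_formula (hn : 1 ≤ n) (t : ℕ) :
    cCnt n t = t/(2*n)*n + min (t % (2*n)) n := by
  have h0 : 0 < 2*n := by omega
  induction t with
  | zero => simp [cCnt]
  | succ t ih =>
    rw [cCnt_succ, ih]
    have hd := Nat.div_add_mod t (2*n)
    have hm2 : t % (2*n) < 2*n := Nat.mod_lt _ h0
    rcases Nat.lt_or_ge (t % (2*n) + 1) (2*n) with h | h
    · have hdm : (t+1)/(2*n) = t/(2*n) ∧ (t+1) % (2*n) = t % (2*n) + 1 :=
        (Nat.div_mod_unique h0).mpr ⟨by omega, h⟩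
      rw [hdm.1, hdm.2]
      split_ifs with hc <;> omega
    · have heq : t % (2*n) = 2*n - 1 := by omega
      have hdm : (t+1)/(2*n) = t/(2*n) + 1 ∧ (t+1) % (2*n) = 0 :=
        (Nat.div_mod_unique h0).mpr ⟨by
          have e : 2*n*(t/(2*n)+1) = 2*n*(t/(2*n)) + 2*n := by ring
          omega, by omega⟩
      rw [hdm.1, hdm.2]
      have e2 : (t/(2*n)+1)*n = t/(2*n)*n + n := by ring
      split_ifs with hc <;> omega

lemma cCnt_cv (hn : 1 ≤ n) {k j : ℕ} (hk1 : 1 ≤ k) (hj1 : 1 ≤ j) (hj2 : j ≤ n) :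
    cCnt n (cv n k j) = (k-1)*n + (n-j) := by
  rw [cCnt_formula hn, (cv_div hn hk1 hj1 hj2).1, (cv_div hn hk1 hj1 hj2).2]
  omega

lemma cCnt_sv (hn : 1 ≤ n) {k j : ℕ} (hk1 : 1 ≤ k) (hj1 : 1 ≤ j) (hj2 : j ≤ n) :
    cCnt n (sv n k j) = (k-1)*n + n := by
  rw [cCnt_formula hn, (sv_div hn hk1 hj1 hj2).1, (sv_div hn hk1 hj1 hj2).2]
  omega

/-- splitting the count over an interval -/
lemma cCnt_split (n : ℕ) {a b : ℕ} (hab : a < b) :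
    cCnt n b = cCnt n (a+1) + ((Finset.Ioo a b).filter (fun x => x % (2*n) < n)).card := by
  unfold cCnt
  have h1 : Finset.range b = Finset.range (a+1) ∪ Finset.Ioo a b := by
    simp only [Finset.range_eq_Ico]
    rw [← Finset.Ico_add_one_left_eq_Ioo]
    exact (Finset.Ico_union_Ico_eq_Ico (by omega) (by omega)).symm
  rw [h1, Finset.filter_union, Finset.card_union_of_disjoint]
  exact Finset.disjoint_filter_filter (by
    simp only [Finset.range_eq_Ico]
    rw [← Finset.Ico_add_one_left_eq_Ioo]
    exact Finset.Ico_disjoint_Ico_consecutive 0 (a+1) b)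

/-- counting via an involution that swaps the two classes -/
lemma card_filter_eq_involution {α : Type*} [DecidableEq α] (s : Finset α)
    (P : α → Prop) [DecidablePred P] (f : α → α)
    (hmem : ∀ x ∈ s, f x ∈ s) (hinv : ∀ x ∈ s, f (f x) = x)
    (hswap : ∀ x ∈ s, (P x ↔ ¬ P (f x))) :
    (s.filter P).card = (s.filter (fun x => ¬ P x)).card := by
  apply Finset.card_bij (fun a _ => f a)
  · intro a ha
    simp only [Finset.mem_filter] at ha ⊢
    exact ⟨hmem a ha.1, ((hswap a ha.1).mp ha.2)⟩
  · intro a ha b hb hab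
    simp only [Finset.mem_filter] at ha hb
    have := hinv a ha.1
    have := hinv b hb.1
    calc a = f (f a) := (hinv a ha.1).symm
      _ = f (f b) := by rw [hab]
      _ = b := hinv b hb.1
  · intro b hb
    simp only [Finset.mem_filter] at hb
    refine ⟨f b, ?_, hinv b hb.1⟩
    simp only [Finset.mem_filter]
    refine ⟨hmem b hb.1, ?_⟩
    have h := hswap (f b) (hmem b hb.1)
    rw [hinv b hb.1] at h
    exact h.mpr hb.2

end SPB
namespace SPB
variable {n m : ℕ}

/-! ### The partner function of a pair partition -/

section Partner
variable {π : Setoid (Fin (2*n*m))}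

noncomputable def partner (hp : IsPairPartition π) (p : Fin (2*n*m)) : Fin (2*n*m) :=
  (hp p).exists.choose

lemma partner_ne (hp : IsPairPartition π) (p : Fin (2*n*m)) : partner hp p ≠ p :=
  (hp p).exists.choose_spec.1

lemma partner_rel (hp : IsPairPartition π) (p : Fin (2*n*m)) : π.r p (partner hp p) :=
  (hp p).exists.choose_spec.2

lemma partner_eq (hp : IsPairPartition π) {p q : Fin (2*n*m)} (hq : q ≠ p) (hr : π.r p q) :
    q = partner hp p :=
  (hp p).unique ⟨hq, hr⟩ ⟨partner_ne hp p, partner_rel hp p⟩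

lemma partner_invol (hp : IsPairPartition π) (p : Fin (2*n*m)) :
    partner hp (partner hp p) = p :=
  (partner_eq hp (Ne.symm (partner_ne hp p)) (π.symm (partner_rel hp p))).symm

lemma not_rel_of_partner_ne (hp : IsPairPartition π) {p x : Fin (2*n*m)}
    (hx : x ≠ p) (hxp : x ≠ partner hp p) : ¬ π.r p x :=
  fun hr => hxp (partner_eq hp hx hr)

lemma cross_elim (hnc : IsNoncrossing π) {p q p' q' : Fin (2*n*m)}
    (h1 : p < q) (h2 : q < p') (h3 : p' < q')
    (hpp : π.r p p') (hqq : π.r q q') (hnpq : ¬ π.r p q) : False :=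
  hnc ⟨p, q, p', q', h1, h2, h3, hpp, hqq, hnpq⟩

/-- interior of an arc is closed under taking partners -/
lemma inside_closed (hsp : IsStarPairing n m π) {a b x : Fin (2*n*m)}
    (hab : π.r a b) (hlt : a < b) (h1 : a < x) (h2 : x < b) :
    a < partner hsp.2.1 x ∧ partner hsp.2.1 x < b := by
  obtain ⟨hnc, hp, _⟩ := hsp
  set y := partner hp x with hy
  have hyx : y ≠ x := partner_ne hp x
  have hrxy : π.r x y := partner_rel hp x
  have hba : b = partner hp a := partner_eq hp (ne_of_gt hlt) hab
  have hapb : a = partner hp b := by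
    rw [hba, partner_invol]
  have hya : y ≠ a := by
    intro h
    have : x = partner hp a := partner_eq hp (ne_of_gt h1) (π.symm (h ▸ hrxy))
    rw [← hba] at this
    exact absurd this (ne_of_lt h2)
  have hyb : y ≠ b := by
    intro h
    have : x = partner hp b := partner_eq hp (ne_of_lt h2) (π.symm (h ▸ hrxy))
    rw [← hapb] at this
    exact absurd this (ne_of_gt h1)
  have hpy : partner hp y = x := by rw [hy, partner_invol]
  have hnya : ¬ (y < a) := by
    intro hya'
    exact cross_elim hnc hya' h1 h2 (π.symm hrxy) hab
      (not_rel_of_partner_ne hp (Ne.symm hya) (hpy ▸ (ne_of_gt h1).symm))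
  have hnby : ¬ (b < y) := by
    intro hby
    exact cross_elim hnc h1 h2 hby hab hrxy
      (not_rel_of_partner_ne hp (ne_of_gt h1) (hba ▸ (ne_of_lt h2)))
  exact ⟨lt_of_le_of_ne (le_of_not_gt hnya) (Ne.symm hya), lt_of_le_of_ne (le_of_not_gt hnby) hyb⟩

end Partner
end SPB
namespace SPB
variable {n m : ℕ}

lemma card_Ioo_val {NN : ℕ} (p q : Fin NN) (P : ℕ → Prop) [DecidablePred P] :
    ((Finset.Ioo p q).filter (fun x => P x.val)).card
      = ((Finset.Ioo p.val q.val).filter P).card := by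
  apply Finset.card_bij (fun a _ => a.val)
  · intro a ha
    simp only [Finset.mem_filter, Finset.mem_Ioo, Fin.lt_def] at ha ⊢
    exact ha
  · intro a _ b _ hab
    exact Fin.val_injective hab
  · intro b hb
    simp only [Finset.mem_filter, Finset.mem_Ioo] at hb
    refine ⟨⟨b, lt_trans hb.1.2 q.isLt⟩, ?_, rfl⟩
    simp only [Finset.mem_filter, Finset.mem_Ioo, Fin.lt_def]
    exact hb

section Counting
variable {π : Setoid (Fin (2*n*m))}

lemma pair_count (hn : 1 ≤ n) (hsp : IsStarPairing n m π) {p q : Fin (2*n*m)}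
    (hr : π.r p q) (hlt : p < q) :
    2 * cCnt n q.val + p.val + 1 = 2 * cCnt n (p.val+1) + q.val := by
  have hne : p ≠ q := ne_of_lt hlt
  set f := partner hsp.2.1 with hf
  have hXY : ((Finset.Ioo p q).filter (fun x => x.val % (2*n) < n)).card
      = ((Finset.Ioo p q).filter (fun x => ¬ x.val % (2*n) < n)).card := by
    apply card_filter_eq_involution _ _ f
    · intro x hx
      simp only [Finset.mem_Ioo] at hx ⊢
      exact inside_closed hsp hr hlt hx.1 hx.2
    · intro x _
      exact partner_invol hsp.2.1 x
    · intro x _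
      have h := hsp.2.2 x (f x) (Ne.symm (partner_ne hsp.2.1 x)) (partner_rel hsp.2.1 x)
      rw [isCPos_iff hn, isCPos_iff hn] at h
      exact h
  rw [card_Ioo_val p q (fun x => x % (2*n) < n),
      card_Ioo_val p q (fun x => ¬ x % (2*n) < n)] at hXY
  have h1 := cCnt_split n (show p.val < q.val from hlt)
  have h2 := Finset.card_filter_add_card_filter_not
    (s := Finset.Ioo p.val q.val) (p := fun x => x % (2*n) < n)
  rw [Nat.card_Ioo] at h2
  have hpq : p.val < q.val := hlt
  omega

lemma pair_decode (hn : 1 ≤ n) (hsp : IsStarPairing n m π) {p q : Fin (2*n*m)}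
    (hr : π.r p q) (hne : p ≠ q) (hc : IsCPos n p.val) :
    ∃ k k' j, 1 ≤ k ∧ k ≤ m ∧ 1 ≤ k' ∧ k' ≤ m ∧ 1 ≤ j ∧ j ≤ n ∧
      p.val = cv n k j ∧ q.val = sv n k' j := by
  have hq : ¬ IsCPos n q.val := (hsp.2.2 p q hne hr).mp hc
  obtain ⟨k, j, hk1, hk2, hj1, hj2, hpv⟩ := c_decode hn p.isLt hc
  obtain ⟨k', j', hk1', hk2', hj1', hj2', hqv⟩ := s_decode hn q.isLt hq
  suffices hjj : j' = j by
    subst hjj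
    exact ⟨k, k', j', hk1, hk2, hk1', hk2', hj1', hj2', hpv, hqv⟩
  have hcp : p.val % (2*n) < n := by
    have := (isCPos_iff hn p.val).mp hc
    exact this
  have hcq : ¬ q.val % (2*n) < n := by
    intro h
    exact hq ((isCPos_iff hn q.val).mpr h)
  have e1 := two_mul_pred k n
  have e2 := two_mul_pred k' n
  have e3 := cv_split hk1' n
  have e4 := cv_split hk1 n
  rcases lt_or_gt_of_ne hne with hlt | hlt
  · have hcount := pair_count hn hsp hr hlt
    have hsucc : cCnt n (p.val + 1) = cCnt n p.val + 1 := by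
      rw [cCnt_succ, if_pos hcp]
    have hcv : cCnt n p.val = (k-1)*n + (n-j) := by rw [hpv]; exact cCnt_cv hn hk1 hj1 hj2
    have hsv : cCnt n q.val = (k'-1)*n + n := by rw [hqv]; exact cCnt_sv hn hk1' hj1' hj2'
    unfold cv at hpv
    unfold sv at hqv
    omega
  · have hcount := pair_count hn hsp (π.symm hr) hlt
    have hsucc : cCnt n (q.val + 1) = cCnt n q.val := by
      rw [cCnt_succ, if_neg hcq]
      omega
    have hcv : cCnt n p.val = (k-1)*n + (n-j) := by rw [hpv]; exact cCnt_cv hn hk1 hj1 hj2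
    have hsv : cCnt n q.val = (k'-1)*n + n := by rw [hqv]; exact cCnt_sv hn hk1' hj1' hj2'
    unfold cv at hpv
    unfold sv at hqv
    omega

end Counting
end SPB
namespace SPB

open scoped Classical

/-! ### Generic lemmas about setoids on `Fin m` -/

lemma eqvGen_pred {α : Type*} {R : α → α → Prop} {P : α → Prop}
    (h : ∀ u v, R u v → (P u ↔ P v)) {u v : α} (he : Relation.EqvGen R u v) :
    P u ↔ P v := by
  induction he with
  | rel x y hr => exact h x y hr
  | refl x => exact Iff.rfl
  | symm x y _ ih => exact ih.symm
  | trans x y z _ _ ih1 ih2 => exact ih1.trans ih2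

/-- if `σ` maps the window `(b,a]` into `[b,a)` then `a` and `b` are equivalent -/
lemma orbit_connect {m : ℕ} (Φ : Setoid (Fin m)) (σ : Fin m → Fin m)
    (hinj : Function.Injective σ) (hrel : ∀ u, Φ.r u (σ u)) (a b : Fin m) (hba : b ≤ a)
    (hw : ∀ u, b < u → u ≤ a → b ≤ σ u ∧ σ u < a) : Φ.r a b := by
  rcases eq_or_lt_of_le hba with heq | hlt
  · exact heq ▸ Φ.refl b
  by_contra hnab
  set D := Finset.univ.filter (fun u => b < u ∧ u ≤ a ∧ Φ.r a u) with hD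
  have haD : a ∈ D := by
    simp only [hD, Finset.mem_filter, Finset.mem_univ, true_and]
    exact ⟨hlt, le_refl a, Φ.refl a⟩
  have hmaps : ∀ u ∈ D, σ u ∈ D.erase a := by
    intro u hu
    simp only [hD, Finset.mem_filter, Finset.mem_univ, true_and] at hu
    obtain ⟨hbu, hua, hau⟩ := hu
    obtain ⟨hbs, hsa⟩ := hw u hbu hua
    have hras : Φ.r a (σ u) := Φ.trans hau (hrel u)
    have hsb : σ u ≠ b := fun h => hnab (h ▸ hras)
    rw [Finset.mem_erase]
    simp only [hD, Finset.mem_filter, Finset.mem_univ, true_and]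
    exact ⟨ne_of_lt hsa, lt_of_le_of_ne hbs (Ne.symm hsb), le_of_lt hsa, hras⟩
  have hcard := Finset.card_le_card_of_injOn σ hmaps (fun x _ y _ h => hinj h)
  rw [Finset.card_erase_of_mem haD] at hcard
  have hpos : 0 < D.card := Finset.card_pos.mpr ⟨a, haD⟩
  omega

/-! ### Existence and uniqueness of the cyclic predecessor -/

lemma cycPred_exists {m : ℕ} (Φ : Setoid (Fin m)) (k : Fin m) : ∃ k', CycPred Φ k k' := by
  classical
  have hkS : k ∈ Finset.univ.filter (fun l => Φ.r k l) :=
    Finset.mem_filter.mpr ⟨Finset.mem_univ k, Φ.refl k⟩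
  by_cases hTn : ((Finset.univ.filter (fun l => Φ.r k l)).filter (fun l => l < k)).Nonempty
  · set T := (Finset.univ.filter (fun l => Φ.r k l)).filter (fun l => l < k) with hT
    have hmem : T.max' hTn ∈ T := T.max'_mem hTn
    have hmem' := Finset.mem_filter.mp hmem
    have hrel := (Finset.mem_filter.mp hmem'.1).2
    refine ⟨T.max' hTn, hrel, Or.inl ⟨hmem'.2, ?_⟩⟩
    intro l hl hlk
    exact T.le_max' l (Finset.mem_filter.mpr ⟨Finset.mem_filter.mpr ⟨Finset.mem_univ l, hl⟩, hlk⟩)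
  · set S := Finset.univ.filter (fun l => Φ.r k l) with hS
    have hSn : S.Nonempty := ⟨k, hkS⟩
    have hrel := (Finset.mem_filter.mp (S.max'_mem hSn)).2
    refine ⟨S.max' hSn, hrel, Or.inr ⟨?_, ?_⟩⟩
    · intro l hl
      by_contra hcon
      exact hTn ⟨l, Finset.mem_filter.mpr ⟨Finset.mem_filter.mpr ⟨Finset.mem_univ l, hl⟩, not_le.mp hcon⟩⟩
    · intro l hl
      exact S.le_max' l (Finset.mem_filter.mpr ⟨Finset.mem_univ l, hl⟩)

lemma cycPred_unique {m : ℕ} {Φ : Setoid (Fin m)} {k a b : Fin m}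
    (ha : CycPred Φ k a) (hb : CycPred Φ k b) : a = b := by
  obtain ⟨hra, hca⟩ := ha
  obtain ⟨hrb, hcb⟩ := hb
  rcases hca with ⟨hal, ham⟩ | ⟨hamin, hamax⟩ <;> rcases hcb with ⟨hbl, hbm⟩ | ⟨hbmin, hbmax⟩
  · exact le_antisymm (hbm a hra hal) (ham b hrb hbl)
  · exact absurd (hbmin a hra) (not_le.mpr hal)
  · exact absurd (hamin b hrb) (not_le.mpr hbl)
  · exact le_antisymm (hbmax a hra) (hamax b hrb)

lemma cycPred_injective {m : ℕ} {Φ : Setoid (Fin m)} {k₁ k₂ k' : Fin m}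
    (h1 : CycPred Φ k₁ k') (h2 : CycPred Φ k₂ k') : k₁ = k₂ := by
  have h12 : Φ.r k₁ k₂ := Φ.trans h1.1 (Φ.symm h2.1)
  by_contra hne
  rcases h1.2 with ⟨ha, hga⟩ | ⟨hmin1, hmax1⟩ <;> rcases h2.2 with ⟨hb, hgb⟩ | ⟨hmin2, hmax2⟩
  · rcases lt_trichotomy k₁ k₂ with h | h | h
    · exact absurd (hgb k₁ (Φ.symm h12) h) (not_le.mpr ha)
    · exact hne h
    · exact absurd (hga k₂ h12 h) (not_le.mpr hb)
  · exact absurd (hmax2 k₁ (Φ.symm h12)) (not_le.mpr ha)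
  · exact absurd (hmax1 k₂ h12) (not_le.mpr hb)
  · exact hne (le_antisymm (hmin1 k₂ h12) (hmin2 k₁ (Φ.symm h12)))

noncomputable def cycPredFn {m : ℕ} (Φ : Setoid (Fin m)) (k : Fin m) : Fin m :=
  (cycPred_exists Φ k).choose

lemma cycPredFn_spec {m : ℕ} (Φ : Setoid (Fin m)) (k : Fin m) :
    CycPred Φ k (cycPredFn Φ k) := (cycPred_exists Φ k).choose_spec

lemma cycPredFn_eq {m : ℕ} {Φ : Setoid (Fin m)} {k k' : Fin m} (h : CycPred Φ k k') :
    cycPredFn Φ k = k' := cycPred_unique (cycPredFn_spec Φ k) h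

lemma cycPredFn_inj {m : ℕ} (Φ : Setoid (Fin m)) : Function.Injective (cycPredFn Φ) :=
  fun a b h => cycPred_injective (cycPredFn_spec Φ a) (h ▸ cycPredFn_spec Φ b)

lemma cycPredFn_surj {m : ℕ} (Φ : Setoid (Fin m)) : Function.Surjective (cycPredFn Φ) :=
  Finite.surjective_of_injective (cycPredFn_inj Φ)

/-- the block minimum -/
noncomputable def blockMin {m : ℕ} (Φ : Setoid (Fin m)) (u : Fin m) : Fin m :=
  (Finset.univ.filter (fun l => Φ.r u l)).min'
    ⟨u, Finset.mem_filter.mpr ⟨Finset.mem_univ u, Φ.refl u⟩⟩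

lemma blockMin_rel {m : ℕ} (Φ : Setoid (Fin m)) (u : Fin m) : Φ.r u (blockMin Φ u) := by
  have h := (Finset.univ.filter (fun l => Φ.r u l)).min'_mem
    ⟨u, Finset.mem_filter.mpr ⟨Finset.mem_univ u, Φ.refl u⟩⟩
  exact (Finset.mem_filter.mp h).2

lemma blockMin_eq_of_rel {m : ℕ} {Φ : Setoid (Fin m)} {u v : Fin m} (h : Φ.r u v) :
    blockMin Φ u = blockMin Φ v := by
  have hset : (Finset.univ.filter (fun l => Φ.r u l)) = (Finset.univ.filter (fun l => Φ.r v l)) := by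
    apply Finset.filter_congr
    intro l _
    exact ⟨fun hl => Φ.trans (Φ.symm h) hl, fun hl => Φ.trans h hl⟩
  have H : ∀ (s t : Finset (Fin m)) (hs : s.Nonempty) (ht : t.Nonempty), s = t →
      s.min' hs = t.min' ht := by
    rintro s t hs ht rfl; rfl
  exact H _ _ _ _ hset

lemma eqvGen_cycPred {m : ℕ} (Φ : Setoid (Fin m)) (u v : Fin m) :
    Relation.EqvGen (CycPred Φ) u v ↔ Φ.r u v := by
  constructor
  · intro h
    induction h with
    | rel x y hr => exact hr.1
    | refl x => exact Φ.refl x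
    | symm x y _ ih => exact Φ.symm ih
    | trans x y z _ _ ih1 ih2 => exact Φ.trans ih1 ih2
  · intro h
    have key : ∀ t : ℕ, ∀ w : Fin m, w.val < t → Relation.EqvGen (CycPred Φ) w (blockMin Φ w) := by
      intro t
      induction t with
      | zero => intro w hw; omega
      | succ t ih =>
        intro w hw
        have hspec := cycPredFn_spec Φ w
        rcases hspec.2 with ⟨hlt, _⟩ | ⟨hmin, _⟩
        · have h1 : Relation.EqvGen (CycPred Φ) w (cycPredFn Φ w) := Relation.EqvGen.rel _ _ hspec
          have h2 := ih (cycPredFn Φ w) (by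
            have : (cycPredFn Φ w).val < w.val := hlt
            omega)
          rw [blockMin_eq_of_rel hspec.1]
          exact Relation.EqvGen.trans _ _ _ h1 h2
        · have h1 : w ≤ blockMin Φ w := hmin _ (blockMin_rel Φ w)
          have h2 : blockMin Φ w ≤ w :=
            Finset.min'_le _ _ (Finset.mem_filter.mpr ⟨Finset.mem_univ w, Φ.refl w⟩)
          have : blockMin Φ w = w := le_antisymm h2 h1
          rw [this]
          exact Relation.EqvGen.refl w
    have h1 := key (u.val + 1) u (by omega)
    have h2 := key (v.val + 1) v (by omega)
    rw [blockMin_eq_of_rel h] at h1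
    exact Relation.EqvGen.trans _ _ _ h1 (Relation.EqvGen.symm _ _ h2)

end SPB
namespace SPB
variable {n m : ℕ}

/-! ### Fin-level positions -/

def CF (h2 : 0 < 2*n*m) (k : Fin m) (j : Fin n) : Fin (2*n*m) :=
  cIdx n m h2 (k.val+1) (j.val+1)

def SF (h2 : 0 < 2*n*m) (k : Fin m) (j : Fin n) : Fin (2*n*m) :=
  cstarIdx n m h2 (k.val+1) (j.val+1)

section FinPos
variable (h2 : 0 < 2*n*m)

lemma CF_val (k : Fin m) (j : Fin n) : (CF h2 k j).val = cv n (k.val+1) (j.val+1) :=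
  cIdx_val h2 (by omega) (by omega) (by omega) (by omega)

lemma SF_val (k : Fin m) (j : Fin n) : (SF h2 k j).val = sv n (k.val+1) (j.val+1) :=
  cstarIdx_val h2 (by omega) (by omega) (by omega) (by omega)

variable {k l : Fin m} {j i : Fin n}

lemma CF_lt_CF_iff : CF h2 k j < CF h2 l i ↔ (k < l ∨ (k = l ∧ i < j)) := by
  rw [Fin.lt_def, CF_val, CF_val,
    cv_lt_cv_iff (by omega) (by omega) (by omega) (by omega) (by omega) (by omega)]
  simp only [Fin.lt_def, Fin.ext_iff]
  omega

lemma CF_lt_SF_iff : CF h2 k j < SF h2 l i ↔ k ≤ l := by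
  rw [Fin.lt_def, CF_val, SF_val,
    cv_lt_sv_iff (by omega) (by omega) (by omega) (by omega) (by omega) (by omega)]
  simp only [Fin.le_def]
  omega

lemma SF_lt_CF_iff : SF h2 k j < CF h2 l i ↔ k < l := by
  rw [Fin.lt_def, SF_val, CF_val,
    sv_lt_cv_iff (by omega) (by omega) (by omega) (by omega) (by omega) (by omega)]
  simp only [Fin.lt_def]
  omega

lemma SF_lt_SF_iff : SF h2 k j < SF h2 l i ↔ (k < l ∨ (k = l ∧ j < i)) := by
  rw [Fin.lt_def, SF_val, SF_val,
    sv_lt_sv_iff (by omega) (by omega) (by omega) (by omega) (by omega) (by omega)]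
  simp only [Fin.lt_def, Fin.ext_iff]
  omega

lemma CF_inj (h : CF h2 k j = CF h2 l i) : k = l ∧ j = i := by
  have hv := congrArg Fin.val h
  rw [CF_val, CF_val] at hv
  have hn1 : 1 ≤ n := by have := j.isLt; omega
  have := cv_inj hn1 (k := k.val+1) (j := j.val+1) (l := l.val+1) (i := i.val+1)
    (by omega) (by omega) (by omega) (by omega) (by omega) (by omega) hv
  constructor <;> [exact Fin.ext (by omega); exact Fin.ext (by omega)]

lemma SF_inj (h : SF h2 k j = SF h2 l i) : k = l ∧ j = i := by
  have hv := congrArg Fin.val h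
  rw [SF_val, SF_val] at hv
  have hn1 : 1 ≤ n := by have := j.isLt; omega
  have := sv_inj hn1 (k := k.val+1) (j := j.val+1) (l := l.val+1) (i := i.val+1)
    (by omega) (by omega) (by omega) (by omega) (by omega) (by omega) hv
  constructor <;> [exact Fin.ext (by omega); exact Fin.ext (by omega)]

lemma isCPos_CF (k : Fin m) (j : Fin n) : IsCPos n (CF h2 k j).val := by
  rw [CF_val]
  exact isCPos_cv (by have := j.isLt; omega) (by omega) (by omega) (by omega)

lemma not_isCPos_SF (k : Fin m) (j : Fin n) : ¬ IsCPos n (SF h2 k j).val := by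
  rw [SF_val]
  exact not_isCPos_sv (by have := j.isLt; omega) (by omega) (by omega) (by omega)

lemma CF_ne_SF : CF h2 k j ≠ SF h2 l i := by
  intro h
  exact not_isCPos_SF h2 l i (h ▸ isCPos_CF h2 k j)

end FinPos
end SPB
namespace SPB
variable {n m : ℕ}

/-! ### Structure of `QMap` -/

section QMapStruct
variable (h2 : 0 < 2*n*m) (Φ : Fin n → Setoid (Fin m))

lemma qRel_iff' (p q : Fin (2*n*m)) : QRel n m h2 Φ p q ↔
    ∃ (j : Fin n) (k : Fin m), p = CF h2 k j ∧ q = SF h2 (cycPredFn (Φ j) k) j := by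
  constructor
  · rintro ⟨j, k, k', hcp, hp, hq⟩
    refine ⟨j, k, hp, ?_⟩
    rw [cycPredFn_eq hcp]
    exact hq
  · rintro ⟨j, k, hp, hq⟩
    exact ⟨j, k, cycPredFn (Φ j) k, cycPredFn_spec _ k, hp, hq⟩

variable {h2 Φ}

lemma qRel_right_unique {p q q' : Fin (2*n*m)}
    (h1 : QRel n m h2 Φ p q) (h2' : QRel n m h2 Φ p q') : q = q' := by
  rw [qRel_iff'] at h1 h2'
  obtain ⟨j, k, hp, hq⟩ := h1
  obtain ⟨j', k', hp', hq'⟩ := h2'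
  obtain ⟨hk, hj⟩ := CF_inj h2 (hp ▸ hp')
  subst hk; subst hj
  rw [hq, hq']

lemma qRel_left_unique {p p' q : Fin (2*n*m)}
    (h1 : QRel n m h2 Φ p q) (h2' : QRel n m h2 Φ p' q) : p = p' := by
  rw [qRel_iff'] at h1 h2'
  obtain ⟨j, k, hp, hq⟩ := h1
  obtain ⟨j', k', hp', hq'⟩ := h2'
  obtain ⟨hk, hj⟩ := SF_inj h2 (hq ▸ hq')
  subst hj
  have hkk : k = k' := cycPredFn_inj (Φ j) hk
  subst hkk
  rw [hp, hp']

lemma qRel_shape {p q : Fin (2*n*m)} (h : QRel n m h2 Φ p q) :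
    IsCPos n p.val ∧ ¬ IsCPos n q.val := by
  rw [qRel_iff'] at h
  obtain ⟨j, k, hp, hq⟩ := h
  exact ⟨hp ▸ isCPos_CF h2 k j, hq ▸ not_isCPos_SF h2 _ j⟩

lemma qRel_not_chain {p q r : Fin (2*n*m)}
    (h1 : QRel n m h2 Φ p q) (h2' : QRel n m h2 Φ q r) : False :=
  (qRel_shape h1).2 (qRel_shape h2').1

lemma qRel_total_c {p : Fin (2*n*m)} (hc : IsCPos n p.val) :
    ∃ q, QRel n m h2 Φ p q := by
  have hn1 : 1 ≤ n := by
    rcases Nat.eq_zero_or_pos n with h | h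
    · subst h; simp at h2
    · exact h
  obtain ⟨k, j, hk1, hk2, hj1, hj2, hpv⟩ := c_decode hn1 p.isLt hc
  set k₀ : Fin m := ⟨k-1, by omega⟩
  set j₀ : Fin n := ⟨j-1, by omega⟩
  have hpC : p = CF h2 k₀ j₀ := by
    apply Fin.ext
    rw [CF_val, hpv]
    have e1 : k₀.val + 1 = k := by simp [k₀]; omega
    have e2 : j₀.val + 1 = j := by simp [j₀]; omega
    rw [e1, e2]
  exact ⟨SF h2 (cycPredFn (Φ j₀) k₀) j₀, (qRel_iff' h2 Φ _ _).mpr ⟨j₀, k₀, hpC, rfl⟩⟩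

lemma qRel_total_s {p : Fin (2*n*m)} (hc : ¬ IsCPos n p.val) :
    ∃ q, QRel n m h2 Φ q p := by
  have hn1 : 1 ≤ n := by
    rcases Nat.eq_zero_or_pos n with h | h
    · subst h; simp at h2
    · exact h
  obtain ⟨k, j, hk1, hk2, hj1, hj2, hpv⟩ := s_decode hn1 p.isLt hc
  set k₀ : Fin m := ⟨k-1, by omega⟩
  set j₀ : Fin n := ⟨j-1, by omega⟩
  have hpS : p = SF h2 k₀ j₀ := by
    apply Fin.ext
    rw [SF_val, hpv]
    have e1 : k₀.val + 1 = k := by simp [k₀]; omega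
    have e2 : j₀.val + 1 = j := by simp [j₀]; omega
    rw [e1, e2]
  obtain ⟨k₁, hk₁⟩ := cycPredFn_surj (Φ j₀) k₀
  exact ⟨CF h2 k₁ j₀, (qRel_iff' h2 Φ _ _).mpr ⟨j₀, k₁, rfl, by rw [hk₁, hpS]⟩⟩

lemma qmap_r_iff (p q : Fin (2*n*m)) : (QMap n m h2 Φ).r p q ↔
    p = q ∨ QRel n m h2 Φ p q ∨ QRel n m h2 Φ q p := by
  constructor
  · intro h
    induction h with
    | rel x y hr => exact Or.inr (Or.inl hr)
    | refl x => exact Or.inl rfl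
    | symm x y _ ih =>
      rcases ih with rfl | h | h
      · exact Or.inl rfl
      · exact Or.inr (Or.inr h)
      · exact Or.inr (Or.inl h)
    | trans x y z _ _ ih1 ih2 =>
      rcases ih1 with rfl | h1 | h1
      · exact ih2
      · rcases ih2 with rfl | h2 | h2
        · exact Or.inr (Or.inl h1)
        · exact absurd (qRel_not_chain h1 h2) (fun h => h)
        · exact Or.inl (qRel_left_unique h1 h2)
      · rcases ih2 with rfl | h2 | h2
        · exact Or.inr (Or.inr h1)
        · exact Or.inl (qRel_right_unique h1 h2)
        · exact absurd (qRel_not_chain h2 h1) (fun h => h)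
  · rintro (rfl | h | h)
    · exact Relation.EqvGen.refl p
    · exact Relation.EqvGen.rel _ _ h
    · exact Relation.EqvGen.symm _ _ (Relation.EqvGen.rel _ _ h)

lemma qmap_pair : IsPairPartition (QMap n m h2 Φ) := by
  intro p
  by_cases hc : IsCPos n p.val
  · obtain ⟨q, hq⟩ := qRel_total_c (Φ := Φ) (h2 := h2) hc
    have hqp : q ≠ p := by
      intro h
      exact (qRel_shape hq).2 (h ▸ hc)
    refine ⟨q, ⟨hqp, Relation.EqvGen.rel _ _ hq⟩, ?_⟩
    intro y hy
    rcases (qmap_r_iff p y).mp hy.2 with rfl | h | h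
    · exact absurd rfl hy.1
    · exact (qRel_right_unique hq h).symm
    · exact absurd hc (qRel_shape h).2
  · obtain ⟨q, hq⟩ := qRel_total_s (Φ := Φ) (h2 := h2) hc
    have hqp : q ≠ p := by
      intro h
      exact hc (h ▸ (qRel_shape hq).1)
    refine ⟨q, ⟨hqp, Relation.EqvGen.symm _ _ (Relation.EqvGen.rel _ _ hq)⟩, ?_⟩
    intro y hy
    rcases (qmap_r_iff p y).mp hy.2 with rfl | h | h
    · exact absurd rfl hy.1
    · exact absurd (qRel_shape h).1 hc
    · exact (qRel_left_unique hq h).symm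

lemma qmap_cstar : ∀ p q : Fin (2*n*m), p ≠ q → (QMap n m h2 Φ).r p q →
    (IsCPos n p.val ↔ ¬ IsCPos n q.val) := by
  intro p q hne h
  rcases (qmap_r_iff p q).mp h with rfl | h | h
  · exact absurd rfl hne
  · have := qRel_shape h
    constructor
    · intro _; exact this.2
    · intro _; exact this.1
  · have := qRel_shape h
    constructor
    · intro hp; exact absurd hp this.2
    · intro hq; exact absurd this.1 hq

end QMapStruct
end SPB
namespace SPB
variable {n m : ℕ}

section QNC
variable {h2 : 0 < 2*n*m} {Φ : Fin n → Setoid (Fin m)}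

/-- a `QMap`-pair, sorted by position, is either an F-arc or a D-arc -/
lemma arc_sorted {a b : Fin (2*n*m)} (hab : a < b)
    (h : QRel n m h2 Φ a b ∨ QRel n m h2 Φ b a) :
    (∃ (j : Fin n) (k k' : Fin m), (Φ j).r k k' ∧ (∀ l, (Φ j).r k l → k ≤ l) ∧
        (∀ l, (Φ j).r k l → l ≤ k') ∧ k ≤ k' ∧ a = CF h2 k j ∧ b = SF h2 k' j) ∨
    (∃ (j : Fin n) (k k' : Fin m), (Φ j).r k k' ∧ k' < k ∧
        (∀ l, (Φ j).r k l → l < k → l ≤ k') ∧ a = SF h2 k' j ∧ b = CF h2 k j) := by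
  rcases h with h | h
  · obtain ⟨j, k, k', hcp, ha, hb⟩ := h
    rcases hcp.2 with ⟨hlt, _⟩ | ⟨hmin, hmax⟩
    · exfalso
      rw [ha, hb] at hab
      have : (k : Fin m) ≤ k' := (CF_lt_SF_iff h2).mp hab
      exact absurd hlt (not_lt.mpr this)
    · exact Or.inl ⟨j, k, k', hcp.1, hmin, hmax, hmin k' hcp.1, ha, hb⟩
  · obtain ⟨j, k, k', hcp, hb, ha⟩ := h
    rcases hcp.2 with ⟨hlt, hgap⟩ | ⟨hmin, hmax⟩
    · exact Or.inr ⟨j, k, k', hcp.1, hlt, hgap, ha, hb⟩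
    · exfalso
      rw [ha, hb] at hab
      have h1 : (k' : Fin m) < k := (SF_lt_CF_iff h2).mp hab
      exact absurd (hmin k' hcp.1) (not_le.mpr h1)

lemma qmap_noncrossing (hnc : ∀ j, IsNoncrossing (Φ j)) (hmono : Monotone Φ) :
    IsNoncrossing (QMap n m h2 Φ) := by
  rintro ⟨p, q, p', q', h1, h2', h3, hpp, hqq, hnpq⟩
  clear hnpq
  have hplt : p < p' := lt_trans h1 h2'
  have hqlt : q < q' := lt_trans h2' h3
  have hA : QRel n m h2 Φ p p' ∨ QRel n m h2 Φ p' p := by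
    rcases (qmap_r_iff p p').mp hpp with heq | h | h
    · exact absurd heq (ne_of_lt hplt)
    · exact Or.inl h
    · exact Or.inr h
  have hB : QRel n m h2 Φ q q' ∨ QRel n m h2 Φ q' q := by
    rcases (qmap_r_iff q q').mp hqq with heq | h | h
    · exact absurd heq (ne_of_lt hqlt)
    · exact Or.inl h
    · exact Or.inr h
  rcases arc_sorted hplt hA with
      ⟨j, k, k', hrel1, hmin1, hmax1, hkk', hp, hp'⟩ |
      ⟨j, k, k', hrel1, hk'k, hgap1, hp, hp'⟩ <;>
    rcases arc_sorted hqlt hB with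
      ⟨i, l, l', hrel2, hmin2, hmax2, hll', hq, hq'⟩ |
      ⟨i, l, l', hrel2, hl'l, hgap2, hq, hq'⟩ <;>
    subst hp <;> subst hp' <;> subst hq <;> subst hq'
  -- Case FF
  · rw [CF_lt_CF_iff] at h1
    rw [CF_lt_SF_iff] at h2'
    rw [SF_lt_SF_iff] at h3
    rcases le_total i j with hij | hji
    · have rel2 : (Φ j).r l l' := Setoid.le_def.mp (hmono hij) hrel2
      rcases h3 with hkl' | ⟨heq, hlt⟩
      · have hnkl : ¬ (Φ j).r k l := fun h =>
          absurd (hmax1 l' ((Φ j).trans h rel2)) (not_le.mpr hkl')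
        have hkl : k < l := by
          rcases h1 with h | ⟨heq, _⟩
          · exact h
          · exact absurd ((Φ j).refl k) (heq ▸ hnkl)
        have hlk' : l < k' := by
          rcases eq_or_lt_of_le h2' with heq | h
          · exact absurd (heq ▸ hrel1) hnkl
          · exact h
        exact hnc j ⟨k, l, k', l', hkl, hlk', hkl', hrel1, rel2, hnkl⟩
      · exact absurd hlt (not_lt.mpr hij)
    · have rel1 : (Φ i).r k k' := Setoid.le_def.mp (hmono hji) hrel1
      rcases h3 with hkl' | ⟨heq, hlt⟩
      · have hnkl : ¬ (Φ i).r k l := by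
          intro h
          have hlk : l ≤ k := hmin2 k ((Φ i).symm h)
          rcases h1 with hh | ⟨heq', hlt'⟩
          · exact absurd hh (not_lt.mpr hlk)
          · exact absurd hlt' (not_lt.mpr hji)
        have hkl : k < l := by
          rcases h1 with h | ⟨_, hlt'⟩
          · exact h
          · exact absurd hlt' (not_lt.mpr hji)
        have hlk' : l < k' := by
          rcases eq_or_lt_of_le h2' with heq' | h
          · exact absurd (heq' ▸ rel1) hnkl
          · exact h
        exact hnc i ⟨k, l, k', l', hkl, hlk', hkl', rel1, hrel2, hnkl⟩
      · subst heq
        have hklrel : (Φ i).r k l := (Φ i).trans rel1 ((Φ i).symm hrel2)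
        have hlk : l ≤ k := hmin2 k ((Φ i).symm hklrel)
        rcases h1 with h | ⟨_, hlt'⟩
        · exact absurd h (not_lt.mpr hlk)
        · exact absurd hlt' (not_lt.mpr hji)
  -- Case FD
  · rw [CF_lt_SF_iff] at h1
    rw [SF_lt_SF_iff] at h2'
    rw [SF_lt_CF_iff] at h3
    rcases le_total i j with hij | hji
    · -- use Φ j
      have rel2 : (Φ j).r l l' := Setoid.le_def.mp (hmono hij) hrel2
      rcases h2' with hl'k' | ⟨heq, _⟩
      · have hnkl' : ¬ (Φ j).r k l' := by
          intro h
          have : (Φ j).r k l := (Φ j).trans h ((Φ j).symm rel2)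
          exact absurd (hmax1 l this) (not_le.mpr h3)
        have hkl' : k < l' := by
          rcases eq_or_lt_of_le h1 with heq | h
          · exact absurd (heq ▸ (Φ j).refl k) hnkl'
          · exact h
        exact hnc j ⟨k, l', k', l, hkl', hl'k', h3, hrel1, (Φ j).symm rel2, hnkl'⟩
      · subst heq
        have hkl : (Φ j).r k l := (Φ j).trans hrel1 ((Φ j).symm rel2)
        exact absurd (hmax1 l hkl) (not_le.mpr h3)
    · -- use Φ i
      have rel1 : (Φ i).r k k' := Setoid.le_def.mp (hmono hji) hrel1
      rcases h2' with hl'k' | ⟨heq, hlt⟩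
      · have hnkl' : ¬ (Φ i).r k l' := by
          intro h
          have hlk' : (Φ i).r l k' := (Φ i).trans (hrel2) ((Φ i).trans ((Φ i).symm h) rel1)
          exact absurd (hgap2 k' hlk' h3) (not_le.mpr hl'k')
        have hkl' : k < l' := by
          rcases eq_or_lt_of_le h1 with heq | h
          · exact absurd (heq ▸ (Φ i).refl k) hnkl'
          · exact h
        exact hnc i ⟨k, l', k', l, hkl', hl'k', h3, rel1, (Φ i).symm hrel2, hnkl'⟩
      · exact absurd hlt (not_lt.mpr hji)
  -- Case DF
  · rw [SF_lt_CF_iff] at h1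
    rw [CF_lt_CF_iff] at h2'
    rw [CF_lt_SF_iff] at h3
    rcases le_total i j with hij | hji
    · have rel2 : (Φ j).r l l' := Setoid.le_def.mp (hmono hij) hrel2
      have hlk : l < k := by
        rcases h2' with h | ⟨_, hlt⟩
        · exact h
        · exact absurd hlt (not_lt.mpr hij)
      have hnkl : ¬ (Φ j).r k l := fun h =>
        absurd (hgap1 l h hlk) (not_le.mpr h1)
      have hnk'l : ¬ (Φ j).r k' l := fun h =>
        hnkl ((Φ j).trans hrel1 h)
      have hkl' : k < l' := by
        rcases eq_or_lt_of_le h3 with heq | h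
        · exact absurd (heq ▸ ((Φ j).symm rel2)) hnkl
        · exact h
      exact hnc j ⟨k', l, k, l', h1, hlk, hkl', (Φ j).symm hrel1, rel2, hnk'l⟩
    · have rel1 : (Φ i).r k k' := Setoid.le_def.mp (hmono hji) hrel1
      rcases h2' with hlk | ⟨heq, hlt⟩
      · have hnk'l : ¬ (Φ i).r k' l := by
          intro h
          exact absurd (hmin2 k' ((Φ i).symm h)) (not_le.mpr h1)
        have hkl' : k < l' := by
          rcases eq_or_lt_of_le h3 with heq | h
          · exfalso
            have hlk'' : (Φ i).r l k := heq ▸ hrel2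
            exact hnk'l ((Φ i).trans ((Φ i).symm rel1) ((Φ i).symm hlk''))
          · exact h
        exact hnc i ⟨k', l, k, l', h1, hlk, hkl', (Φ i).symm rel1, hrel2, hnk'l⟩
      · subst heq
        have : (Φ i).r l k' := rel1
        exact absurd (hmin2 k' this) (not_le.mpr h1)
  -- Case DD
  · rw [SF_lt_SF_iff] at h1
    rw [SF_lt_CF_iff] at h2'
    rw [CF_lt_CF_iff] at h3
    rcases le_total i j with hij | hji
    · have rel2 : (Φ j).r l l' := Setoid.le_def.mp (hmono hij) hrel2
      have hk'l' : k' < l' := by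
        rcases h1 with h | ⟨_, hlt⟩
        · exact h
        · exact absurd hlt (not_lt.mpr hij)
      rcases h3 with hkl | ⟨heq, _⟩
      · have hnk'l' : ¬ (Φ j).r k' l' := by
          intro h
          have : (Φ j).r k l' := (Φ j).trans hrel1 h
          exact absurd (hgap1 l' this h2') (not_le.mpr hk'l')
        exact hnc j ⟨k', l', k, l, hk'l', h2', hkl, (Φ j).symm hrel1, (Φ j).symm rel2, hnk'l'⟩
      · subst heq
        have : (Φ j).r k l' := rel2
        exact absurd (hgap1 l' this h2') (not_le.mpr hk'l')
    · have rel1 : (Φ i).r k k' := Setoid.le_def.mp (hmono hji) hrel1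
      have hkl : k < l := by
        rcases h3 with h | ⟨_, hlt⟩
        · exact h
        · exact absurd hlt (not_lt.mpr hji)
      rcases h1 with hk'l' | ⟨heq, hlt⟩
      · have hnk'l' : ¬ (Φ i).r k' l' := by
          intro h
          have : (Φ i).r l k := (Φ i).symm ((Φ i).trans rel1 ((Φ i).trans h ((Φ i).symm hrel2)))
          exact absurd (hgap2 k this hkl) (not_le.mpr h2')
        exact hnc i ⟨k', l', k, l, hk'l', h2', hkl, (Φ i).symm rel1, (Φ i).symm hrel2, hnk'l'⟩
      · subst heq
        have : (Φ i).r l k := (Φ i).symm ((Φ i).trans rel1 ((Φ i).symm hrel2))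
        exact absurd (hgap2 k this hkl) (not_le.mpr h2')

end QNC
end SPB
namespace SPB
variable {n m : ℕ}

section PartBFinish
variable {h2 : 0 < 2*n*m} {Φ : Fin n → Setoid (Fin m)}

lemma phiRel_qmap (j : Fin n) :
    PhiRel n m h2 (QMap n m h2 Φ) (j.val + 1) = Φ j := by
  apply Setoid.ext
  intro a b
  have hgen : ∀ k k' : Fin m,
      ((QMap n m h2 Φ).r (CF h2 k j) (SF h2 k' j) ↔ CycPred (Φ j) k k') := by
    intro k k'
    rw [qmap_r_iff]
    constructor
    · rintro (heq | h | h)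
      · exact absurd heq (CF_ne_SF h2)
      · rw [qRel_iff'] at h
        obtain ⟨j₂, k₂, hpe, hqe⟩ := h
        obtain ⟨hk, hj⟩ := CF_inj h2 hpe
        subst hk; subst hj
        obtain ⟨hk', _⟩ := SF_inj h2 hqe
        exact hk' ▸ cycPredFn_spec (Φ j) k
      · exact absurd (qRel_shape h).1 (not_isCPos_SF h2 k' j)
    · intro h
      exact Or.inr (Or.inl ⟨j, k, k', h, rfl, rfl⟩)
  show Relation.EqvGen _ a b ↔ (Φ j).r a b
  constructor
  · intro h
    induction h with
    | rel x y hr => exact ((hgen x y).mp hr).1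
    | refl x => exact (Φ j).refl x
    | symm x y _ ih => exact (Φ j).symm ih
    | trans x y z _ _ ih1 ih2 => exact (Φ j).trans ih1 ih2
  · intro h
    have h' := (eqvGen_cycPred (Φ j) a b).mpr h
    exact Relation.EqvGen.mono (fun u v huv => (hgen u v).mpr huv) _ _ h'

lemma partB (hnc : ∀ j, IsNoncrossing (Φ j)) (hmono : Monotone Φ) :
    IsStarPairing n m (QMap n m h2 Φ) ∧
      (fun j : Fin n => PhiRel n m h2 (QMap n m h2 Φ) (j.val + 1)) = Φ :=
  ⟨⟨qmap_noncrossing hnc hmono, qmap_pair, qmap_cstar⟩,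
    funext fun j => phiRel_qmap j⟩

end PartBFinish
end SPB
namespace SPB
variable {n m : ℕ}

section PartA
variable {h2 : 0 < 2*n*m} {π : Setoid (Fin (2*n*m))}

/-- the level-`j` pairing relation induced by `π` -/
def RL (h2 : 0 < 2*n*m) (π : Setoid (Fin (2*n*m))) (j : Fin n) (k k' : Fin m) : Prop :=
  π.r (CF h2 k j) (SF h2 k' j)

lemma phiRel_eqvGen (j : Fin n) (u v : Fin m) :
    (PhiRel n m h2 π (j.val+1)).r u v ↔ Relation.EqvGen (RL h2 π j) u v := Iff.rfl

lemma eq_CF_of_val {p : Fin (2*n*m)} {k j : ℕ} (hk1 : 1 ≤ k) (hk2 : k ≤ m)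
    (hj1 : 1 ≤ j) (hj2 : j ≤ n) (hv : p.val = cv n k j) :
    p = CF h2 ⟨k-1, by omega⟩ ⟨j-1, by omega⟩ := by
  apply Fin.ext
  rw [CF_val, hv]
  show cv n k j = cv n (k-1+1) (j-1+1)
  have e1 : (k-1) + 1 = k := by omega
  have e2 : (j-1) + 1 = j := by omega
  rw [e1, e2]

lemma eq_SF_of_val {p : Fin (2*n*m)} {k j : ℕ} (hk1 : 1 ≤ k) (hk2 : k ≤ m)
    (hj1 : 1 ≤ j) (hj2 : j ≤ n) (hv : p.val = sv n k j) :
    p = SF h2 ⟨k-1, by omega⟩ ⟨j-1, by omega⟩ := by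
  apply Fin.ext
  rw [SF_val, hv]
  show sv n k j = sv n (k-1+1) (j-1+1)
  have e1 : (k-1) + 1 = k := by omega
  have e2 : (j-1) + 1 = j := by omega
  rw [e1, e2]

lemma rl_right_unique (hsp : IsStarPairing n m π) {j : Fin n} {k a b : Fin m}
    (ha : RL h2 π j k a) (hb : RL h2 π j k b) : a = b := by
  have hA : SF h2 a j = partner hsp.2.1 (CF h2 k j) :=
    partner_eq hsp.2.1 (Ne.symm (CF_ne_SF h2)) ha
  have hB : SF h2 b j = partner hsp.2.1 (CF h2 k j) :=
    partner_eq hsp.2.1 (Ne.symm (CF_ne_SF h2)) hb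
  exact (SF_inj h2 (hA.trans hB.symm)).1

lemma rl_left_unique (hsp : IsStarPairing n m π) {j : Fin n} {a b k' : Fin m}
    (ha : RL h2 π j a k') (hb : RL h2 π j b k') : a = b := by
  have hA : CF h2 a j = partner hsp.2.1 (SF h2 k' j) :=
    partner_eq hsp.2.1 (CF_ne_SF h2) (π.symm ha)
  have hB : CF h2 b j = partner hsp.2.1 (SF h2 k' j) :=
    partner_eq hsp.2.1 (CF_ne_SF h2) (π.symm hb)
  exact (CF_inj h2 (hA.trans hB.symm)).1

lemma rl_exists (hsp : IsStarPairing n m π) (j : Fin n) (k : Fin m) :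
    ∃ k', RL h2 π j k k' := by
  have hn1 : 1 ≤ n := by have := j.isLt; omega
  set p := CF h2 k j with hp
  set q := partner hsp.2.1 p with hq
  have hr : π.r p q := partner_rel _ p
  have hne : p ≠ q := Ne.symm (partner_ne _ p)
  obtain ⟨k₂, k₂', j₂, hk1, hk2, hk1', hk2', hj1, hj2, hpv, hqv⟩ :=
    pair_decode hn1 hsp hr hne (isCPos_CF h2 k j)
  have hpv' : p.val = cv n (k.val+1) (j.val+1) := CF_val h2 k j
  have hinj := cv_inj hn1 hk1 hj1 hj2 (by omega) (by omega) (by omega)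
    (hpv.symm.trans hpv')
  have hqS : q = SF h2 ⟨k₂'-1, by omega⟩ ⟨j₂-1, by omega⟩ :=
    eq_SF_of_val hk1' hk2' hj1 hj2 hqv
  have hjf : (⟨j₂-1, by omega⟩ : Fin n) = j := Fin.ext (by simp; omega)
  rw [hjf] at hqS
  refine ⟨⟨k₂'-1, by omega⟩, ?_⟩
  show π.r p (SF h2 _ j)
  rw [← hqS]
  exact hr

noncomputable def sigmaF (hsp : IsStarPairing n m π) (h2 : 0 < 2*n*m) (j : Fin n)
    (k : Fin m) : Fin m := (rl_exists (h2 := h2) hsp j k).choose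

lemma sigmaF_rl (hsp : IsStarPairing n m π) (j : Fin n) (k : Fin m) :
    RL h2 π j k (sigmaF hsp h2 j k) := (rl_exists hsp j k).choose_spec

lemma rl_eq_sigmaF (hsp : IsStarPairing n m π) {j : Fin n} {k k' : Fin m}
    (h : RL h2 π j k k') : sigmaF hsp h2 j k = k' :=
  rl_right_unique hsp (sigmaF_rl hsp j k) h

lemma sigmaF_inj (hsp : IsStarPairing n m π) (j : Fin n) :
    Function.Injective (sigmaF hsp h2 j) := by
  intro a b hab
  exact rl_left_unique hsp (sigmaF_rl hsp j a) (hab ▸ sigmaF_rl hsp j b)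

lemma sigmaF_phiRel (hsp : IsStarPairing n m π) (j : Fin n) (k : Fin m) :
    (PhiRel n m h2 π (j.val+1)).r k (sigmaF hsp h2 j k) :=
  (phiRel_eqvGen j _ _).mpr (Relation.EqvGen.rel _ _ (sigmaF_rl hsp j k))

/-- D-window invariance at a single level -/
lemma window_D (hsp : IsStarPairing n m π) {j : Fin n} {k k' : Fin m}
    (hkk' : RL h2 π j k k') (hlt : k' < k) :
    ∀ u v, RL h2 π j u v → ((k' < u ∧ u < k) ↔ (k' < v ∧ v < k)) := by
  intro u v huv
  have hab : π.r (SF h2 k' j) (CF h2 k j) := π.symm hkk'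
  have habl : SF h2 k' j < CF h2 k j := (SF_lt_CF_iff h2).mpr hlt
  constructor
  · rintro ⟨h1, h2'⟩
    have hx1 : SF h2 k' j < CF h2 u j := (SF_lt_CF_iff h2).mpr h1
    have hx2 : CF h2 u j < CF h2 k j := (CF_lt_CF_iff h2).mpr (Or.inl h2')
    have hin := inside_closed hsp hab habl hx1 hx2
    have hpe : SF h2 v j = partner hsp.2.1 (CF h2 u j) :=
      partner_eq hsp.2.1 (Ne.symm (CF_ne_SF h2)) huv
    rw [← hpe] at hin
    obtain ⟨ha, hb⟩ := hin
    have h1' := (SF_lt_SF_iff h2).mp ha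
    have h2'' := (SF_lt_CF_iff h2).mp hb
    refine ⟨?_, h2''⟩
    rcases h1' with h | ⟨_, hj⟩
    · exact h
    · exact absurd hj (lt_irrefl j)
  · rintro ⟨h1, h2'⟩
    have hx1 : SF h2 k' j < SF h2 v j := (SF_lt_SF_iff h2).mpr (Or.inl h1)
    have hx2 : SF h2 v j < CF h2 k j := (SF_lt_CF_iff h2).mpr h2'
    have hin := inside_closed hsp hab habl hx1 hx2
    have hpe : CF h2 u j = partner hsp.2.1 (SF h2 v j) :=
      partner_eq hsp.2.1 (CF_ne_SF h2) (π.symm huv)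
    rw [← hpe] at hin
    obtain ⟨ha, hb⟩ := hin
    have h1' := (SF_lt_CF_iff h2).mp ha
    have h2'' := (CF_lt_CF_iff h2).mp hb
    refine ⟨h1', ?_⟩
    rcases h2'' with h | ⟨_, hj⟩
    · exact h
    · exact absurd hj (lt_irrefl j)

/-- F-window invariance at a single level -/
lemma window_F (hsp : IsStarPairing n m π) {j : Fin n} {k k' : Fin m}
    (hkk' : RL h2 π j k k') (hle : k ≤ k') :
    ∀ u v, RL h2 π j u v → ((k ≤ u ∧ u ≤ k') ↔ (k ≤ v ∧ v ≤ k')) := by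
  intro u v huv
  have habl : CF h2 k j < SF h2 k' j := (CF_lt_SF_iff h2).mpr hle
  constructor
  · rintro ⟨h1, h2'⟩
    rcases eq_or_lt_of_le h1 with heq | hku
    · have : v = k' := rl_right_unique hsp (heq ▸ huv) hkk'
      rw [this]
      exact ⟨hle, le_refl k'⟩
    · have hx1 : CF h2 k j < CF h2 u j := (CF_lt_CF_iff h2).mpr (Or.inl hku)
      have hx2 : CF h2 u j < SF h2 k' j := (CF_lt_SF_iff h2).mpr h2'
      have hin := inside_closed hsp hkk' habl hx1 hx2
      have hpe : SF h2 v j = partner hsp.2.1 (CF h2 u j) :=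
        partner_eq hsp.2.1 (Ne.symm (CF_ne_SF h2)) huv
      rw [← hpe] at hin
      obtain ⟨ha, hb⟩ := hin
      have h1' := (CF_lt_SF_iff h2).mp ha
      have h2'' := (SF_lt_SF_iff h2).mp hb
      refine ⟨h1', ?_⟩
      rcases h2'' with h | ⟨_, hj⟩
      · exact le_of_lt h
      · exact absurd hj (lt_irrefl j)
  · rintro ⟨h1, h2'⟩
    rcases eq_or_lt_of_le h2' with heq | hvk'
    · have : u = k := rl_left_unique hsp (heq ▸ huv) hkk'
      rw [this]
      exact ⟨le_refl k, hle⟩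
    · have hx1 : CF h2 k j < SF h2 v j := (CF_lt_SF_iff h2).mpr h1
      have hx2 : SF h2 v j < SF h2 k' j := (SF_lt_SF_iff h2).mpr (Or.inl hvk')
      have hin := inside_closed hsp hkk' habl hx1 hx2
      have hpe : CF h2 u j = partner hsp.2.1 (SF h2 v j) :=
        partner_eq hsp.2.1 (CF_ne_SF h2) (π.symm huv)
      rw [← hpe] at hin
      obtain ⟨ha, hb⟩ := hin
      have h1' := (CF_lt_CF_iff h2).mp ha
      have h2'' := (CF_lt_SF_iff h2).mp hb
      refine ⟨?_, h2''⟩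
      rcases h1' with h | ⟨_, hj⟩
      · exact le_of_lt h
      · exact absurd hj (lt_irrefl j)

end PartA
end SPB
namespace SPB
variable {n m : ℕ}

section PartA2
variable {h2 : 0 < 2*n*m} {π : Setoid (Fin (2*n*m))}

lemma rl_cycPred (hsp : IsStarPairing n m π) {j : Fin n} {k k' : Fin m}
    (h : RL h2 π j k k') : CycPred (PhiRel n m h2 π (j.val+1)) k k' := by
  have hrel : (PhiRel n m h2 π (j.val+1)).r k k' :=
    (phiRel_eqvGen j k k').mpr (Relation.EqvGen.rel _ _ h)
  rcases lt_or_ge k' k with hlt | hle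
  · refine ⟨hrel, Or.inl ⟨hlt, ?_⟩⟩
    intro l hl hlk
    by_contra hcon
    push_neg at hcon
    have hP := eqvGen_pred (P := fun u => k' < u ∧ u < k)
      (window_D hsp h hlt) ((phiRel_eqvGen j k l).mp hl)
    exact lt_irrefl k (hP.mpr ⟨hcon, hlk⟩).2
  · refine ⟨hrel, Or.inr ⟨?_, ?_⟩⟩
    · intro l hl
      exact ((eqvGen_pred (P := fun u => k ≤ u ∧ u ≤ k')
        (window_F hsp h hle) ((phiRel_eqvGen j k l).mp hl)).mp ⟨le_refl k, hle⟩).1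
    · intro l hl
      exact ((eqvGen_pred (P := fun u => k ≤ u ∧ u ≤ k')
        (window_F hsp h hle) ((phiRel_eqvGen j k l).mp hl)).mp ⟨le_refl k, hle⟩).2

lemma phi_noncrossing (hsp : IsStarPairing n m π) (j : Fin n) :
    IsNoncrossing (PhiRel n m h2 π (j.val+1)) := by
  classical
  rintro ⟨p, q, p', q', h1, h2', h3, hpp, hqq, hnpq⟩
  set Φj := PhiRel n m h2 π (j.val+1) with hΦ
  have hSne : (Finset.univ.filter (fun x => Φj.r p x ∧ q < x)).Nonempty :=
    ⟨p', Finset.mem_filter.mpr ⟨Finset.mem_univ p', hpp, h2'⟩⟩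
  set p'' := (Finset.univ.filter (fun x => Φj.r p x ∧ q < x)).min' hSne with hp''
  have hmem := Finset.mem_filter.mp (Finset.min'_mem _ hSne)
  obtain ⟨-, hpp'', hqp''⟩ := hmem
  have hle_p' : p'' ≤ p' := Finset.min'_le _ _
    (Finset.mem_filter.mpr ⟨Finset.mem_univ p', hpp, h2'⟩)
  set s := sigmaF hsp h2 j p'' with hs
  have hrl : RL h2 π j p'' s := sigmaF_rl hsp j p''
  have hcp := rl_cycPred hsp hrl
  rcases hcp.2 with ⟨hlt, hgap⟩ | ⟨hmin, hmax⟩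
  · have hps : Φj.r p s := Φj.trans hpp'' hcp.1
    have hsq : s < q := by
      rcases lt_trichotomy s q with h | h | h
      · exact h
      · exact absurd (h ▸ hps) hnpq
      · exfalso
        have hmem2 : p'' ≤ s := Finset.min'_le _ _
          (Finset.mem_filter.mpr ⟨Finset.mem_univ s, hps, h⟩)
        exact absurd hlt (not_lt.mpr hmem2)
    have hP := eqvGen_pred (P := fun u => s < u ∧ u < p'')
      (window_D hsp hrl hlt) ((phiRel_eqvGen j q q').mp hqq)
    have hq'lt : q' < p'' := (hP.mp ⟨hsq, hqp''⟩).2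
    exact absurd hq'lt (not_lt.mpr (le_of_lt (lt_of_le_of_lt hle_p' h3)))
  · have : p'' ≤ p := hmin p (Φj.symm hpp'')
    exact absurd (lt_trans h1 hqp'') (not_lt.mpr this)

lemma phiRel_step (hsp : IsStarPairing n m π) {j j₁ : Fin n} (hj : j₁.val = j.val + 1) :
    PhiRel n m h2 π (j.val+1) ≤ PhiRel n m h2 π (j₁.val+1) := by
  rw [Setoid.le_def]
  intro x y hxy
  have h := (phiRel_eqvGen j x y).mp hxy
  clear hxy
  induction h with
  | rel u v huv =>
    have hinj := sigmaF_inj (h2 := h2) hsp j₁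
    have hrel : ∀ w, (PhiRel n m h2 π (j₁.val+1)).r w (sigmaF hsp h2 j₁ w) :=
      sigmaF_phiRel hsp j₁
    rcases lt_or_ge v u with hlt | hle
    · apply orbit_connect _ (sigmaF hsp h2 j₁) hinj hrel u v (le_of_lt hlt)
      intro w hvw hwu
      have hx1 : SF h2 v j < CF h2 w j₁ := (SF_lt_CF_iff h2).mpr hvw
      have hx2 : CF h2 w j₁ < CF h2 u j := by
        apply (CF_lt_CF_iff h2).mpr
        rcases eq_or_lt_of_le hwu with heq | hh
        · exact Or.inr ⟨heq, by rw [Fin.lt_def]; omega⟩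
        · exact Or.inl hh
      have hab : π.r (SF h2 v j) (CF h2 u j) := π.symm huv
      have habl : SF h2 v j < CF h2 u j := (SF_lt_CF_iff h2).mpr hlt
      have hin := inside_closed hsp hab habl hx1 hx2
      have hpe : SF h2 (sigmaF hsp h2 j₁ w) j₁ = partner hsp.2.1 (CF h2 w j₁) :=
        partner_eq hsp.2.1 (Ne.symm (CF_ne_SF h2)) (sigmaF_rl hsp j₁ w)
      rw [← hpe] at hin
      obtain ⟨ha, hb⟩ := hin
      have h1' := (SF_lt_SF_iff h2).mp ha
      have h2'' := (SF_lt_CF_iff h2).mp hb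
      refine ⟨?_, h2''⟩
      rcases h1' with hh | ⟨heq, _⟩
      · exact le_of_lt hh
      · exact le_of_eq heq
    · have hvu : (PhiRel n m h2 π (j₁.val+1)).r v u := by
        apply orbit_connect _ (sigmaF hsp h2 j₁) hinj hrel v u hle
        intro w huw hwv
        have hx1 : CF h2 u j < CF h2 w j₁ := (CF_lt_CF_iff h2).mpr (Or.inl huw)
        have hx2 : CF h2 w j₁ < SF h2 v j := (CF_lt_SF_iff h2).mpr hwv
        have habl : CF h2 u j < SF h2 v j := (CF_lt_SF_iff h2).mpr hle
        have hin := inside_closed hsp huv habl hx1 hx2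
        have hpe : SF h2 (sigmaF hsp h2 j₁ w) j₁ = partner hsp.2.1 (CF h2 w j₁) :=
          partner_eq hsp.2.1 (Ne.symm (CF_ne_SF h2)) (sigmaF_rl hsp j₁ w)
        rw [← hpe] at hin
        obtain ⟨ha, hb⟩ := hin
        have h1' := (CF_lt_SF_iff h2).mp ha
        have h2'' := (SF_lt_SF_iff h2).mp hb
        refine ⟨h1', ?_⟩
        rcases h2'' with hh | ⟨_, hj'⟩
        · exact hh
        · exfalso; rw [Fin.lt_def] at hj'; omega
      exact (PhiRel n m h2 π (j₁.val+1)).symm hvu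
  | refl x => exact (PhiRel n m h2 π (j₁.val+1)).refl x
  | symm x y _ ih => exact (PhiRel n m h2 π (j₁.val+1)).symm ih
  | trans x y z _ _ ih1 ih2 => exact (PhiRel n m h2 π (j₁.val+1)).trans ih1 ih2

lemma phiRel_mono (hsp : IsStarPairing n m π) :
    Monotone (fun j : Fin n => PhiRel n m h2 π (j.val+1)) := by
  have key : ∀ d : ℕ, ∀ j j' : Fin n, j'.val = j.val + d →
      PhiRel n m h2 π (j.val+1) ≤ PhiRel n m h2 π (j'.val+1) := by
    intro d
    induction d with
    | zero =>
      intro j j' h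
      have : j = j' := Fin.ext (by omega)
      subst this
      exact le_refl _
    | succ d ih =>
      intro j j' h
      have hj'' : j.val + d < n := by have := j'.isLt; omega
      have hstep1 := ih j ⟨j.val + d, hj''⟩ rfl
      have hstep2 := phiRel_step (h2 := h2) hsp (j := ⟨j.val + d, hj''⟩) (j₁ := j')
        (by show j'.val = j.val + d + 1; omega)
      exact le_trans hstep1 hstep2
  intro j j' hjj'
  have hv : j.val ≤ j'.val := hjj'
  exact key (j'.val - j.val) j j' (by omega)

lemma qmap_phiRel (hsp : IsStarPairing n m π) :
    QMap n m h2 (fun j : Fin n => PhiRel n m h2 π (j.val+1)) = π := by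
  apply Setoid.ext
  intro a b
  have hn1 : 1 ≤ n := by
    rcases Nat.eq_zero_or_pos n with h0 | h0
    · subst h0; simp at h2
    · exact h0
  constructor
  · intro h
    rcases (qmap_r_iff a b).mp h with rfl | hq | hq
    · exact π.refl a
    · obtain ⟨j, k, k', hcp, rfl, rfl⟩ := hq
      have hs := sigmaF_rl (h2 := h2) hsp j k
      have heq : sigmaF hsp h2 j k = k' := cycPred_unique (rl_cycPred hsp hs) hcp
      exact heq ▸ hs
    · obtain ⟨j, k, k', hcp, rfl, rfl⟩ := hq
      have hs := sigmaF_rl (h2 := h2) hsp j k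
      have heq : sigmaF hsp h2 j k = k' := cycPred_unique (rl_cycPred hsp hs) hcp
      exact π.symm (heq ▸ hs)
  · intro h
    apply (qmap_r_iff a b).mpr
    by_cases hab : a = b
    · exact Or.inl hab
    by_cases hc : IsCPos n a.val
    · obtain ⟨k, k', j, hk1, hk2, hk1', hk2', hj1, hj2, hav, hbv⟩ :=
        pair_decode hn1 hsp h hab hc
      set jf : Fin n := ⟨j-1, by omega⟩ with hjf
      set kf : Fin m := ⟨k-1, by omega⟩ with hkf
      set kf' : Fin m := ⟨k'-1, by omega⟩ with hkf'
      have ha' : a = CF h2 kf jf := eq_CF_of_val hk1 hk2 hj1 hj2 hav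
      have hb' : b = SF h2 kf' jf := eq_SF_of_val hk1' hk2' hj1 hj2 hbv
      have hrl : RL h2 π jf kf kf' := by
        show π.r (CF h2 kf jf) (SF h2 kf' jf)
        rw [← ha', ← hb']
        exact h
      exact Or.inr (Or.inl ⟨jf, kf, kf', rl_cycPred hsp hrl, ha', hb'⟩)
    · have hcb : IsCPos n b.val := by
        by_contra hcb
        exact hc ((hsp.2.2 a b hab h).mpr hcb)
      obtain ⟨k, k', j, hk1, hk2, hk1', hk2', hj1, hj2, hbv, hav⟩ :=
        pair_decode hn1 hsp (π.symm h) (Ne.symm hab) hcb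
      set jf : Fin n := ⟨j-1, by omega⟩ with hjf
      set kf : Fin m := ⟨k-1, by omega⟩ with hkf
      set kf' : Fin m := ⟨k'-1, by omega⟩ with hkf'
      have hb' : b = CF h2 kf jf := eq_CF_of_val hk1 hk2 hj1 hj2 hbv
      have ha' : a = SF h2 kf' jf := eq_SF_of_val hk1' hk2' hj1 hj2 hav
      have hrl : RL h2 π jf kf kf' := by
        show π.r (CF h2 kf jf) (SF h2 kf' jf)
        rw [← ha', ← hb']
        exact π.symm h
      exact Or.inr (Or.inr ⟨jf, kf, kf', rl_cycPred hsp hrl, hb', ha'⟩)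

end PartA2
end SPB

/-- The map `P : π ↦ (Φ^π_1, …, Φ^π_n)` is a bijection from `NC₂*(n,m)` onto the
set of multichains of length `n` of noncrossing partitions of `{1,…,m}`, with
inverse `Q`. -/
theorem starPairing_multichain_bijection (n m : ℕ) (hn : 1 ≤ n) (hm : 1 ≤ m)
    (h2 : 0 < 2 * n * m) :
    (∀ π : Setoid (Fin (2 * n * m)), IsStarPairing n m π →
      (∀ j : Fin n, IsNoncrossing (PhiRel n m h2 π (j.val + 1))) ∧
      Monotone (fun j : Fin n => PhiRel n m h2 π (j.val + 1)) ∧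
      QMap n m h2 (fun j : Fin n => PhiRel n m h2 π (j.val + 1)) = π) ∧
    (∀ Φ : Fin n → Setoid (Fin m),
      (∀ j, IsNoncrossing (Φ j)) → Monotone Φ →
      IsStarPairing n m (QMap n m h2 Φ) ∧
      (fun j : Fin n => PhiRel n m h2 (QMap n m h2 Φ) (j.val + 1)) = Φ) := by
  constructor
  · intro π hsp
    exact ⟨fun j => SPB.phi_noncrossing hsp j, SPB.phiRel_mono hsp, SPB.qmap_phiRel hsp⟩
  · intro Φ hnc hmono
    exact SPB.partB hnc hmono
end

section
/- For every fixed integer n ≥ 1, the sequence m ↦ ((1/m)·binom(m(n+1), m−1))^{1/m} of real numbers converges, as m → ∞, to (n+1)^{n+1}/nⁿ. -/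
open Filter Finset Real Topology

/-- Cast of ascending factorial as a product. -/
lemma fc_asc_cast (a k : ℕ) :
    ((a.ascFactorial k : ℕ) : ℝ) = ∏ i ∈ Finset.range k, ((a + i : ℕ) : ℝ) := by
  induction k with
  | zero => simp
  | succ k ih =>
      rw [Nat.ascFactorial_succ, Finset.prod_range_succ, ← ih]
      push_cast
      ring

/-- The key natural-number identity relating consecutive Fuss–Catalan numerators. -/
lemma fc_key (n k : ℕ) :
    ((k + 2) * (n + 1)).choose (k + 1) * ((k + 1) * ((k + 1) * n + 2).ascFactorial n)
      = ((k + 1) * (n + 1)).choose k * (((k + 1) * (n + 1) + 1).ascFactorial (n + 1)) := by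
  have hpos : 0 < Nat.factorial k * Nat.factorial ((k + 1) * n + 1) :=
    Nat.mul_pos (Nat.factorial_pos _) (Nat.factorial_pos _)
  apply Nat.eq_of_mul_eq_mul_right hpos
  have hL : ((k + 2) * (n + 1)).choose (k + 1) * ((k + 1) * ((k + 1) * n + 2).ascFactorial n)
      * (Nat.factorial k * Nat.factorial ((k + 1) * n + 1))
      = Nat.factorial ((k + 2) * (n + 1)) := by
    have h1 : Nat.factorial ((k + 1) * n + 1) * ((k + 1) * n + 1 + 1).ascFactorial n
        = Nat.factorial ((k + 1) * n + 1 + n) := Nat.factorial_mul_ascFactorial _ _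
    have e1 : (k + 1) * n + 1 + 1 = (k + 1) * n + 2 := by ring
    have e2 : (k + 2) * (n + 1) = ((k + 1) * n + 1 + n) + (k + 1) := by ring
    have h2 : (((k + 1) * n + 1 + n) + (k + 1)).choose (k + 1)
        * Nat.factorial ((k + 1) * n + 1 + n) * Nat.factorial (k + 1)
        = Nat.factorial (((k + 1) * n + 1 + n) + (k + 1)) :=
      Nat.add_choose_mul_factorial_mul_factorial _ _
    rw [e1] at h1
    rw [Nat.factorial_succ, ← h1] at h2
    rw [e2, ← h2]
    ring
  have hR : ((k + 1) * (n + 1)).choose k * (((k + 1) * (n + 1) + 1).ascFactorial (n + 1))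
      * (Nat.factorial k * Nat.factorial ((k + 1) * n + 1))
      = Nat.factorial ((k + 2) * (n + 1)) := by
    have h1 : Nat.factorial ((k + 1) * (n + 1)) * ((k + 1) * (n + 1) + 1).ascFactorial (n + 1)
        = Nat.factorial ((k + 1) * (n + 1) + (n + 1)) := Nat.factorial_mul_ascFactorial _ _
    have e2 : (k + 1) * (n + 1) = ((k + 1) * n + 1) + k := by ring
    have h2 : (((k + 1) * n + 1) + k).choose k * Nat.factorial ((k + 1) * n + 1)
        * Nat.factorial k = Nat.factorial (((k + 1) * n + 1) + k) :=
      Nat.add_choose_mul_factorial_mul_factorial _ _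
    have e3 : (k + 1) * (n + 1) + (n + 1) = (k + 2) * (n + 1) := by ring
    rw [e3] at h1
    rw [← h1, e2, ← h2]
    ring
  rw [hL, hR]

/-- Asymptotics of the Fuss–Catalan numbers: for fixed `n ≥ 1`,
`((1/m)·binom(m(n+1), m−1))^{1/m} → (n+1)^{n+1}/n^n` as `m → ∞`. -/
theorem fussCatalan_root_tendsto (n : ℕ) (hn : 1 ≤ n) :
    Filter.Tendsto
      (fun m : ℕ =>
        ((1 / (m : ℝ)) * (Nat.choose (m * (n + 1)) (m - 1) : ℝ)) ^ (1 / (m : ℝ)))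
      Filter.atTop
      (nhds (((n : ℝ) + 1) ^ (n + 1) / (n : ℝ) ^ n)) := by
  set L : ℝ := ((n : ℝ) + 1) ^ (n + 1) / (n : ℝ) ^ n with hLdef
  have hn' : (0 : ℝ) < n := by exact_mod_cast hn
  have hL : 0 < L := by positivity
  set a : ℕ → ℝ := fun m => (1 / (m : ℝ)) * (Nat.choose (m * (n + 1)) (m - 1) : ℝ) with ha
  have ha_pos : ∀ m : ℕ, 1 ≤ m → 0 < a m := by
    intro m hm
    have hmR : (0 : ℝ) < m := by exact_mod_cast hm
    have hc : 0 < Nat.choose (m * (n + 1)) (m - 1) := by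
      apply Nat.choose_pos
      calc m - 1 ≤ m := Nat.sub_le _ _
        _ ≤ m * (n + 1) := Nat.le_mul_of_pos_right _ (Nat.succ_pos n)
    have : (0 : ℝ) < Nat.choose (m * (n + 1)) (m - 1) := by exact_mod_cast hc
    simp only [ha]
    positivity
  set num : ℕ → ℝ := fun m => ∏ i ∈ Finset.range (n + 1), ((m * (n + 1) + 1 + i : ℕ) : ℝ)
    with hnum
  set den : ℕ → ℝ := fun m => ((m : ℝ) + 1) * ∏ i ∈ Finset.range n, ((m * n + 2 + i : ℕ) : ℝ)
    with hden
  have hden_pos : ∀ m, 0 < den m := by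
    intro m
    apply mul_pos (by positivity)
    apply Finset.prod_pos
    intro i _
    positivity
  -- ratio identity
  have hratio : ∀ m : ℕ, 1 ≤ m → a (m + 1) / a m = num m / den m := by
    intro m hm
    obtain ⟨k, rfl⟩ := Nat.exists_eq_add_of_le hm
    have keyR := congrArg (fun x : ℕ => (x : ℝ)) (fc_key n k)
    push_cast [fc_asc_cast] at keyR
    rw [div_eq_div_iff (ne_of_gt (ha_pos (1 + k) hm)) (ne_of_gt (hden_pos (1 + k)))]
    simp only [ha, hnum, hden]
    rw [show 1 + k + 1 - 1 = k + 1 from by omega, show 1 + k - 1 = k from by omega,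
      show (1 + k + 1) * (n + 1) = (k + 2) * (n + 1) from by ring,
      show (1 + k) * (n + 1) = (k + 1) * (n + 1) from by ring,
      show (1 + k) * n = (k + 1) * n from by ring]
    push_cast
    have hk1 : ((1 : ℝ) + k) ≠ 0 := by positivity
    have hk2 : ((1 : ℝ) + k + 1) ≠ 0 := by positivity
    field_simp
    linear_combination keyR
  -- limit of the ratio
  have hnum_t : Tendsto (fun m : ℕ => num m / (m : ℝ) ^ (n + 1)) atTop
      (𝓝 (((n : ℝ) + 1) ^ (n + 1))) := by
    have h : Tendsto (fun m : ℕ => ∏ i ∈ Finset.range (n + 1),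
        (((m * (n + 1) + 1 + i : ℕ) : ℝ) / (m : ℝ))) atTop
        (𝓝 (∏ _i ∈ Finset.range (n + 1), ((n : ℝ) + 1))) := by
      apply tendsto_finset_prod
      intro i _
      have h0 : Tendsto (fun m : ℕ => ((n : ℝ) + 1) + ((1 : ℝ) + i) / m) atTop
          (𝓝 (((n : ℝ) + 1) + 0)) :=
        tendsto_const_nhds.add (tendsto_const_div_atTop_nhds_zero_nat _)
      rw [add_zero] at h0
      apply h0.congr'
      filter_upwards [eventually_ge_atTop 1] with m hm
      have hmR : ((m : ℝ)) ≠ 0 := by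
        have : (0 : ℝ) < m := by exact_mod_cast hm
        exact ne_of_gt this
      push_cast
      field_simp
      ring
    rw [Finset.prod_const, Finset.card_range] at h
    apply h.congr
    intro m
    simp only [hnum]
    rw [Finset.prod_div_distrib, Finset.prod_const, Finset.card_range]
  have hden_t : Tendsto (fun m : ℕ => den m / (m : ℝ) ^ (n + 1)) atTop
      (𝓝 ((n : ℝ) ^ n)) := by
    have h1 : Tendsto (fun m : ℕ => ((m : ℝ) + 1) / (m : ℝ)) atTop (𝓝 1) := by
      have h0 : Tendsto (fun m : ℕ => (1 : ℝ) + 1 / m) atTop (𝓝 (1 + 0)) :=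
        tendsto_const_nhds.add (tendsto_const_div_atTop_nhds_zero_nat _)
      rw [add_zero] at h0
      apply h0.congr'
      filter_upwards [eventually_ge_atTop 1] with m hm
      have hmR : ((m : ℝ)) ≠ 0 := by
        have : (0 : ℝ) < m := by exact_mod_cast hm
        exact ne_of_gt this
      field_simp
    have h2 : Tendsto (fun m : ℕ => ∏ i ∈ Finset.range n,
        (((m * n + 2 + i : ℕ) : ℝ) / (m : ℝ))) atTop
        (𝓝 (∏ _i ∈ Finset.range n, (n : ℝ))) := by
      apply tendsto_finset_prod
      intro i _
      have h0 : Tendsto (fun m : ℕ => (n : ℝ) + ((2 : ℝ) + i) / m) atTop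
          (𝓝 ((n : ℝ) + 0)) :=
        tendsto_const_nhds.add (tendsto_const_div_atTop_nhds_zero_nat _)
      rw [add_zero] at h0
      apply h0.congr'
      filter_upwards [eventually_ge_atTop 1] with m hm
      have hmR : ((m : ℝ)) ≠ 0 := by
        have : (0 : ℝ) < m := by exact_mod_cast hm
        exact ne_of_gt this
      push_cast
      field_simp
      ring
    rw [Finset.prod_const, Finset.card_range] at h2
    have h3 := h1.mul h2
    rw [one_mul] at h3
    apply h3.congr'
    filter_upwards [eventually_ge_atTop 1] with m hm
    have hmR : ((m : ℝ)) ≠ 0 := by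
      have : (0 : ℝ) < m := by exact_mod_cast hm
      exact ne_of_gt this
    simp only [hden]
    rw [Finset.prod_div_distrib, Finset.prod_const, Finset.card_range, pow_succ]
    field_simp
  have hratio_t : Tendsto (fun m : ℕ => num m / den m) atTop (𝓝 L) := by
    have h := hnum_t.div hden_t (by positivity)
    apply h.congr'
    filter_upwards [eventually_ge_atTop 1] with m hm
    have hmR : ((m : ℝ)) ≠ 0 := by
      have : (0 : ℝ) < m := by exact_mod_cast hm
      exact ne_of_gt this
    exact div_div_div_cancel_right₀ (pow_ne_zero (n + 1) hmR) (num m) (den m)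
  -- log differences and Cesàro
  set u : ℕ → ℝ := fun m => Real.log (a (m + 1)) - Real.log (a m) with hu
  have hu_t : Tendsto u atTop (𝓝 (Real.log L)) := by
    have h := hratio_t.log (ne_of_gt hL)
    apply h.congr'
    filter_upwards [eventually_ge_atTop 1] with m hm
    rw [← hratio m hm, Real.log_div (ne_of_gt (ha_pos (m + 1) (by omega)))
      (ne_of_gt (ha_pos m hm))]
  have hsum : ∀ m : ℕ, ∑ i ∈ Finset.range m, u i = Real.log (a m) := by
    intro m
    have h := Finset.sum_range_sub (fun i => Real.log (a i)) m
    simp only [hu]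
    rw [h]
    have h0 : a 0 = 0 := by simp [ha]
    rw [h0, Real.log_zero, sub_zero]
  have hcesaro : Tendsto (fun m : ℕ => ((m : ℝ))⁻¹ * Real.log (a m)) atTop
      (𝓝 (Real.log L)) := by
    have h := hu_t.cesaro
    apply h.congr
    intro m
    rw [hsum]
  have hfinal : Tendsto (fun m : ℕ => Real.exp (((m : ℝ))⁻¹ * Real.log (a m))) atTop
      (𝓝 (Real.exp (Real.log L))) :=
    (Real.continuous_exp.tendsto _).comp hcesaro
  rw [Real.exp_log hL] at hfinal
  apply hfinal.congr'
  filter_upwards [eventually_ge_atTop 1] with m hm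
  rw [Real.rpow_def_of_pos (ha_pos m hm), one_div, mul_comm]
end
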